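/- arXiv:2403.17972 — 13 statements merged into one kernel-verified Lean document; each statement's English description precedes it below -/
import Mathlib

section
/- Let d > 1 be a square-free integer and let ε_d = x + y√d be the fundamental unit of Q(√d), where x and y are integers or half-integers. If the norm N(ε_d) = x² − d·y² = 1, then none of 2(x+1), 2(x−1), 2d(x+1), 2d(x−1) is the square of a rational number. -/
noncomputable section

/-- `x + y√d` is an algebraic integer of `ℚ(√d)`:
either `x, y` are both integers, or `d ≡ 1 (mod 4)` and `x, y` are both half-integers. -/
def IsQuadInt (d : ℤ) (x y : ℚ) : Prop :=
  (∃ a b : ℤ, x = a ∧ y = b) ∨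
  (d % 4 = 1 ∧ ∃ a b : ℤ, x = a + 1/2 ∧ y = b + 1/2)

/-- `x + y√d` is the fundamental unit of the real quadratic field `ℚ(√d)`:
it is an algebraic integer of norm `±1`, greater than `1`, and minimal with
these properties. -/
def IsFundUnit (d : ℤ) (x y : ℚ) : Prop :=
  IsQuadInt d x y ∧ (x ^ 2 - d * y ^ 2 = 1 ∨ x ^ 2 - d * y ^ 2 = -1) ∧
  1 < (x : ℝ) + y * Real.sqrt d ∧
  ∀ x' y' : ℚ, IsQuadInt d x' y' →
    (x' ^ 2 - d * y' ^ 2 = 1 ∨ x' ^ 2 - d * y' ^ 2 = -1) →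
    1 < (x' : ℝ) + y' * Real.sqrt d →
    (x : ℝ) + y * Real.sqrt d ≤ (x' : ℝ) + y' * Real.sqrt d

/-!
If `2(x + σ)` is a rational square for some `σ = ±1`, then so is `2d(x - σ)`, their product
being `(2dy)²`, and conversely. Both being squares, `u = √((x + σ)/2)` and
`v = √((x - σ)/(2d))` give `η = u + v√d` with `η² = ε_d` and `N(η) = σ`. Since `4u²` and
`4dv²` are integers and `d` is squarefree, `2u` and `2v` are integers, and
`(2u)² - d(2v)² = 4σ` forces the parities that make `η` an algebraic integer. So `η` is a unit
with `1 < η < ε_d`, contradicting the minimality of `ε_d`.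
-/

theorem IsSquare.isSquare_iff_of_mul {K : Type*} [CommGroupWithZero K] {a b : K}
    (hab : IsSquare (a * b)) (hab0 : a * b ≠ 0) : IsSquare a ↔ IsSquare b :=
  ⟨fun ha => mul_div_cancel_left₀ b (left_ne_zero_of_mul hab0) ▸ hab.div ha,
    fun hb => mul_div_cancel_right₀ a (right_ne_zero_of_mul hab0) ▸ hab.div hb⟩

theorem Squarefree.exists_int_eq_of_mul_sq_eq_int {d : ℤ} (hd : Squarefree d) {q : ℚ} {n : ℤ}
    (h : d * q ^ 2 = n) : ∃ m : ℤ, q = m := by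
  have hcleared : d * q.num ^ 2 = n * (q.den : ℤ) ^ 2 := by
    have hden : (q.den : ℚ) ≠ 0 := by exact_mod_cast q.den_nz
    rw [← Rat.num_div_den q] at h
    field_simp at h
    exact_mod_cast (by linear_combination h : (d : ℚ) * q.num ^ 2 = n * q.den ^ 2)
  have hcop : IsCoprime (q.den : ℤ) q.num := by
    rw [Int.isCoprime_iff_gcd_eq_one, Int.gcd_comm]
    exact q.reduced
  have hden_sq_dvd : (q.den : ℤ) * q.den ∣ d := by
    rw [← sq]
    exact (hcop.pow (m := 2) (n := 2)).dvd_of_dvd_mul_right ⟨n, by rw [hcleared, mul_comm]⟩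
  have hden : q.den = 1 := by
    have := Int.isUnit_iff.mp (hd _ hden_sq_dvd)
    omega
  exact ⟨q.num, (Rat.coe_int_num_of_den_eq_one hden).symm⟩

theorem IsQuadInt.exists_two_mul_eq {d : ℤ} {x y : ℚ} (h : IsQuadInt d x y) :
    ∃ N : ℤ, 2 * x = N := by
  rcases h with ⟨a, -, rfl, -⟩ | ⟨-, a, -, rfl, -⟩
  · exact ⟨2 * a, by push_cast; ring⟩
  · exact ⟨2 * a + 1, by push_cast; ring⟩

theorem isQuadInt_of_two_mul_eq {d : ℤ} (hd : Squarefree d) {u v : ℚ} {A B : ℤ}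
    (hA : 2 * u = A) (hB : 2 * v = B) (h4 : 4 ∣ A ^ 2 - d * B ^ 2) : IsQuadInt d u v := by
  have h4d : ¬ (2 * 2 ∣ d) := fun h2 => by
    have := Int.isUnit_iff.mp (hd 2 h2)
    omega
  obtain ⟨k, hk⟩ := h4
  rcases Int.even_or_odd' A with ⟨a, rfl | rfl⟩ <;> rcases Int.even_or_odd' B with ⟨b, rfl | rfl⟩
  · left
    exact ⟨a, b, by push_cast at hA; linarith, by push_cast at hB; linarith⟩
  · exact absurd ⟨a ^ 2 - k - d * b ^ 2 - d * b, by linear_combination -hk⟩ h4d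
  · have : (1 : ℤ) = 4 * (k - a ^ 2 - a + d * b ^ 2) := by linear_combination hk
    omega
  · have hd4 : d = 1 + 4 * (a ^ 2 + a - k - d * b ^ 2 - d * b) := by linear_combination -hk
    refine Or.inr ⟨by omega, a, b, ?_, ?_⟩
    · push_cast at hA; linarith
    · push_cast at hB; linarith

theorem IsFundUnit.pos_of_norm_eq_one {d : ℤ} (hd : 0 ≤ d) {x y : ℚ} (h : IsFundUnit d x y)
    (hnorm : x ^ 2 - d * y ^ 2 = 1) : 0 < y := by
  have hs : √(d : ℝ) ^ 2 = d := Real.sq_sqrt (by exact_mod_cast hd)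
  have hnormR : (x : ℝ) ^ 2 - d * y ^ 2 = 1 := by exact_mod_cast hnorm
  have hconj : (x - y * √(d : ℝ)) * (x + y * √(d : ℝ)) = 1 := by
    linear_combination hnormR - (y : ℝ) ^ 2 * hs
  have : 0 < (y : ℝ) * √(d : ℝ) := by nlinarith [h.2.2.1]
  exact_mod_cast pos_of_mul_pos_left this (Real.sqrt_nonneg _)

theorem IsFundUnit.ne_sq {d : ℤ} {x y u v : ℚ} (h : IsFundUnit d x y) (hη : IsQuadInt d u v)
    (hnorm : u ^ 2 - d * v ^ 2 = 1 ∨ u ^ 2 - d * v ^ 2 = -1) (hu : 0 ≤ u) (hv : 0 ≤ v) :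
    ((u : ℝ) + v * √d) ^ 2 ≠ x + y * √d := by
  intro hsq
  have hη0 : 0 ≤ (u : ℝ) + v * √d := by positivity
  have hη1 : 1 < (u : ℝ) + v * √d := by nlinarith [h.2.2.1]
  have := h.2.2.2 u v hη hnorm hη1
  nlinarith

theorem IsFundUnit.not_exists_sq_add_mul_sq_eq {d : ℤ} (hd : 0 < d) (hsf : Squarefree d)
    {x y : ℚ} (h : IsFundUnit d x y) (hnorm : x ^ 2 - d * y ^ 2 = 1) :
    ¬ ∃ u v : ℚ, u ^ 2 + d * v ^ 2 = x ∧ (u ^ 2 - d * v ^ 2 = 1 ∨ u ^ 2 - d * v ^ 2 = -1) := by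
  rintro ⟨u, v, htr, hnm⟩
  rw [← sq_abs u, ← sq_abs v] at htr hnm
  set a := |u|
  set b := |v|
  obtain ⟨σ, hσ, hσ2⟩ : ∃ σ : ℤ, a ^ 2 - d * b ^ 2 = σ ∧ (σ : ℚ) ^ 2 = 1 := by
    rcases hnm with hnm | hnm
    · exact ⟨1, by rw [hnm]; norm_num, by norm_num⟩
    · exact ⟨-1, by rw [hnm]; norm_num, by norm_num⟩
  obtain ⟨N, hN⟩ := h.1.exists_two_mul_eq
  obtain ⟨A, hA⟩ := squarefree_one.exists_int_eq_of_mul_sq_eq_int (q := 2 * a) (n := N + 2 * σ)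
    (by push_cast; linear_combination 2 * htr + 2 * hσ + hN)
  obtain ⟨B, hB⟩ := hsf.exists_int_eq_of_mul_sq_eq_int (q := 2 * b) (n := N - 2 * σ)
    (by push_cast; linear_combination 2 * htr - 2 * hσ + hN)
  have h4 : 4 ∣ A ^ 2 - d * B ^ 2 :=
    ⟨σ, by exact_mod_cast (by rw [← hA, ← hB]; linear_combination 4 * hσ :
      (A : ℚ) ^ 2 - d * B ^ 2 = 4 * σ)⟩
  have hy := h.pos_of_norm_eq_one hd.le hnorm
  -- `d (2ab)² = (a² + d b²)² - (a² - d b²)² = x² - 1 = d y²`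
  have hab : 2 * a * b = y := by
    refine (sq_eq_sq₀ (by positivity) hy.le).1 (mul_left_cancel₀ (by positivity : (d : ℚ) ≠ 0) ?_)
    linear_combination hnorm + (x + a ^ 2 + d * b ^ 2) * htr - (σ + a ^ 2 - d * b ^ 2) * hσ - hσ2
  have hsq : ((a : ℝ) + b * √d) ^ 2 = x + y * √d := by
    have hs : √(d : ℝ) ^ 2 = d := Real.sq_sqrt (by positivity)
    have htrR : (a : ℝ) ^ 2 + d * b ^ 2 = x := by exact_mod_cast htr
    have habR : 2 * (a : ℝ) * b = y := by exact_mod_cast hab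
    linear_combination htrR + √(d : ℝ) * habR + (b : ℝ) ^ 2 * hs
  exact h.ne_sq (isQuadInt_of_two_mul_eq hsf hA hB h4) hnm (abs_nonneg u)
    (abs_nonneg v) hsq

theorem IsFundUnit.not_isSquare {d : ℤ} (hd : 0 < d) (hsf : Squarefree d) {x y : ℚ}
    (h : IsFundUnit d x y) (hnorm : x ^ 2 - d * y ^ 2 = 1) {σ : ℚ} (hσ : σ = 1 ∨ σ = -1) :
    ¬ IsSquare (2 * (x + σ)) ∧ ¬ IsSquare (2 * d * (x - σ)) := by
  have hd0 : (d : ℚ) ≠ 0 := by positivity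
  have hy := h.pos_of_norm_eq_one hd.le hnorm
  have hσ2 : σ ^ 2 = 1 := by rcases hσ with rfl | rfl <;> norm_num
  have hprod : 2 * (x + σ) * (2 * d * (x - σ)) = (2 * d * y) ^ 2 := by
    linear_combination (4 * d) * hnorm - (4 * d) * hσ2
  have hprod_ne : 2 * (x + σ) * (2 * d * (x - σ)) ≠ 0 := by rw [hprod]; positivity
  have hprod_sq : IsSquare (2 * (x + σ) * (2 * d * (x - σ))) := hprod ▸ IsSquare.sq _
  have hpair : ¬ (IsSquare (2 * (x + σ)) ∧ IsSquare (2 * d * (x - σ))) := by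
    rintro ⟨⟨r, hr⟩, ⟨s, hs⟩⟩
    have hu : (r / 2) ^ 2 = (x + σ) / 2 := by rw [div_pow, sq, ← hr]; ring
    have hv : d * (s / (2 * d)) ^ 2 = (x - σ) / 2 := by
      rw [div_pow, sq s, ← hs]; field_simp
    refine h.not_exists_sq_add_mul_sq_eq hd hsf hnorm ⟨r / 2, s / (2 * d), ?_, ?_⟩
    · rw [hu, hv]; ring
    · rw [hu, hv]
      rcases hσ with rfl | rfl
      · left; ring
      · right; ring
  have hiff := hprod_sq.isSquare_iff_of_mul hprod_ne
  exact ⟨fun hl => hpair ⟨hl, hiff.1 hl⟩, fun hr => hpair ⟨hiff.2 hr, hr⟩⟩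

/-- If `d > 1` is squarefree and the fundamental unit `ε_d = x + y√d` of `ℚ(√d)` has
norm `1`, then none of `2(x+1)`, `2(x−1)`, `2d(x+1)`, `2d(x−1)` is the square of a
rational number. -/
theorem fundUnit_norm_one_not_squares (d : ℤ) (hd : 1 < d) (hsf : Squarefree d)
    (x y : ℚ) (h : IsFundUnit d x y) (hnorm : x ^ 2 - d * y ^ 2 = 1) :
    (¬ ∃ r : ℚ, r ^ 2 = 2 * (x + 1)) ∧ (¬ ∃ r : ℚ, r ^ 2 = 2 * (x - 1)) ∧
    (¬ ∃ r : ℚ, r ^ 2 = 2 * d * (x + 1)) ∧ (¬ ∃ r : ℚ, r ^ 2 = 2 * d * (x - 1)) := by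
  have not_sq {a : ℚ} (ha : ¬ IsSquare a) : ¬ ∃ r : ℚ, r ^ 2 = a :=
    fun ⟨r, hr⟩ => ha (hr ▸ IsSquare.sq r)
  obtain ⟨hplus, hdminus⟩ := h.not_isSquare (by omega) hsf hnorm (σ := 1) (Or.inl rfl)
  obtain ⟨hminus, hdplus⟩ := h.not_isSquare (by omega) hsf hnorm (σ := -1) (Or.inr rfl)
  rw [← sub_eq_add_neg] at hminus
  rw [sub_neg_eq_add] at hdplus
  exact ⟨not_sq hplus, not_sq hminus, not_sq hdplus, not_sq hdminus⟩
end
end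

section
/- Let p ≡ 1 (mod 8) and q ≡ 7 (mod 8) be primes with Legendre symbol (p/q) = −1. Write the fundamental unit ε_{2pq} = x + y√(2pq) of Q(√(2pq)) with integers x, y. Then x + 1 is a perfect square in ℕ. -/
set_option maxHeartbeats 1000000


noncomputable section

lemma aux_mod8 : ∀ u k : ZMod 8, 7 * (2*k+1)^2 - 2*u^2 ≠ 1 := by decide

lemma aux_isSquare_of_mul_sq {F : Type*} [Field F] {a b c : F} (hb : b ≠ 0)
    (h : a * b ^ 2 = c ^ 2) : IsSquare a := by
  refine ⟨c * b⁻¹, ?_⟩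
  field_simp
  linear_combination h

lemma aux_extract {s t z d₁ d₂ : ℤ} (hd₁ : 0 < d₁) (hd₂ : 0 < d₂)
    (hs : 0 < s) (ht : 0 < t) (hco : IsCoprime s t)
    (h1 : d₁ ∣ s) (h2 : d₂ ∣ t) (hmul : s * t = d₁ * d₂ * z ^ 2) :
    ∃ u v : ℤ, 0 < u ∧ 0 < v ∧ s = d₁ * u ^ 2 ∧ t = d₂ * v ^ 2 := by
  obtain ⟨s₁, rfl⟩ := h1
  obtain ⟨t₁, rfl⟩ := h2
  have hs₁ : 0 < s₁ := by nlinarith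
  have ht₁ : 0 < t₁ := by nlinarith
  have hne : d₁ * d₂ ≠ 0 := by positivity
  have hz : s₁ * t₁ = z ^ 2 := by
    apply mul_left_cancel₀ hne
    linear_combination hmul
  have hco₁ : IsCoprime s₁ t₁ :=
    (hco.of_isCoprime_of_dvd_left (Dvd.intro_left _ rfl)).of_isCoprime_of_dvd_right
      (Dvd.intro_left _ rfl)
  obtain ⟨u, hu⟩ := Int.sq_of_isCoprime hco₁ hz
  obtain ⟨v, hv⟩ := Int.sq_of_isCoprime hco₁.symm (by rw [mul_comm]; exact hz)
  have hu' : s₁ = u ^ 2 := by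
    rcases hu with hu | hu
    · exact hu
    · nlinarith [sq_nonneg u]
  have hv' : t₁ = v ^ 2 := by
    rcases hv with hv | hv
    · exact hv
    · nlinarith [sq_nonneg v]
  refine ⟨|u|, |v|, ?_, ?_, by rw [hu', sq_abs], by rw [hv', sq_abs]⟩
  · rcases eq_or_ne u 0 with rfl | h0
    · simp at hu'; omega
    · exact abs_pos.mpr h0
  · rcases eq_or_ne v 0 with rfl | h0
    · simp at hv'; omega
    · exact abs_pos.mpr h0

lemma aux_not_isSquare_two_q (p q : ℕ) [Fact p.Prime] [Fact q.Prime]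
    (hp : p % 8 = 1) (hq : q % 8 = 7) (hleg : legendreSym q p = -1) :
    ¬ IsSquare (2 * (q : ZMod p)) := by
  intro hsq
  have hpp : p.Prime := Fact.out
  have hqp : q.Prime := Fact.out
  have hp2 : p ≠ 2 := by omega
  have hq2 : q ≠ 2 := by omega
  have hpq : p ≠ q := by omega
  have h2ne : (2 : ZMod p) ≠ 0 := by
    have : ((2 : ℕ) : ZMod p) ≠ 0 := by
      rw [Ne, ZMod.natCast_eq_zero_iff]
      exact fun hd => hp2 ((Nat.prime_dvd_prime_iff_eq hpp Nat.prime_two).mp hd)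
    simpa using this
  have hqne : ((q : ℕ) : ZMod p) ≠ 0 := by
    rw [Ne, ZMod.natCast_eq_zero_iff]
    exact fun hd => hpq ((Nat.prime_dvd_prime_iff_eq hpp hqp).mp hd)
  have h0 : (((2 * q : ℤ)) : ZMod p) ≠ 0 := by
    push_cast
    exact mul_ne_zero h2ne hqne
  have h1 : legendreSym p (2 * q) = 1 := by
    rw [legendreSym.eq_one_iff p h0]
    push_cast
    exact hsq
  rw [legendreSym.mul] at h1
  have h2 : legendreSym p 2 = 1 := by
    rw [legendreSym.eq_one_iff p (by simpa using h2ne)]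
    have := (ZMod.exists_sq_eq_two_iff hp2).mpr (Or.inl hp)
    simpa using this
  have h3 : legendreSym p q = -1 := by
    rw [← legendreSym.quadratic_reciprocity_one_mod_four (by omega : p % 4 = 1) hq2]
    exact hleg
  rw [h2, h3] at h1
  norm_num at h1

lemma aux_not_isSquare_two_p (p q : ℕ) [Fact p.Prime] [Fact q.Prime]
    (hp : p % 8 = 1) (hq : q % 8 = 7) (hleg : legendreSym q p = -1) :
    ¬ IsSquare (2 * (p : ZMod q)) := by
  intro hsq
  have hpp : p.Prime := Fact.out
  have hqp : q.Prime := Fact.out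
  have hp2 : p ≠ 2 := by omega
  have hq2 : q ≠ 2 := by omega
  have hpq : p ≠ q := by omega
  have h2ne : (2 : ZMod q) ≠ 0 := by
    have : ((2 : ℕ) : ZMod q) ≠ 0 := by
      rw [Ne, ZMod.natCast_eq_zero_iff]
      exact fun hd => hq2 ((Nat.prime_dvd_prime_iff_eq hqp Nat.prime_two).mp hd)
    simpa using this
  have hpne : ((p : ℕ) : ZMod q) ≠ 0 := by
    rw [Ne, ZMod.natCast_eq_zero_iff]
    exact fun hd => hpq ((Nat.prime_dvd_prime_iff_eq hqp hpp).mp hd).symm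
  have h0 : (((2 * p : ℤ)) : ZMod q) ≠ 0 := by
    push_cast
    exact mul_ne_zero h2ne hpne
  have h1 : legendreSym q (2 * p) = 1 := by
    rw [legendreSym.eq_one_iff q h0]
    push_cast
    exact hsq
  rw [legendreSym.mul] at h1
  have h2 : legendreSym q 2 = 1 := by
    rw [legendreSym.eq_one_iff q (by simpa using h2ne)]
    have := (ZMod.exists_sq_eq_two_iff hq2).mpr (Or.inr hq)
    simpa using this
  rw [h2, hleg] at h1
  norm_num at h1

/-- If `p ≡ 1 (mod 8)` and `q ≡ 7 (mod 8)` are primes with `(p/q) = −1`, and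
`ε_{2pq} = x + y√(2pq)` is the fundamental unit of `ℚ(√(2pq))` with `x, y ∈ ℤ`,
then `x + 1` is a perfect square. -/
theorem xAddOne_sq (p q : ℕ) [Fact p.Prime] [Fact q.Prime]
    (hp : p % 8 = 1) (hq : q % 8 = 7) (hleg : legendreSym q p = -1)
    (x y : ℤ) (h : IsFundUnit (2 * p * q) (x : ℚ) (y : ℚ)) :
    ∃ n : ℕ, x + 1 = (n : ℤ) ^ 2 := by
  obtain ⟨-, hnorm, hgt, hmin⟩ := h
  have hpp : p.Prime := Fact.out
  have hqp : q.Prime := Fact.out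
  have hp2' : (2:ℤ) ≤ (p:ℤ) := by exact_mod_cast hpp.two_le
  have hq2' : (2:ℤ) ≤ (q:ℤ) := by exact_mod_cast hqp.two_le
  have hq4 : q % 4 = 3 := by omega
  have hdZ : (0:ℤ) < 2*(p:ℤ)*(q:ℤ) := by nlinarith
  have hpR : (2:ℝ) ≤ (p:ℝ) := by exact_mod_cast hp2'
  have hqR : (2:ℝ) ≤ (q:ℝ) := by exact_mod_cast hq2'
  -- integer norm equation
  have hnormZ : x ^ 2 - 2 * p * q * y ^ 2 = 1 ∨ x ^ 2 - 2 * p * q * y ^ 2 = -1 := by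
    rcases hnorm with h1 | h1
    · left; exact_mod_cast h1
    · right; exact_mod_cast h1
  have hnorm1 : x ^ 2 - 2 * p * q * y ^ 2 = 1 := by
    rcases hnormZ with h1 | h1
    · exact h1
    exfalso
    have hc : ((x : ZMod q)) ^ 2 = -1 := by
      have h2 := congrArg (fun n : ℤ => (n : ZMod q)) h1
      push_cast at h2
      rw [ZMod.natCast_self] at h2
      simpa using h2
    exact (ZMod.exists_sq_eq_neg_one_iff.mp ⟨(x : ZMod q), by rw [← hc]; ring⟩) hq4
  clear hnormZ hnorm
  -- real estimates
  push_cast at hgt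
  set D : ℝ := Real.sqrt (2 * (p:ℝ) * (q:ℝ)) with hDdef
  have hD2 : D ^ 2 = 2 * (p:ℝ) * (q:ℝ) := Real.sq_sqrt (by positivity)
  have hDpos : 0 < D := Real.sqrt_pos.mpr (by nlinarith)
  have hnormR : (x:ℝ)^2 - (2*(p:ℝ)*(q:ℝ)) * (y:ℝ)^2 = 1 := by exact_mod_cast hnorm1
  have hconj : ((x:ℝ) + y * D) * ((x:ℝ) - y * D) = 1 := by
    have e : ((x:ℝ) + y*D) * ((x:ℝ) - y*D) = (x:ℝ)^2 - (2*(p:ℝ)*(q:ℝ)) * (y:ℝ)^2 := by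
      linear_combination (-((y:ℝ)^2)) * hD2
    rw [e, hnormR]
  have hcpos : 0 < (x:ℝ) - y * D := by nlinarith
  have hclt : (x:ℝ) - y * D < 1 := by nlinarith
  have hy0 : 0 < y := by
    have : 0 < (y:ℝ) := by nlinarith
    exact_mod_cast this
  have hx0 : 0 < x := by
    have : (0:ℝ) < (x:ℝ) := by nlinarith
    exact_mod_cast this
  -- parity and factorization
  have hxodd : Odd x := by
    have h2 : Odd (x ^ 2) := ⟨(p:ℤ)*q*y^2, by linarith⟩
    exact (Int.odd_pow.mp h2).resolve_right (by norm_num)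
  obtain ⟨m, hm⟩ := hxodd
  have hyeven : Even y := by
    have e2 : (2:ℤ) * ((p:ℤ)*q*y^2) = 2 * (2*(m^2+m)) := by
      linear_combination (-1 : ℤ) * hnorm1 + (x + 2*m + 1) * hm
    have e := mul_left_cancel₀ (two_ne_zero) e2
    have hev : Even ((p:ℤ)*(q:ℤ)*y^2) := ⟨m^2+m, by linarith⟩
    have hpo : ¬ Even ((p:ℤ)) := by
      rw [Int.even_coe_nat, Nat.even_iff]; omega
    have hqo : ¬ Even ((q:ℤ)) := by
      rw [Int.even_coe_nat, Nat.even_iff]; omega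
    rcases Int.even_mul.mp hev with h' | h'
    · rcases Int.even_mul.mp h' with h'' | h''
      · exact absurd h'' hpo
      · exact absurd h'' hqo
    · exact (Int.even_pow.mp h').1
  obtain ⟨z, hz⟩ := hyeven
  have hz0 : 0 < z := by omega
  have key : m * (m + 1) = 2 * p * q * z ^ 2 := by
    have e2 : (4:ℤ) * (m*(m+1)) = 4 * (2*p*q*z^2) := by
      linear_combination hnorm1 - (x + 2*m + 1) * hm + (2*(p:ℤ)*q*(y + 2*z)) * hz
    exact mul_left_cancel₀ (by norm_num) e2
  have hz2 : (1:ℤ) ≤ z^2 := by nlinarith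
  have hpq8 : (8:ℤ) ≤ 2*(p:ℤ)*q := by nlinarith
  have hkey8 : (8:ℤ) ≤ 2*(p:ℤ)*q*z^2 := by nlinarith
  have hm0 : 0 ≤ m := by omega
  have hm1 : 1 ≤ m := by nlinarith [key, hkey8, hm0]
  -- coprime and prime divisibility
  have hco : IsCoprime m (m+1) := ⟨-1, 1, by ring⟩
  have hppZ : Prime (p:ℤ) := Nat.prime_iff_prime_int.mp hpp
  have hqqZ : Prime (q:ℤ) := Nat.prime_iff_prime_int.mp hqp
  have hpd : (p:ℤ) ∣ m ∨ (p:ℤ) ∣ (m+1) :=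
    hppZ.dvd_mul.mp ⟨2*q*z^2, by rw [key]; ring⟩
  have hqd : (q:ℤ) ∣ m ∨ (q:ℤ) ∣ (m+1) :=
    hqqZ.dvd_mul.mp ⟨2*p*z^2, by rw [key]; ring⟩
  have h2d : (2:ℤ) ∣ m ∨ (2:ℤ) ∣ (m+1) := by
    rcases Int.even_or_odd m with he | ho
    · exact Or.inl he.two_dvd
    · obtain ⟨k, hk⟩ := ho
      exact Or.inr ⟨k+1, by omega⟩
  have c2p : IsCoprime (2:ℤ) (p:ℤ) := by
    rw [show ((2:ℤ)) = ((2:ℕ):ℤ) by norm_num, Nat.isCoprime_iff_coprime]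
    exact (Nat.coprime_primes Nat.prime_two hpp).mpr (by omega)
  have c2q : IsCoprime (2:ℤ) (q:ℤ) := by
    rw [show ((2:ℤ)) = ((2:ℕ):ℤ) by norm_num, Nat.isCoprime_iff_coprime]
    exact (Nat.coprime_primes Nat.prime_two hqp).mpr (by omega)
  have cpq : IsCoprime (p:ℤ) (q:ℤ) := by
    rw [Nat.isCoprime_iff_coprime]
    exact (Nat.coprime_primes hpp hqp).mpr (by omega)
  have hspos : (0:ℤ) < m := by omega
  have htpos : (0:ℤ) < m + 1 := by omega
  rcases h2d with h2s | h2t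
  · rcases hpd with hps | hpt
    · rcases hqd with hqs | hqt
      · -- case 1: m = 2pq u², m+1 = v² : contradict minimality
        obtain ⟨u, v, hu0, hv0, hsu, htv⟩ :=
          aux_extract (z := z) (d₁ := 2*(p:ℤ)*q) (d₂ := 1) hdZ one_pos hspos htpos hco
            ((IsCoprime.mul_left c2q cpq).mul_dvd (c2p.mul_dvd h2s hps) hqs) (one_dvd _)
            (by rw [key]; try ring)
        exfalso
        have hzuv : z = u * v := by
          have e2 : (2*(p:ℤ)*q) * z^2 = (2*(p:ℤ)*q) * (u*v)^2 := by
            linear_combination (-1:ℤ) * key + (m+1) * hsu + (2*(p:ℤ)*q*u^2) * htv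
          have e3 : z^2 = (u*v)^2 := mul_left_cancel₀ (ne_of_gt hdZ) e2
          have huv : 0 < u * v := mul_pos hu0 hv0
          nlinarith [e3, hz0, huv]
        have hnv : (v:ℤ)^2 - 2*p*q*u^2 = 1 := by linarith
        have hu1 : (1:ℤ) ≤ u := hu0
        have hv1 : (1:ℤ) ≤ v := hv0
        have hu1R : (1:ℝ) ≤ (u:ℝ) := by exact_mod_cast hu1
        have hv1R : (1:ℝ) ≤ (v:ℝ) := by exact_mod_cast hv1
        have huD : (0:ℝ) < (u:ℝ) * D := mul_pos (by linarith) hDpos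
        have hwgt : 1 < (v:ℝ) + (u:ℝ) * D := by linarith
        have happ := hmin (v:ℚ) (u:ℚ) (Or.inl ⟨v, u, rfl, rfl⟩)
          (Or.inl (by exact_mod_cast hnv)) (by push_cast; rw [← hDdef]; exact hwgt)
        push_cast at happ
        rw [← hDdef] at happ
        have hxR : (x:ℝ) = 2*(p:ℝ)*q*(u:ℝ)^2 + (v:ℝ)^2 := by
          exact_mod_cast (show x = 2*(p:ℤ)*q*u^2 + v^2 by linarith)
        have hyR2 : (y:ℝ) = 2*(u:ℝ)*(v:ℝ) := by
          exact_mod_cast (show y = 2*u*v by rw [hz, hzuv]; ring)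
        have hEsq : ((v:ℝ) + (u:ℝ) * D)^2 = (x:ℝ) + (y:ℝ) * D := by
          linear_combination (-1 : ℝ) * hxR + (-D) * hyR2 + (u:ℝ)^2 * hD2
        nlinarith [happ, hEsq, hwgt]
      · -- case 2: m = 2p u², m+1 = q v² : mod 8
        obtain ⟨u, v, hu0, hv0, hsu, htv⟩ :=
          aux_extract (z := z) (d₁ := 2*(p:ℤ)) (d₂ := (q:ℤ)) (by nlinarith) (by nlinarith)
            hspos htpos hco (c2p.mul_dvd h2s hps) hqt (by rw [key]; try ring)
        exfalso
        have heq : (q:ℤ) * v^2 - 2*p*u^2 = 1 := by linarith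
        have hvodd : Odd v := by
          have ho : Odd ((q:ℤ) * v^2) := by
            rw [← htv]
            exact (by obtain ⟨k, hk⟩ := h2s; exact ⟨k, by omega⟩ : Even m).add_one
          exact ((Int.odd_pow).mp (Int.odd_mul.mp ho).2).resolve_right (by norm_num)
        obtain ⟨k, hk⟩ := hvodd
        have hc := congrArg (fun n : ℤ => (n : ZMod 8)) heq
        push_cast at hc
        have hq8 : ((q:ℕ) : ZMod 8) = 7 := by rw [← ZMod.natCast_mod, hq]; rfl
        have hp8 : ((p:ℕ) : ZMod 8) = 1 := by rw [← ZMod.natCast_mod, hp]; rfl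
        rw [hp8, hq8] at hc
        have hvk : ((v : ℤ) : ZMod 8) = 2*((k : ℤ) : ZMod 8)+1 := by
          rw [hk]; push_cast; ring
        rw [hvk] at hc
        exact aux_mod8 ((u : ℤ) : ZMod 8) ((k : ℤ) : ZMod 8) (by linear_combination hc)
    · rcases hqd with hqs | hqt
      · -- case 3: m = 2q u², m+1 = p v² : (2q) is a square mod p via -1 square
        obtain ⟨u, v, hu0, hv0, hsu, htv⟩ :=
          aux_extract (z := z) (d₁ := 2*(q:ℤ)) (d₂ := (p:ℤ)) (by nlinarith) (by nlinarith)
            hspos htpos hco (c2q.mul_dvd h2s hqs) hpt (by rw [key]; try ring)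
        exfalso
        have heq : (p:ℤ) * v^2 - 2*q*u^2 = 1 := by linarith
        have hc := congrArg (fun n : ℤ => (n : ZMod p)) heq
        push_cast at hc
        rw [ZMod.natCast_self] at hc
        have hc' : (2 * ((q:ℕ) : ZMod p)) * ((u:ℤ) : ZMod p)^2 = -1 := by
          linear_combination -hc
        have hU : ((u:ℤ) : ZMod p) ≠ 0 := by
          intro h0
          rw [h0] at hc'
          norm_num at hc'
        obtain ⟨w, hw⟩ := ZMod.exists_sq_eq_neg_one_iff.mpr
          (show p % 4 ≠ 3 by omega)
        exact aux_not_isSquare_two_q p q hp hq hleg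
          (aux_isSquare_of_mul_sq hU (by rw [hc', hw]; ring))
      · -- case 4: m = 2 u², m+1 = pq v² : mod 8
        obtain ⟨u, v, hu0, hv0, hsu, htv⟩ :=
          aux_extract (z := z) (d₁ := (2:ℤ)) (d₂ := (p:ℤ)*q) (by norm_num) (by nlinarith)
            hspos htpos hco h2s (cpq.mul_dvd hpt hqt) (by rw [key]; try ring)
        exfalso
        have heq : (p:ℤ)*q * v^2 - 2*u^2 = 1 := by linarith
        have hvodd : Odd v := by
          have ho : Odd ((p:ℤ)*q * v^2) := by
            rw [← htv]
            exact (by obtain ⟨k, hk⟩ := h2s; exact ⟨k, by omega⟩ : Even m).add_one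
          exact ((Int.odd_pow).mp (Int.odd_mul.mp ho).2).resolve_right (by norm_num)
        obtain ⟨k, hk⟩ := hvodd
        have hc := congrArg (fun n : ℤ => (n : ZMod 8)) heq
        push_cast at hc
        have hq8 : ((q:ℕ) : ZMod 8) = 7 := by rw [← ZMod.natCast_mod, hq]; rfl
        have hp8 : ((p:ℕ) : ZMod 8) = 1 := by rw [← ZMod.natCast_mod, hp]; rfl
        rw [hp8, hq8] at hc
        have hvk : ((v : ℤ) : ZMod 8) = 2*((k : ℤ) : ZMod 8)+1 := by
          rw [hk]; push_cast; ring
        rw [hvk] at hc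
        exact aux_mod8 ((u : ℤ) : ZMod 8) ((k : ℤ) : ZMod 8) (by linear_combination hc)
  · rcases hpd with hps | hpt
    · rcases hqd with hqs | hqt
      · -- case 5: m = pq u², m+1 = 2 v² : GOAL  x+1 = (2v)²
        obtain ⟨u, v, hu0, hv0, hsu, htv⟩ :=
          aux_extract (z := z) (d₁ := (p:ℤ)*q) (d₂ := (2:ℤ)) (by nlinarith) (by norm_num)
            hspos htpos hco (cpq.mul_dvd hps hqs) h2t (by rw [key]; try ring)
        refine ⟨(2*v).toNat, ?_⟩
        rw [Int.toNat_of_nonneg (by linarith)]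
        linear_combination hm + 2 * htv
      · -- case 6: m = p u², m+1 = 2q v² : (2q) is a square mod p
        obtain ⟨u, v, hu0, hv0, hsu, htv⟩ :=
          aux_extract (z := z) (d₁ := (p:ℤ)) (d₂ := 2*(q:ℤ)) (by nlinarith) (by nlinarith)
            hspos htpos hco hps (c2q.mul_dvd h2t hqt) (by rw [key]; try ring)
        exfalso
        have heq : 2*(q:ℤ) * v^2 - p*u^2 = 1 := by linarith
        have hc := congrArg (fun n : ℤ => (n : ZMod p)) heq
        push_cast at hc
        rw [ZMod.natCast_self] at hc
        have hc' : (2 * ((q:ℕ) : ZMod p)) * ((v:ℤ) : ZMod p)^2 = 1^2 := by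
          linear_combination hc
        have hV : ((v:ℤ) : ZMod p) ≠ 0 := by
          intro h0
          rw [h0] at hc'
          norm_num at hc'
        exact aux_not_isSquare_two_q p q hp hq hleg (aux_isSquare_of_mul_sq hV hc')
    · rcases hqd with hqs | hqt
      · -- case 7: m = q u², m+1 = 2p v² : (2p) is a square mod q
        obtain ⟨u, v, hu0, hv0, hsu, htv⟩ :=
          aux_extract (z := z) (d₁ := (q:ℤ)) (d₂ := 2*(p:ℤ)) (by nlinarith) (by nlinarith)
            hspos htpos hco hqs (c2p.mul_dvd h2t hpt) (by rw [key]; try ring)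
        exfalso
        have heq : 2*(p:ℤ) * v^2 - q*u^2 = 1 := by linarith
        have hc := congrArg (fun n : ℤ => (n : ZMod q)) heq
        push_cast at hc
        rw [ZMod.natCast_self] at hc
        have hc' : (2 * ((p:ℕ) : ZMod q)) * ((v:ℤ) : ZMod q)^2 = 1^2 := by
          linear_combination hc
        have hV : ((v:ℤ) : ZMod q) ≠ 0 := by
          intro h0
          rw [h0] at hc'
          norm_num at hc'
        exact aux_not_isSquare_two_p p q hp hq hleg (aux_isSquare_of_mul_sq hV hc')
      · -- case 8: m = u², m+1 = 2pq v² : -1 square mod q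
        obtain ⟨u, v, hu0, hv0, hsu, htv⟩ :=
          aux_extract (z := z) (d₁ := (1:ℤ)) (d₂ := 2*(p:ℤ)*q) one_pos hdZ
            hspos htpos hco (one_dvd _) ((IsCoprime.mul_left c2q cpq).mul_dvd
              (c2p.mul_dvd h2t hpt) hqt) (by rw [key]; try ring)
        exfalso
        have heq : 2*(p:ℤ)*q * v^2 - u^2 = 1 := by linarith
        have hc := congrArg (fun n : ℤ => (n : ZMod q)) heq
        push_cast at hc
        rw [ZMod.natCast_self] at hc
        have hc' : ((u:ℤ) : ZMod q)^2 = -1 := by linear_combination -hc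
        exact (ZMod.exists_sq_eq_neg_one_iff.mp
          ⟨((u:ℤ) : ZMod q), by rw [← hc']; ring⟩) hq4
end
end

section
/- Let p ≡ 1 (mod 8) and q ≡ 7 (mod 8) be primes with (p/q) = −1, and write ε_{2pq} = x + y√(2pq) with x, y ∈ ℤ. Then there exist integers y₁, y₂ with y = y₁·y₂ such that √(2ε_{2pq}) = y₁ + y₂√(2pq), i.e. 2ε_{2pq} = (y₁ + y₂√(2pq))², and 2 = y₁² − 2pq·y₂². -/
noncomputable section

private lemma isSquare_of_mul_sq_eq_one {K : Type*} [Field K] {k w : K} (h : k * w ^ 2 = 1) :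
    IsSquare k := by
  have hw : w ≠ 0 := by rintro rfl; simp at h
  refine ⟨w⁻¹, ?_⟩
  field_simp
  linear_combination h

private lemma split_lemma {a b m r s : ℤ} (ha : 0 < a) (hb : 0 < b) (hm : 0 ≤ m)
    (hr0 : 0 < r) (hs0 : 0 < s)
    (hcop : IsCoprime a b) (hr : r ∣ a) (hs : s ∣ b) (h : a * b = r * s * m ^ 2) :
    ∃ u v : ℤ, 0 ≤ u ∧ 0 ≤ v ∧ a = r * u ^ 2 ∧ b = s * v ^ 2 ∧ m = u * v := by
  obtain ⟨a1, rfl⟩ := hr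
  obtain ⟨b1, rfl⟩ := hs
  have ha1 : 0 < a1 := by nlinarith
  have hb1 : 0 < b1 := by nlinarith
  have h1 : a1 * b1 = m ^ 2 := by
    have h2 : (r * s) * (a1 * b1) = (r * s) * m ^ 2 := by linear_combination h
    exact mul_left_cancel₀ (by positivity) h2
  have hcop1 : IsCoprime a1 b1 :=
    (hcop.of_isCoprime_of_dvd_left (Dvd.intro_left r rfl)).of_isCoprime_of_dvd_right
      (Dvd.intro_left s rfl)
  obtain ⟨u0, hu⟩ := Int.sq_of_isCoprime hcop1 h1
  obtain ⟨v0, hv⟩ := Int.sq_of_isCoprime hcop1.symm (by rw [mul_comm]; exact h1)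
  have hu' : a1 = u0 ^ 2 := by
    rcases hu with h' | h'
    · exact h'
    · nlinarith [sq_nonneg u0]
  have hv' : b1 = v0 ^ 2 := by
    rcases hv with h' | h'
    · exact h'
    · nlinarith [sq_nonneg v0]
  refine ⟨|u0|, |v0|, abs_nonneg _, abs_nonneg _, by rw [hu', sq_abs], by rw [hv', sq_abs], ?_⟩
  have habs : 0 ≤ |u0| * |v0| := by positivity
  have hmz : (m - |u0| * |v0|) * (m + |u0| * |v0|) = 0 := by
    have hm2 : m ^ 2 = (|u0| * |v0|) ^ 2 := by
      rw [mul_pow, sq_abs, sq_abs, ← hu', ← hv', h1]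
    linear_combination hm2
  rcases mul_eq_zero.mp hmz with h' | h'
  · linarith
  · linarith


set_option maxHeartbeats 2000000 in
/-- If `p ≡ 1 (mod 8)` and `q ≡ 7 (mod 8)` are primes with `(p/q) = −1`, and
`ε_{2pq} = x + y√(2pq)` is the fundamental unit of `ℚ(√(2pq))`, then there are
integers `y₁, y₂` with `y = y₁y₂`, `2ε_{2pq} = (y₁ + y₂√(2pq))²` and
`2 = y₁² − 2pq·y₂²`. -/
theorem sqrt_two_eps_2pq (p q : ℕ) [Fact p.Prime] [Fact q.Prime]
    (hp : p % 8 = 1) (hq : q % 8 = 7) (hleg : legendreSym q p = -1)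
    (x y : ℤ) (h : IsFundUnit (2 * p * q) (x : ℚ) (y : ℚ)) :
    ∃ y₁ y₂ : ℤ, y = y₁ * y₂ ∧
      2 * ((x : ℝ) + (y : ℝ) * Real.sqrt (2 * p * q)) =
        ((y₁ : ℝ) + (y₂ : ℝ) * Real.sqrt (2 * p * q)) ^ 2 ∧
      (2 : ℤ) = y₁ ^ 2 - 2 * p * q * y₂ ^ 2 := by
  obtain ⟨-, hnorm, hgt, hmin⟩ := h
  have hp' : p.Prime := Fact.out
  have hq' : q.Prime := Fact.out
  have hp2 : (2:ℤ) ≤ (p:ℤ) := by exact_mod_cast hp'.two_le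
  have hq2 : (2:ℤ) ≤ (q:ℤ) := by exact_mod_cast hq'.two_le
  have hqne2 : q ≠ 2 := by omega
  have hpne2 : p ≠ 2 := by omega
  have hpneq : p ≠ q := by omega
  have hq4 : q % 4 = 3 := by omega
  -- norm is +1
  have e : x ^ 2 - 2 * (p:ℤ) * q * y ^ 2 = 1 := by
    rcases hnorm with hn | hn
    · exact_mod_cast hn
    · exfalso
      have e' : x ^ 2 - 2 * (p:ℤ) * q * y ^ 2 = -1 := by exact_mod_cast hn
      have hc := congrArg (fun t : ℤ => (t : ZMod q)) e'
      push_cast at hc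
      rw [ZMod.natCast_self] at hc
      simp only [mul_zero, zero_mul, sub_zero] at hc
      have hsq : IsSquare (-1 : ZMod q) := ⟨(x : ZMod q), by linear_combination -hc⟩
      exact (ZMod.exists_sq_eq_neg_one_iff.mp hsq) hq4
  -- positivity
  push_cast at hgt
  obtain ⟨s, hsdef⟩ : ∃ s : ℝ, Real.sqrt (2 * (p:ℝ) * (q:ℝ)) = s := ⟨_, rfl⟩
  rw [hsdef] at hgt
  have hppos : (0:ℝ) < (p:ℝ) := by exact_mod_cast hp'.pos
  have hqpos : (0:ℝ) < (q:ℝ) := by exact_mod_cast hq'.pos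
  have hNpos : (0:ℝ) < 2 * (p:ℝ) * (q:ℝ) := by positivity
  have hs2 : s ^ 2 = 2 * (p:ℝ) * (q:ℝ) := by rw [← hsdef]; exact Real.sq_sqrt hNpos.le
  have hs_pos : 0 < s := by rw [← hsdef]; exact Real.sqrt_pos.mpr hNpos
  have eR : (x:ℝ) ^ 2 - 2 * (p:ℝ) * (q:ℝ) * (y:ℝ) ^ 2 = 1 := by exact_mod_cast e
  have hprod : ((x:ℝ) + y * s) * ((x:ℝ) - y * s) = 1 := by
    linear_combination eR - (y:ℝ) ^ 2 * hs2
  have hsm_pos : (0:ℝ) < (x:ℝ) - y * s := by nlinarith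
  have hsm_lt : (x:ℝ) - y * s < 1 := by nlinarith
  have hxpos : (0:ℤ) < x := by
    have : (0:ℝ) < (x:ℝ) := by nlinarith
    exact_mod_cast this
  have hypos : (0:ℤ) < y := by
    have hys : 0 < (y:ℝ) * s := by nlinarith
    have : (0:ℝ) < (y:ℝ) := by
      by_contra hcon
      push_neg at hcon
      nlinarith
    exact_mod_cast this
  have hy1 : (1:ℤ) ≤ y := hypos
  have hy2 : (1:ℤ) ≤ y ^ 2 := by nlinarith
  have hpq4 : (4:ℤ) ≤ (p:ℤ) * (q:ℤ) := by nlinarith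
  have hx9 : (9:ℤ) ≤ x ^ 2 := by nlinarith [hpq4, hy2, e]
  have hx3 : (3:ℤ) ≤ x := by nlinarith
  -- parity of x
  rcases Int.even_or_odd x with ⟨k, hk⟩ | ⟨k, hk⟩
  · exfalso
    have h2 : (2:ℤ) ∣ 1 := ⟨2 * k ^ 2 - (p:ℤ) * q * y ^ 2, by rw [hk] at e; linear_combination -e⟩
    norm_num at h2
  have hk1 : 1 ≤ k := by omega
  have eK : 2 * (k * (k + 1)) = (p:ℤ) * q * y ^ 2 := by
    have h4 : (2:ℤ) * (2 * (k * (k + 1))) = 2 * ((p:ℤ) * q * y ^ 2) := by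
      rw [hk] at e; linear_combination e
    exact mul_left_cancel₀ (by norm_num) h4
  -- y even
  have h2y : (2:ℤ) ∣ y := by
    have hdv : (2:ℤ) ∣ (p:ℤ) * q * y ^ 2 := ⟨k * (k + 1), eK.symm⟩
    rcases (Int.prime_two.dvd_mul).mp hdv with h' | h'
    · rcases (Int.prime_two.dvd_mul).mp h' with h'' | h''
      · exfalso; have : (2:ℕ) ∣ p := by exact_mod_cast h''
        omega
      · exfalso; have : (2:ℕ) ∣ q := by exact_mod_cast h''
        omega
    · exact Int.prime_two.dvd_of_dvd_pow h'
  obtain ⟨m, hym⟩ := h2y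
  have hm1 : 1 ≤ m := by omega
  have eM : k * (k + 1) = 2 * (p:ℤ) * q * m ^ 2 := by
    have h4 : (2:ℤ) * (k * (k + 1)) = 2 * (2 * (p:ℤ) * q * m ^ 2) := by
      rw [hym] at eK; linear_combination eK
    exact mul_left_cancel₀ (by norm_num) h4
  have hk0 : (0:ℤ) < k := by omega
  have hk10 : (0:ℤ) < k + 1 := by omega
  have hm0 : (0:ℤ) ≤ m := by omega
  have hcop : IsCoprime k (k + 1) := ⟨-1, 1, by ring⟩
  have hPZ : Prime ((p:ℤ)) := Nat.prime_iff_prime_int.mp hp'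
  have hQZ : Prime ((q:ℤ)) := Nat.prime_iff_prime_int.mp hq'
  have h2d : (2:ℤ) ∣ k ∨ (2:ℤ) ∣ (k + 1) :=
    Int.prime_two.dvd_mul.mp ⟨(p:ℤ) * q * m ^ 2, by linear_combination eM⟩
  have hpd : (p:ℤ) ∣ k ∨ (p:ℤ) ∣ (k + 1) :=
    hPZ.dvd_mul.mp ⟨2 * (q:ℤ) * m ^ 2, by linear_combination eM⟩
  have hqd : (q:ℤ) ∣ k ∨ (q:ℤ) ∣ (k + 1) :=
    hQZ.dvd_mul.mp ⟨2 * (p:ℤ) * m ^ 2, by linear_combination eM⟩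
  have c2p : IsCoprime (2:ℤ) (p:ℤ) := by
    have := Nat.isCoprime_iff_coprime.mpr ((Nat.coprime_primes Nat.prime_two hp').mpr
      (Ne.symm hpne2))
    exact_mod_cast this
  have c2q : IsCoprime (2:ℤ) (q:ℤ) := by
    have := Nat.isCoprime_iff_coprime.mpr ((Nat.coprime_primes Nat.prime_two hq').mpr
      (Ne.symm hqne2))
    exact_mod_cast this
  have cpq : IsCoprime ((p:ℤ)) ((q:ℤ)) := by
    have := Nat.isCoprime_iff_coprime.mpr ((Nat.coprime_primes hp' hq').mpr hpneq)
    exact_mod_cast this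
  -- Legendre symbol values
  have hp8 : ((p:ℕ) : ZMod 8) = 1 := by rw [← ZMod.natCast_mod, hp]; decide
  have hq8 : ((q:ℕ) : ZMod 8) = 7 := by rw [← ZMod.natCast_mod, hq]; decide
  have lp2 : legendreSym p 2 = 1 := by
    rw [legendreSym.at_two hpne2, ZMod.χ₈_nat_eq_if_mod_eight]
    have h1 : p % 2 = 1 := by omega
    simp [h1, hp]
  have lq2 : legendreSym q 2 = 1 := by
    rw [legendreSym.at_two hqne2, ZMod.χ₈_nat_eq_if_mod_eight]
    have h1 : q % 2 = 1 := by omega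
    simp [h1, hq]
  have lpq : legendreSym p (q:ℤ) = -1 := by
    have h4 : p % 4 = 1 := by omega
    rw [← legendreSym.quadratic_reciprocity_one_mod_four h4 hqne2]
    exact hleg
  have lp2q : legendreSym p (2 * (q:ℤ)) = -1 := by
    rw [legendreSym.mul, lp2, lpq]; norm_num
  have lq2p : legendreSym q (2 * (p:ℤ)) = -1 := by
    rw [legendreSym.mul, lq2, hleg]; norm_num
  have c2pq : IsCoprime (2 * (p:ℤ)) ((q:ℤ)) := c2q.mul_left cpq
  have hpposZ : (0:ℤ) < (p:ℤ) := by linarith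
  have hqposZ : (0:ℤ) < (q:ℤ) := by linarith
  rcases h2d with h2 | h2
  · rcases hpd with hP | hP
    · rcases hqd with hQ | hQ
      · -- case 1 : 2, p, q all divide k : minimality contradiction
        exfalso
        obtain ⟨u, v, hu0, hv0, hA, hB, hMuv⟩ :=
          split_lemma hk0 hk10 hm0 (by positivity) one_pos hcop
            (c2pq.mul_dvd (c2p.mul_dvd h2 hP) hQ) (one_dvd _)
            (by linear_combination eM)
        rw [one_mul] at hB
        have hune : u ≠ 0 := by
          rintro rfl
          simp at hA
          omega
        have hu1 : (1:ℤ) ≤ u := by omega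
        have hv2 : (2:ℤ) ≤ v := by
          by_contra hcon
          push_neg at hcon
          nlinarith [hB, hk1, hv0]
        have hvu : (v:ℤ) ^ 2 - 2 * (p:ℤ) * (q:ℤ) * u ^ 2 = 1 := by linear_combination hA - hB
        have hgt' : (1:ℝ) < ((v:ℤ):ℝ) + ((u:ℤ):ℝ) * s := by
          have h1 : (2:ℝ) ≤ ((v:ℤ):ℝ) := by exact_mod_cast hv2
          have h2' : (1:ℝ) ≤ ((u:ℤ):ℝ) := by exact_mod_cast hu1
          nlinarith [hs_pos]
        have hle := hmin v u (Or.inl ⟨v, u, rfl, rfl⟩) (Or.inl (by exact_mod_cast hvu))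
          (by push_cast; rw [hsdef]; exact hgt')
        push_cast at hle
        rw [hsdef] at hle
        have hη : (((v:ℤ):ℝ) + ((u:ℤ):ℝ) * s) ^ 2 = (x:ℝ) + (y:ℝ) * s := by
          have hxR : (x:ℝ) = 2 * ((k:ℤ):ℝ) + 1 := by exact_mod_cast hk
          have hyR : (y:ℝ) = 2 * ((m:ℤ):ℝ) := by exact_mod_cast hym
          have hAR : ((k:ℤ):ℝ) = 2 * (p:ℝ) * (q:ℝ) * ((u:ℤ):ℝ) ^ 2 := by exact_mod_cast hA
          have hBR : ((k:ℤ):ℝ) + 1 = ((v:ℤ):ℝ) ^ 2 := by exact_mod_cast hB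
          have hMR : ((m:ℤ):ℝ) = ((u:ℤ):ℝ) * ((v:ℤ):ℝ) := by exact_mod_cast hMuv
          linear_combination -hBR - hxR - s * hyR - 2 * s * hMR + ((u:ℤ):ℝ) ^ 2 * hs2 - hAR
        nlinarith [hle, hη, hgt', hgt]
      · -- case 2 : 2, p | k ; q | k+1
        exfalso
        obtain ⟨u, v, hu0, hv0, hA, hB, hMuv⟩ :=
          split_lemma hk0 hk10 hm0 (by positivity) hqposZ hcop
            (c2p.mul_dvd h2 hP) hQ (by linear_combination eM)
        have heq : (q:ℤ) * v ^ 2 = 2 * (p:ℤ) * u ^ 2 + 1 := by linear_combination hA - hB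
        have hc := congrArg (fun t : ℤ => (t : ZMod p)) heq
        push_cast at hc
        rw [ZMod.natCast_self] at hc
        simp only [mul_zero, zero_mul, zero_add, mul_assoc] at hc
        have hsq : IsSquare ((q:ℕ) : ZMod p) := isSquare_of_mul_sq_eq_one hc
        exact ((legendreSym.eq_neg_one_iff p).mp lpq) (by exact_mod_cast hsq)
    · rcases hqd with hQ | hQ
      · -- case 3 : 2, q | k ; p | k+1
        exfalso
        obtain ⟨u, v, hu0, hv0, hA, hB, hMuv⟩ :=
          split_lemma hk0 hk10 hm0 (by positivity) hpposZ hcop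
            (c2q.mul_dvd h2 hQ) hP (by linear_combination eM)
        have heq : (p:ℤ) * v ^ 2 = 2 * (q:ℤ) * u ^ 2 + 1 := by linear_combination hA - hB
        have hc := congrArg (fun t : ℤ => (t : ZMod q)) heq
        push_cast at hc
        rw [ZMod.natCast_self] at hc
        simp only [mul_zero, zero_mul, zero_add, mul_assoc] at hc
        have hsq : IsSquare ((p:ℕ) : ZMod q) := isSquare_of_mul_sq_eq_one hc
        exact ((legendreSym.eq_neg_one_iff q).mp hleg) (by exact_mod_cast hsq)
      · -- case 4 : 2 | k ; p, q | k+1 : contradiction mod 8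
        exfalso
        obtain ⟨u, v, hu0, hv0, hA, hB, hMuv⟩ :=
          split_lemma hk0 hk10 hm0 two_pos (by positivity) hcop
            h2 (cpq.mul_dvd hP hQ) (by linear_combination eM)
        have heq : (p:ℤ) * (q:ℤ) * v ^ 2 = 2 * u ^ 2 + 1 := by linear_combination hA - hB
        have hc := congrArg (fun t : ℤ => (t : ZMod 8)) heq
        push_cast at hc
        rw [hp8, hq8] at hc
        have hgen : ∀ a b : ZMod 8, ¬(7 * a ^ 2 = 2 * b ^ 2 + 1) := by decide
        exact hgen ((v : ZMod 8)) ((u : ZMod 8)) (by linear_combination hc)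
  · rcases hpd with hP | hP
    · rcases hqd with hQ | hQ
      · -- case 5 : p, q | k ; 2 | k+1 : the good case
        obtain ⟨u, v, hu0, hv0, hA, hB, hMuv⟩ :=
          split_lemma hk0 hk10 hm0 (by positivity) two_pos hcop
            (cpq.mul_dvd hP hQ) h2 (by linear_combination eM)
        refine ⟨2 * v, u, ?_, ?_, ?_⟩
        · rw [hym, hMuv]; ring
        · have hxR : (x:ℝ) = 2 * ((k:ℤ):ℝ) + 1 := by exact_mod_cast hk
          have hyR : (y:ℝ) = 2 * ((m:ℤ):ℝ) := by exact_mod_cast hym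
          have hAR : ((k:ℤ):ℝ) = (p:ℝ) * (q:ℝ) * ((u:ℤ):ℝ) ^ 2 := by exact_mod_cast hA
          have hBR : ((k:ℤ):ℝ) + 1 = 2 * ((v:ℤ):ℝ) ^ 2 := by exact_mod_cast hB
          have hMR : ((m:ℤ):ℝ) = ((u:ℤ):ℝ) * ((v:ℤ):ℝ) := by exact_mod_cast hMuv
          push_cast
          rw [hsdef]
          linear_combination 2 * hxR + 2 * s * hyR + 4 * s * hMR + 2 * hBR + 2 * hAR -
            ((u:ℤ):ℝ) ^ 2 * hs2
        · push_cast
          linear_combination 2 * hB - 2 * hA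
      · -- case 6 : p | k ; 2, q | k+1
        exfalso
        obtain ⟨u, v, hu0, hv0, hA, hB, hMuv⟩ :=
          split_lemma hk0 hk10 hm0 hpposZ (by positivity) hcop
            hP (c2q.mul_dvd h2 hQ) (by linear_combination eM)
        have heq : 2 * (q:ℤ) * v ^ 2 = (p:ℤ) * u ^ 2 + 1 := by linear_combination hA - hB
        have hc := congrArg (fun t : ℤ => (t : ZMod p)) heq
        push_cast at hc
        rw [ZMod.natCast_self] at hc
        simp only [mul_zero, zero_mul, zero_add] at hc
        have hsq : IsSquare (2 * ((q:ℕ) : ZMod p)) := isSquare_of_mul_sq_eq_one hc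
        exact ((legendreSym.eq_neg_one_iff p).mp lp2q) (by push_cast; exact hsq)
    · rcases hqd with hQ | hQ
      · -- case 7 : q | k ; 2, p | k+1
        exfalso
        obtain ⟨u, v, hu0, hv0, hA, hB, hMuv⟩ :=
          split_lemma hk0 hk10 hm0 hqposZ (by positivity) hcop
            hQ (c2p.mul_dvd h2 hP) (by linear_combination eM)
        have heq : 2 * (p:ℤ) * v ^ 2 = (q:ℤ) * u ^ 2 + 1 := by linear_combination hA - hB
        have hc := congrArg (fun t : ℤ => (t : ZMod q)) heq
        push_cast at hc
        rw [ZMod.natCast_self] at hc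
        simp only [mul_zero, zero_mul, zero_add] at hc
        have hsq : IsSquare (2 * ((p:ℕ) : ZMod q)) := isSquare_of_mul_sq_eq_one hc
        exact ((legendreSym.eq_neg_one_iff q).mp lq2p) (by push_cast; exact hsq)
      · -- case 8 : 2, p, q | k+1
        exfalso
        obtain ⟨u, v, hu0, hv0, hA, hB, hMuv⟩ :=
          split_lemma hk0 hk10 hm0 one_pos (by positivity) hcop
            (one_dvd _) (c2pq.mul_dvd (c2p.mul_dvd h2 hP) hQ)
            (by linear_combination eM)
        have heq : 2 * (p:ℤ) * (q:ℤ) * v ^ 2 = u ^ 2 + 1 := by linear_combination hA - hB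
        have hc := congrArg (fun t : ℤ => (t : ZMod q)) heq
        push_cast at hc
        rw [ZMod.natCast_self] at hc
        simp only [mul_zero, zero_mul] at hc
        have hsq : IsSquare (-1 : ZMod q) := ⟨(u : ZMod q), by linear_combination hc⟩
        exact (ZMod.exists_sq_eq_neg_one_iff.mp hsq) hq4
end
end

section
/- Let p ≡ 1 (mod 8) and q ≡ 7 (mod 8) be primes with (p/q) = −1, and write the fundamental unit ε_{pq} = v + w√(pq) of Q(√(pq)) with integers v, w. Then v + 1 is a perfect square in ℕ, and there exist integers w₁, w₂ with w = w₁·w₂ such that 2ε_{pq} = (w₁ + w₂√(pq))² and 2 = w₁² − pq·w₂². -/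
noncomputable section

/-! Since `-1` is not a square modulo `q ≡ 3 (mod 4)`, `ε = v + w√(pq)` has norm `1`, so
`v, w > 0` and `(v + 1)(v - 1) = pq w²`. If `v` is odd, `w = 2t` and `(m + 1) m = pq t²` with
`v = 2m + 1`; if `v` is even, `v + 1` and `v - 1` are coprime. In both cases we get coprime
`x > y > 0` with `x - y = c ∈ {1, 2}` and `xy = pq t²`, and the only possible splitting is
`x = a²`, `y = pq b²`: the splittings `pq a² / b²`, `p a² / q b²` and `q a² / p b²` would make
`-c` a square mod `q`, `p` a square mod `q`, or `q` a square mod `p`, which `q ≡ 7 (mod 8)`,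
`p ≡ 1 (mod 8)` and `(p/q) = (q/p) = -1` forbid. For odd `v` this writes `ε = (a + b√(pq))²`
with `a² - pq b² = 1`, against minimality; for even `v` it gives `2ε = (a + b√(pq))²`. -/

open Real

theorem isSquare_of_mul_sq_eq {F : Type*} [Field F] {k x c : F} (hc : IsSquare c) (hc0 : c ≠ 0)
    (h : k * x ^ 2 = c) : IsSquare k := by
  have hx : x ≠ 0 := by
    rintro rfl
    exact hc0 (by simpa using h.symm)
  exact eq_div_of_mul_eq (pow_ne_zero 2 hx) h ▸ hc.div (IsSquare.sq x)

theorem ZMod.intCast_mul_sq_eq_of_dvd {ℓ : ℕ} {k a B b c : ℤ} (hB : (ℓ : ℤ) ∣ B)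
    (h : k * a ^ 2 = c + B * b ^ 2) : (k : ZMod ℓ) * (a : ZMod ℓ) ^ 2 = c := by
  have hB0 : (B : ZMod ℓ) = 0 := (ZMod.intCast_zmod_eq_zero_iff_dvd B ℓ).mpr hB
  simpa [hB0] using congrArg (Int.cast : ℤ → ZMod ℓ) h

theorem Int.exists_sq_of_isCoprime_of_mul_eq_sq {r s t : ℤ} (hr : 0 < r) (hco : IsCoprime r s)
    (h : r * s = t ^ 2) : ∃ a, r = a ^ 2 := by
  obtain ⟨a, ha | ha⟩ := Int.sq_of_isCoprime hco h
  · exact ⟨a, ha⟩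
  · nlinarith [sq_nonneg a]

theorem Int.exists_eq_mul_sq_of_dvd_of_mul_eq {c₁ c₂ r s t : ℤ} (hc₁ : 0 < c₁) (hc₂ : 0 < c₂)
    (hr : 0 < r) (hs : 0 < s) (hco : IsCoprime r s) (h₁ : c₁ ∣ r) (h₂ : c₂ ∣ s)
    (h : r * s = c₁ * c₂ * t ^ 2) : (∃ a, r = c₁ * a ^ 2) ∧ ∃ b, s = c₂ * b ^ 2 := by
  obtain ⟨r₁, rfl⟩ := h₁
  obtain ⟨s₁, rfl⟩ := h₂
  have hco₁ : IsCoprime r₁ s₁ := hco.of_mul_left_right.of_mul_right_right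
  have hrs : r₁ * s₁ = t ^ 2 :=
    mul_left_cancel₀ (mul_pos hc₁ hc₂).ne' (by linear_combination h)
  obtain ⟨a, rfl⟩ := Int.exists_sq_of_isCoprime_of_mul_eq_sq
    (pos_of_mul_pos_right hr hc₁.le) hco₁ hrs
  obtain ⟨b, rfl⟩ := Int.exists_sq_of_isCoprime_of_mul_eq_sq
    (pos_of_mul_pos_right hs hc₂.le) hco₁.symm (by rw [mul_comm, hrs])
  exact ⟨⟨a, rfl⟩, b, rfl⟩

theorem Int.eq_mul_sq_cases_of_mul_eq {p q : ℕ} (hp : p.Prime) (hq : q.Prime) (hpq : p ≠ q)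
    {r s t : ℤ} (hr : 0 < r) (hs : 0 < s) (hco : IsCoprime r s) (h : r * s = p * q * t ^ 2) :
    (∃ a b, r = a ^ 2 ∧ s = p * q * b ^ 2) ∨ (∃ a b, r = p * q * a ^ 2 ∧ s = b ^ 2) ∨
      (∃ a b, r = p * a ^ 2 ∧ s = q * b ^ 2) ∨ (∃ a b, r = q * a ^ 2 ∧ s = p * b ^ 2) := by
  have hp0 : (0 : ℤ) < p := by exact_mod_cast hp.pos
  have hq0 : (0 : ℤ) < q := by exact_mod_cast hq.pos
  have hcop : IsCoprime (p : ℤ) q :=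
    Nat.isCoprime_iff_coprime.mpr ((Nat.coprime_primes hp hq).mpr hpq)
  have split {c₁ c₂ : ℤ} (hc₁ : 0 < c₁) (hc₂ : 0 < c₂) (h₁ : c₁ ∣ r) (h₂ : c₂ ∣ s)
      (hc : c₁ * c₂ = p * q) := Int.exists_eq_mul_sq_of_dvd_of_mul_eq hc₁ hc₂ hr hs hco h₁ h₂
    (by rw [hc, h])
  rcases (Nat.prime_iff_prime_int.mp hp).dvd_or_dvd ⟨q * t ^ 2, by rw [h]; ring⟩ with hpr | hps <;>
    rcases (Nat.prime_iff_prime_int.mp hq).dvd_or_dvd ⟨p * t ^ 2, by rw [h]; ring⟩ with hqr | hqs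
  · obtain ⟨⟨a, ha⟩, b, hb⟩ :=
      split (mul_pos hp0 hq0) one_pos (hcop.mul_dvd hpr hqr) (one_dvd s) (mul_one _)
    exact .inr <| .inl ⟨a, b, ha, by rw [hb, one_mul]⟩
  · obtain ⟨⟨a, ha⟩, b, hb⟩ := split hp0 hq0 hpr hqs rfl
    exact .inr <| .inr <| .inl ⟨a, b, ha, hb⟩
  · obtain ⟨⟨a, ha⟩, b, hb⟩ := split hq0 hp0 hqr hps (mul_comm _ _)
    exact .inr <| .inr <| .inr ⟨a, b, ha, hb⟩
  · obtain ⟨⟨a, ha⟩, b, hb⟩ :=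
      split one_pos (mul_pos hp0 hq0) (one_dvd r) (hcop.mul_dvd hps hqs) (one_mul _)
    exact .inl ⟨a, b, by rw [ha, one_mul], hb⟩

theorem eq_sq_and_eq_mul_sq_of_mul_eq {p q : ℕ} [Fact p.Prime] [Fact q.Prime]
    (hpq : ¬IsSquare (p : ZMod q)) (hqp : ¬IsSquare (q : ZMod p)) {c : ℤ}
    (hcp : IsSquare (c : ZMod p)) (hcp0 : (c : ZMod p) ≠ 0) (hcq : IsSquare (c : ZMod q))
    (hncq : ¬IsSquare (-c : ZMod q)) {x y t : ℤ} (hx : 0 < x) (hy : 0 < y) (ht : 0 ≤ t)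
    (hco : IsCoprime x y) (hxy : x - y = c) (h : x * y = p * q * t ^ 2) :
    ∃ a b : ℤ, 0 ≤ a ∧ 0 ≤ b ∧ x = a ^ 2 ∧ y = p * q * b ^ 2 ∧ t = a * b := by
  have hne : p ≠ q := by
    rintro rfl
    exact hpq ⟨0, by simp⟩
  have hcq0 : (c : ZMod q) ≠ 0 := fun h0 => hncq ⟨0, by simp [h0]⟩
  rcases Int.eq_mul_sq_cases_of_mul_eq Fact.out Fact.out hne hx hy hco h with
    ⟨a, b, rfl, rfl⟩ | ⟨a, b, rfl, rfl⟩ | ⟨a, b, rfl, rfl⟩ | ⟨a, b, rfl, rfl⟩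
  · refine ⟨|a|, |b|, abs_nonneg a, abs_nonneg b, (sq_abs a).symm, by rw [sq_abs], ?_⟩
    have hpq0 : (p * q : ℤ) ≠ 0 := by simp [(Fact.out : p.Prime).ne_zero, (Fact.out : q.Prime).ne_zero]
    refine (pow_left_inj₀ ht (by positivity) two_ne_zero).mp (mul_left_cancel₀ hpq0 ?_)
    rw [mul_pow, sq_abs, sq_abs]
    linear_combination -h
  · refine absurd ⟨b, ?_⟩ hncq
    have := ZMod.intCast_mul_sq_eq_of_dvd (ℓ := q) (k := 1) (dvd_mul_left _ _)
      (by linear_combination -hxy : 1 * b ^ 2 = -c + p * q * a ^ 2)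
    simpa [sq] using this.symm
  · refine absurd (isSquare_of_mul_sq_eq (x := (a : ZMod _)) hcq hcq0 ?_) hpq
    simpa using ZMod.intCast_mul_sq_eq_of_dvd (ℓ := q) (dvd_refl _)
      (by linear_combination hxy : (p : ℤ) * a ^ 2 = c + q * b ^ 2)
  · refine absurd (isSquare_of_mul_sq_eq (x := (a : ZMod _)) hcp hcp0 ?_) hqp
    simpa using ZMod.intCast_mul_sq_eq_of_dvd (ℓ := p) (dvd_refl _)
      (by linear_combination hxy : (q : ℤ) * a ^ 2 = c + p * b ^ 2)

theorem eq_sq_and_eq_mul_sq_of_mod_eight {p q : ℕ} [Fact p.Prime] [Fact q.Prime]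
    (hp : p % 8 = 1) (hq : q % 8 = 7) (hleg : legendreSym q p = -1) {c x y t : ℤ}
    (hc : c = 1 ∨ c = 2) (hx : 0 < x) (hy : 0 < y) (ht : 0 ≤ t) (hco : IsCoprime x y)
    (hxy : x - y = c) (h : x * y = p * q * t ^ 2) :
    ∃ a b : ℤ, 0 ≤ a ∧ 0 ≤ b ∧ x = a ^ 2 ∧ y = p * q * b ^ 2 ∧ t = a * b := by
  have hpq : ¬IsSquare (p : ZMod q) := (legendreSym.eq_neg_one_iff' q).mp hleg
  have hqp : ¬IsSquare (q : ZMod p) := by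
    rwa [ZMod.exists_sq_eq_prime_iff_of_mod_four_eq_one (by omega) (by omega)]
  rcases hc with rfl | rfl
  · refine eq_sq_and_eq_mul_sq_of_mul_eq hpq hqp (by simp) (by simp) (by simp) ?_
      hx hy ht hco hxy h
    simpa [ZMod.exists_sq_eq_neg_one_iff] using (by omega : q % 4 = 3)
  · refine eq_sq_and_eq_mul_sq_of_mul_eq hpq hqp ?_ ?_ ?_ ?_ hx hy ht hco hxy h
    · simpa using (ZMod.exists_sq_eq_two_iff (p := p) (by omega)).mpr (by omega)
    · simpa using Ring.two_ne_zero (R := ZMod p) (by rw [ZMod.ringChar_zmod_n]; omega)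
    · simpa using (ZMod.exists_sq_eq_two_iff (p := q) (by omega)).mpr (by omega)
    · simpa using (ZMod.exists_sq_eq_neg_two_iff (p := q) (by omega)).not.mpr (by omega)

theorem Int.even_of_sq_sub_mul_sq_eq_one {d v w : ℤ} (hd : Odd d) (hv : Odd v)
    (h : v ^ 2 - d * w ^ 2 = 1) : Even w := by
  obtain ⟨m, rfl⟩ := hv
  have hdw : Even (d * w ^ 2) := ⟨2 * m * (m + 1), by linear_combination -h⟩
  rcases Int.even_mul.mp hdw with hd' | hw
  · exact absurd hd' (Int.not_even_iff_odd.mpr hd)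
  · exact (Int.even_pow.mp hw).1

theorem IsFundUnit.sq_sub_mul_sq_eq_one {d v w : ℤ} {ℓ : ℕ} (h : IsFundUnit d v w)
    (hℓ : (ℓ : ℤ) ∣ d) (hneg : ¬IsSquare (-1 : ZMod ℓ)) : v ^ 2 - d * w ^ 2 = 1 := by
  rcases h.2.1 with h1 | h1
  · exact_mod_cast h1
  · have hZ : v ^ 2 - d * w ^ 2 = -1 := by exact_mod_cast h1
    refine absurd ⟨v, ?_⟩ hneg
    have := ZMod.intCast_mul_sq_eq_of_dvd (k := 1) hℓ
      (by linear_combination hZ : 1 * v ^ 2 = -1 + d * w ^ 2)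
    simpa [sq] using this.symm

theorem IsFundUnit.pos {d v w : ℤ} (h : IsFundUnit d v w) (hd : 0 < d)
    (hnorm : v ^ 2 - d * w ^ 2 = 1) : 0 < v ∧ 0 < w := by
  have h1 : 1 < (v : ℝ) + w * √d := by simpa using h.2.2.1
  have hs : √(d : ℝ) ^ 2 = d := Real.sq_sqrt (by positivity)
  have hnorm' : (v : ℝ) ^ 2 - d * w ^ 2 = 1 := by exact_mod_cast hnorm
  -- the conjugate `v - w√d` is the inverse of `v + w√d > 1`, hence lies in `(0, 1)`
  have hconj : ((v : ℝ) + w * √d) * (v - w * √d) = 1 := by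
    linear_combination hnorm' - (w : ℝ) ^ 2 * hs
  have hpos : 0 < (v : ℝ) - w * √d :=
    pos_of_mul_pos_right (hconj ▸ one_pos) (by linarith)
  have hlt : (v : ℝ) - w * √d < 1 := by nlinarith
  constructor
  · exact_mod_cast (by linarith : (0 : ℝ) < v)
  · exact_mod_cast pos_of_mul_pos_left (by linarith : (0 : ℝ) < w * √d) (sqrt_nonneg _)

theorem IsFundUnit.ne_sq_s3 {d v w a b : ℤ} (h : IsFundUnit d v w) (hab : a ^ 2 - d * b ^ 2 = 1)
    (h1 : 1 < (a : ℝ) + b * √d) : (v : ℝ) + w * √d ≠ (a + b * √d) ^ 2 := by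
  intro heq
  have hle := h.2.2.2 a b (.inl ⟨a, b, rfl, rfl⟩) (.inl (by exact_mod_cast hab))
    (by simpa using h1)
  simp only [Rat.cast_intCast] at hle
  nlinarith

theorem IsFundUnit.even_of_mod_eight {p q : ℕ} [Fact p.Prime] [Fact q.Prime]
    (hp : p % 8 = 1) (hq : q % 8 = 7) (hleg : legendreSym q p = -1) {v w : ℤ}
    (h : IsFundUnit (p * q) v w) (hnorm : v ^ 2 - p * q * w ^ 2 = 1) (hv : 0 < v) (hw : 0 < w) :
    Even v := by
  refine Int.not_odd_iff_even.mp fun ⟨k, hk⟩ => ?_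
  subst hk
  have hpq : Odd ((p : ℤ) * q) := by
    rw [← Nat.cast_mul, Int.odd_coe_nat, Nat.odd_mul, Nat.odd_iff, Nat.odd_iff]
    omega
  obtain ⟨t, rfl⟩ := Int.even_of_sq_sub_mul_sq_eq_one hpq ⟨k, rfl⟩ hnorm
  have hkt : (k + 1) * k = p * q * t ^ 2 :=
    mul_left_cancel₀ (by norm_num : (4 : ℤ) ≠ 0) (by linear_combination hnorm)
  have hk : 0 < k := by
    have := (Fact.out : p.Prime).pos
    have := (Fact.out : q.Prime).pos
    have ht : 0 < t := by omega
    exact pos_of_mul_pos_right (a := k + 1) (by rw [hkt]; positivity) (by omega)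
  obtain ⟨a, b, ha, hb, hk₁, hk₂, rfl⟩ := eq_sq_and_eq_mul_sq_of_mod_eight hp hq hleg
    (.inl rfl) (by omega) hk (by omega) ⟨1, -1, by ring⟩ (by ring) hkt
  have hs : √((p : ℝ) * q) ^ 2 = p * q := Real.sq_sqrt (by positivity)
  have hk₁' : (k : ℝ) + 1 = a ^ 2 := by exact_mod_cast hk₁
  have hk₂' : (k : ℝ) = p * q * b ^ 2 := by exact_mod_cast hk₂
  have ha' : (1 : ℝ) < a := by exact_mod_cast (by nlinarith : 1 < a)
  refine h.ne_sq_s3 (a := a) (b := b) (by linear_combination hk₂ - hk₁) ?_ ?_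
  · have := mul_nonneg (by exact_mod_cast hb : (0 : ℝ) ≤ b) (sqrt_nonneg ((p : ℝ) * q))
    push_cast
    linarith
  · push_cast
    linear_combination hk₁' + hk₂' - (b : ℝ) ^ 2 * hs

/-- If `p ≡ 1 (mod 8)` and `q ≡ 7 (mod 8)` are primes with `(p/q) = −1`, and
`ε_{pq} = v + w√(pq)` is the fundamental unit of `ℚ(√(pq))` with `v, w ∈ ℤ`,
then `v + 1` is a perfect square and there are integers `w₁, w₂` with `w = w₁w₂`,
`2ε_{pq} = (w₁ + w₂√(pq))²` and `2 = w₁² − pq·w₂²`. -/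
theorem sqrt_two_eps_pq (p q : ℕ) [Fact p.Prime] [Fact q.Prime]
    (hp : p % 8 = 1) (hq : q % 8 = 7) (hleg : legendreSym q p = -1)
    (v w : ℤ) (h : IsFundUnit (p * q) (v : ℚ) (w : ℚ)) :
    (∃ n : ℕ, v + 1 = (n : ℤ) ^ 2) ∧
    ∃ w₁ w₂ : ℤ, w = w₁ * w₂ ∧
      2 * ((v : ℝ) + (w : ℝ) * Real.sqrt (p * q)) =
        ((w₁ : ℝ) + (w₂ : ℝ) * Real.sqrt (p * q)) ^ 2 ∧
      (2 : ℤ) = w₁ ^ 2 - p * q * w₂ ^ 2 := by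
  have hd : (0 : ℤ) < p * q := by
    have := (Fact.out : p.Prime).pos
    have := (Fact.out : q.Prime).pos
    positivity
  have hnorm : v ^ 2 - p * q * w ^ 2 = 1 :=
    h.sq_sub_mul_sq_eq_one (dvd_mul_left _ _) (by rw [ZMod.exists_sq_eq_neg_one_iff]; omega)
  obtain ⟨hv, hw⟩ := h.pos hd hnorm
  obtain ⟨k, rfl⟩ := h.even_of_mod_eight hp hq hleg hnorm hv hw
  obtain ⟨a, b, ha, -, hk₁, hk₂, rfl⟩ := eq_sq_and_eq_mul_sq_of_mod_eight hp hq hleg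
    (.inr rfl) (x := k + k + 1) (y := k + k - 1) (by omega) (by omega) hw.le
    ⟨k, -(k + 1), by ring⟩ (by ring) (by linear_combination hnorm)
  refine ⟨⟨a.toNat, by rw [Int.toNat_of_nonneg ha, hk₁]⟩, a, b, rfl, ?_,
    by linear_combination hk₁ - hk₂⟩
  have hs : √((p : ℝ) * q) ^ 2 = p * q := Real.sq_sqrt (by positivity)
  have hk₁' : (k : ℝ) + k + 1 = a ^ 2 := by exact_mod_cast hk₁
  have hk₂' : (k : ℝ) + k - 1 = p * q * b ^ 2 := by exact_mod_cast hk₂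
  push_cast
  linear_combination hk₁' + hk₂' - (b : ℝ) ^ 2 * hs
end
end

section
/- Let q ≡ 7 (mod 8) be a prime and write the fundamental unit ε_{2q} = c + d√(2q) of Q(√(2q)) with integers c, d. Then c + 1 is a perfect square in ℕ, and there exist integers d₁, d₂ with d = d₁·d₂ such that 2ε_{2q} = (d₁ + d₂√(2q))² and 2 = d₁² − 2q·d₂². -/
noncomputable section

/-- A positive factor in a coprime product equal to a square is a square. -/
lemma sq_help {a b e : ℤ} (hco : IsCoprime a b) (hab : a * b = e ^ 2) (ha : 0 < a) :
    ∃ a1 : ℤ, 0 ≤ a1 ∧ a = a1 ^ 2 := by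
  obtain ⟨a0, h0 | h0⟩ := Int.sq_of_isCoprime hco hab
  · exact ⟨|a0|, abs_nonneg _, by rw [sq_abs]; exact h0⟩
  · exfalso; nlinarith [sq_nonneg a0]

lemma lt_self_sq_contra {x y : ℝ} (h1 : 1 < x) (h2 : y ≤ x) (h3 : x ^ 2 = y) : False := by
  nlinarith

/-- If `q ≡ 7 (mod 8)` is prime and `ε_{2q} = c + d√(2q)` is the fundamental unit of
`ℚ(√(2q))` with `c, d ∈ ℤ`, then `c + 1` is a perfect square and there are integers
`d₁, d₂` with `d = d₁d₂`, `2ε_{2q} = (d₁ + d₂√(2q))²` and `2 = d₁² − 2q·d₂²`. -/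
theorem sqrt_two_eps_2q (q : ℕ) [Fact q.Prime] (hq : q % 8 = 7)
    (c d : ℤ) (h : IsFundUnit (2 * q) (c : ℚ) (d : ℚ)) :
    (∃ n : ℕ, c + 1 = (n : ℤ) ^ 2) ∧
    ∃ d₁ d₂ : ℤ, d = d₁ * d₂ ∧
      2 * ((c : ℝ) + (d : ℝ) * Real.sqrt (2 * q)) =
        ((d₁ : ℝ) + (d₂ : ℝ) * Real.sqrt (2 * q)) ^ 2 ∧
      (2 : ℤ) = d₁ ^ 2 - 2 * q * d₂ ^ 2 := by
  obtain ⟨-, hnorm, hgt, hmin⟩ := h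
  have hq7 : 7 ≤ q := by have := Nat.mod_le q 8; omega
  have hq7Z : (7:ℤ) ≤ (q:ℤ) := by exact_mod_cast hq7
  have hqZpos : (0:ℤ) < (q:ℤ) := by linarith
  have hqprime : Prime (q:ℤ) := Nat.prime_iff_prime_int.mp Fact.out
  have hneg1 : ¬ IsSquare (-1 : ZMod q) := by
    rw [ZMod.exists_sq_eq_neg_one_iff]; omega
  have hnormZ : c ^ 2 - 2*q*d ^ 2 = 1 ∨ c ^ 2 - 2*q*d ^ 2 = -1 := by
    rcases hnorm with h1 | h1
    · left; exact_mod_cast h1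
    · right; exact_mod_cast h1
  have hN : c ^ 2 - 2*q*d ^ 2 = 1 := by
    rcases hnormZ with h1 | h1
    · exact h1
    · exfalso
      apply hneg1
      have h3 := congrArg (fun z : ℤ => (z : ZMod q)) h1
      push_cast [ZMod.natCast_self] at h3
      exact ⟨(c : ZMod q), by linear_combination -h3⟩
  push_cast at hgt hmin ⊢
  set S : ℝ := Real.sqrt (2 * (q:ℝ)) with hSdef
  have hSpos : 0 < S := Real.sqrt_pos.mpr (by positivity)
  have hS2 : S ^ 2 = 2 * (q:ℝ) := Real.sq_sqrt (by positivity)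
  have hNR : (c:ℝ) ^ 2 - 2*(q:ℝ)*(d:ℝ) ^ 2 = 1 := by exact_mod_cast hN
  have hconj : ((c:ℝ) + d * S) * ((c:ℝ) - d * S) = 1 := by
    linear_combination hNR - (d:ℝ)^2 * hS2
  have hpos2 : 0 < (c:ℝ) - d * S := by nlinarith [hgt]
  have hlt1 : (c:ℝ) - d * S < 1 := by nlinarith [hgt]
  have hc0 : 0 < c := by
    have : (0:ℝ) < c := by nlinarith
    exact_mod_cast this
  have hd0 : 0 < d := by
    have hds : 0 < (d:ℝ) * S := by nlinarith
    have : (0:ℝ) < d := by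
      by_contra hle
      push_neg at hle
      nlinarith
    exact_mod_cast this
  have hc4 : 4 ≤ c := by nlinarith [hN, hq7Z, hd0, hc0, sq_nonneg d]
  -- c is odd
  have hcodd : Odd c := by
    rcases Int.even_or_odd c with hc | hc
    · exfalso
      have h1 : Even (1:ℤ) := by
        rw [← hN]
        exact (Int.even_pow.mpr ⟨hc, two_ne_zero⟩).sub ⟨q * d ^ 2, by ring⟩
      norm_num at h1
    · exact hc
  obtain ⟨k, hk⟩ := hcodd
  have hqoddZ : Odd (q:ℤ) := by exact_mod_cast Nat.odd_iff.mpr (by omega : q % 2 = 1)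
  -- d is even
  have hdeven : Even d := by
    rcases Int.even_or_odd d with hd | hd
    · exact hd
    · exfalso
      obtain ⟨m, hm⟩ := Int.even_mul_succ_self k
      have h4' : (2:ℤ) * (q * d ^ 2) = 2 * (4 * m) := by
        linear_combination -hN + (c + 2*k + 1)*hk + 4*hm
      have h4 := mul_left_cancel₀ (two_ne_zero : (2:ℤ) ≠ 0) h4'
      have hodd : Odd (q * d ^ 2) := hqoddZ.mul hd.pow
      rw [h4] at hodd
      obtain ⟨t, ht⟩ := hodd
      omega
  obtain ⟨e, he⟩ := hdeven
  have h2qne : (2*(q:ℤ)) ≠ 0 := by positivity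
  have key : (k+1) * k = 2 * q * e ^ 2 := by
    have key4 : (4:ℤ) * ((k+1) * k) = 4 * (2 * q * e ^ 2) := by
      linear_combination hN - (c + 2*k + 1)*hk + 2*q*(d + e + e)*he
    exact mul_left_cancel₀ (by norm_num : (4:ℤ) ≠ 0) key4
  have hk2 : 2 ≤ k := by omega
  have he1 : 1 ≤ e := by omega
  have hcop : IsCoprime (k+1 : ℤ) k := ⟨1, -1, by ring⟩
  have hqdvd : (q:ℤ) ∣ (k+1) ∨ (q:ℤ) ∣ k := by
    refine hqprime.dvd_mul.mp ⟨2*e^2, by linear_combination key⟩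
  have h2dvd : (2:ℤ) ∣ (k+1) ∨ (2:ℤ) ∣ k := by omega
  rcases hqdvd with hqu | hqv
  · -- q ∣ k+1 : both subcases impossible
    exfalso
    have hcq : ((c : ZMod q)) = -1 := by
      obtain ⟨s, hs⟩ := hqu
      have h3 := congrArg (fun z : ℤ => (z : ZMod q))
        (show c + 1 = 2*(q:ℤ)*s by linear_combination hk + 2*hs)
      push_cast [ZMod.natCast_self] at h3
      linear_combination h3
    rcases h2dvd with h2u | h2v
    · -- q ∣ k+1, 2 ∣ k+1 : then k = v₁² and v₁² ≡ -1 mod q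
      apply hneg1
      obtain ⟨a, ha⟩ := h2u
      have hqa : (q:ℤ) ∣ a := by
        rcases hqprime.dvd_mul.mp (show (q:ℤ) ∣ 2*a from ha ▸ hqu) with hdd | hdd
        · exfalso; have := Int.le_of_dvd (by norm_num) hdd; linarith
        · exact hdd
      obtain ⟨s, hs⟩ := hqa
      have hsk : k * s = e ^ 2 := by
        refine mul_left_cancel₀ h2qne ?_
        linear_combination key - k*ha - 2*k*hs
      have hsdvd : s ∣ (k+1 : ℤ) := ⟨2*q, by linear_combination ha + 2*hs⟩
      have hcops : IsCoprime (k : ℤ) s :=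
        hcop.symm.of_isCoprime_of_dvd_right hsdvd
      obtain ⟨v₁, hv₁0, hv₁⟩ := sq_help hcops hsk (by omega)
      have h3 := congrArg (fun z : ℤ => (z : ZMod q))
        (show c = 2*v₁^2 + 1 by linear_combination hk + 2*hv₁)
      push_cast at h3
      rw [hcq] at h3
      have h5 : (2:ZMod q) * ((v₁:ZMod q)^2 + 1) = 0 := by linear_combination -h3
      have h2ne : (2:ZMod q) ≠ 0 := by
        intro hcon
        have hcon2 : ((2:ℕ) : ZMod q) = 0 := by exact_mod_cast hcon
        rw [ZMod.natCast_eq_zero_iff] at hcon2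
        have := Nat.le_of_dvd (by norm_num) hcon2
        omega
      have h6 := (mul_eq_zero.mp h5).resolve_left h2ne
      exact ⟨(v₁ : ZMod q), by linear_combination -h6⟩
    · -- q ∣ k+1, 2 ∣ k : then (2t₁)² ≡ -2 mod q, impossible
      obtain ⟨t, ht⟩ := h2v
      obtain ⟨s, hs⟩ := hqu
      have hns2 : ¬ IsSquare (-2 : ZMod q) := by
        rw [ZMod.exists_sq_eq_neg_two_iff (by omega : q ≠ 2)]; omega
      apply hns2
      have hst : t * s = e ^ 2 := by
        refine mul_left_cancel₀ h2qne ?_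
        linear_combination key - k*hs - q*s*ht
      have htdvd : t ∣ (k : ℤ) := ⟨2, by linear_combination ht⟩
      have hcopt : IsCoprime (t : ℤ) s := by
        have h1 : IsCoprime (t:ℤ) (k+1) := hcop.symm.of_isCoprime_of_dvd_left htdvd
        exact h1.of_isCoprime_of_dvd_right ⟨q, by linear_combination hs⟩
      obtain ⟨t₁, ht₁0, ht₁⟩ := sq_help hcopt hst (by omega)
      have h3 := congrArg (fun z : ℤ => (z : ZMod q))
        (show c = 4*t₁^2 + 1 by linear_combination hk + 2*ht + 4*ht₁)
      push_cast at h3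
      rw [hcq] at h3
      exact ⟨2*(t₁ : ZMod q), by linear_combination h3⟩
  · rcases h2dvd with h2u | h2v
    · -- good case : 2 ∣ k+1, q ∣ k
      obtain ⟨s, hsa⟩ := h2u
      obtain ⟨t, hta⟩ := hqv
      have hst : s * t = e ^ 2 := by
        refine mul_left_cancel₀ h2qne ?_
        linear_combination key - k*hsa - 2*s*hta
      have hcopst : IsCoprime (s : ℤ) t := by
        have h1 : IsCoprime (s:ℤ) k := hcop.of_isCoprime_of_dvd_left ⟨2, by linear_combination hsa⟩
        exact h1.of_isCoprime_of_dvd_right ⟨q, by linear_combination hta⟩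
      have hspos : 0 < s := by omega
      have htpos : 0 < t := by
        rcases le_or_gt t 0 with h5 | h5
        · exfalso
          have h6 : (q:ℤ)*t ≤ 0 := mul_nonpos_of_nonneg_of_nonpos (by positivity) h5
          linarith
        · exact h5
      obtain ⟨s₁, hs₁0, hs₁⟩ := sq_help hcopst hst hspos
      obtain ⟨t₁, ht₁0, ht₁⟩ := sq_help hcopst.symm (show t * s = e^2 by linear_combination hst) htpos
      have he2 : e = s₁ * t₁ := by
        have hsq : e^2 = (s₁*t₁)^2 := by linear_combination -hst + t*hs₁ + s₁^2*ht₁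
        have h0 : (e - s₁*t₁) * (e + s₁*t₁) = 0 := by linear_combination hsq
        rcases mul_eq_zero.mp h0 with h5 | h5
        · linarith
        · exfalso; linarith [mul_nonneg hs₁0 ht₁0]
      have A1 : c + 1 = (2*s₁)^2 := by linear_combination hk + 2*hsa + 4*hs₁
      have A2 : c - 1 = 2*q*t₁^2 := by linear_combination hk + 2*hta + 2*q*ht₁
      have hdZ : d = 2*s₁*t₁ := by linear_combination he + 2*he2
      constructor
      · refine ⟨(2*s₁).toNat, ?_⟩
        rw [Int.toNat_of_nonneg (by linarith : (0:ℤ) ≤ 2*s₁)]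
        exact A1
      · refine ⟨2*s₁, t₁, by linear_combination hdZ, ?_, by linear_combination A1 - A2⟩
        have A1R : (c:ℝ) + 1 = (2*(s₁:ℝ))^2 := by exact_mod_cast A1
        have A2R : (c:ℝ) - 1 = 2*(q:ℝ)*(t₁:ℝ)^2 := by exact_mod_cast A2
        have hdR : (d:ℝ) = 2*(s₁:ℝ)*(t₁:ℝ) := by exact_mod_cast hdZ
        push_cast
        linear_combination (-(t₁:ℝ)^2)*hS2 + A1R + A2R + 2*S*hdR
    · -- 2 ∣ k, q ∣ k : contradicts minimality
      exfalso
      obtain ⟨a, ha⟩ := h2v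
      have hqa : (q:ℤ) ∣ a := by
        rcases hqprime.dvd_mul.mp (show (q:ℤ) ∣ 2*a from ha ▸ hqv) with hdd | hdd
        · exfalso; have := Int.le_of_dvd (by norm_num) hdd; linarith
        · exact hdd
      obtain ⟨t, hs⟩ := hqa
      have hkt : k = 2*(q:ℤ)*t := by linear_combination ha + 2*hs
      have hut : (k+1) * t = e ^ 2 := by
        refine mul_left_cancel₀ h2qne ?_
        linear_combination key - (k+1)*hkt
      have hcoput : IsCoprime (k+1 : ℤ) t :=
        hcop.of_isCoprime_of_dvd_right ⟨2*q, by linear_combination hkt⟩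
      have htpos : 0 < t := by
        rcases le_or_gt t 0 with h5 | h5
        · exfalso
          have h6 : 2*(q:ℤ)*t ≤ 0 := mul_nonpos_of_nonneg_of_nonpos (by positivity) h5
          linarith
        · exact h5
      obtain ⟨u₁, hu₁0, hu₁⟩ := sq_help hcoput hut (by omega)
      obtain ⟨t₁, ht₁0, ht₁⟩ := sq_help hcoput.symm (show t * (k+1) = e^2 by linear_combination hut) htpos
      have hnormu : u₁^2 - 2*q*t₁^2 = 1 := by
        linear_combination -hu₁ + hkt + 2*q*ht₁
      have hu₁2 : 2 ≤ u₁ := by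
        by_contra h5
        push_neg at h5
        have h6 : u₁ * u₁ ≤ 1 * 1 := mul_le_mul (by omega) (by omega) hu₁0 (by norm_num)
        have h7 : u₁ ^ 2 ≤ 1 := by rw [pow_two]; linarith
        linarith
      have he2 : e = u₁ * t₁ := by
        have hsq : e^2 = (u₁*t₁)^2 := by linear_combination -hut + t*hu₁ + u₁^2*ht₁
        have h0 : (e - u₁*t₁) * (e + u₁*t₁) = 0 := by linear_combination hsq
        rcases mul_eq_zero.mp h0 with h5 | h5
        · linarith
        · exfalso; linarith [mul_nonneg hu₁0 ht₁0]
      have hQI : IsQuadInt (2*(q:ℤ)) (u₁ : ℚ) (t₁ : ℚ) := Or.inl ⟨u₁, t₁, rfl, rfl⟩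
      have hu₁R : (2:ℝ) ≤ (u₁:ℝ) := by exact_mod_cast hu₁2
      have ht₁R : (0:ℝ) ≤ (t₁:ℝ) := by exact_mod_cast ht₁0
      have hle := hmin (u₁:ℚ) (t₁:ℚ) hQI
        (Or.inl (by exact_mod_cast hnormu))
        (by push_cast; linarith [hu₁R, mul_nonneg ht₁R hSpos.le])
      push_cast at hle
      have hA : (c:ℝ) = (u₁:ℝ)^2 + 2*(q:ℝ)*(t₁:ℝ)^2 := by
        exact_mod_cast (show c = u₁^2 + 2*q*t₁^2 by linear_combination hk + hu₁ + hkt + 2*q*ht₁)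
      have hB : (d:ℝ) = 2*(u₁:ℝ)*(t₁:ℝ) := by
        exact_mod_cast (show d = 2*u₁*t₁ by linear_combination he + 2*he2)
      have hsqR : ((u₁:ℝ) + t₁*S)^2 = (c:ℝ) + d*S := by
        linear_combination (t₁:ℝ)^2*hS2 - hA - S*hB
      exact lt_self_sq_contra (lt_of_lt_of_le hgt hle) hle hsqR
end
end

section
/- Let q ≡ 7 (mod 8) be a prime and write the fundamental unit ε_q = α + β√q of Q(√q) with integers α, β. Then α + 1 is a perfect square in ℕ, and there exist integers β₁, β₂ with β = β₁·β₂ such that 2ε_q = (β₁ + β₂√q)² and 2 = β₁² − q·β₂². -/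
set_option maxHeartbeats 1000000


noncomputable section

/-- Coprime factorization of a square: both factors are squares. -/
lemma aux_factor (m n c : ℤ) (hm : 0 ≤ m) (hn : 0 ≤ n) (hco : IsCoprime m n)
    (h : m * n = c ^ 2) :
    ∃ a b : ℤ, 0 ≤ a ∧ 0 ≤ b ∧ m = a ^ 2 ∧ n = b ^ 2 ∧ a * b = |c| := by
  obtain ⟨a0, ha⟩ := Int.sq_of_isCoprime hco h
  obtain ⟨b0, hb⟩ := Int.sq_of_isCoprime hco.symm (by rw [mul_comm]; exact h)
  have hma : m = a0 ^ 2 := by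
    rcases ha with h' | h'
    · exact h'
    · have h0 : a0 ^ 2 = 0 := le_antisymm (by linarith) (sq_nonneg _)
      rw [h', h0]; simp
  have hnb : n = b0 ^ 2 := by
    rcases hb with h' | h'
    · exact h'
    · have h0 : b0 ^ 2 = 0 := le_antisymm (by linarith) (sq_nonneg _)
      rw [h', h0]; simp
  refine ⟨|a0|, |b0|, abs_nonneg _, abs_nonneg _, by rw [sq_abs]; exact hma,
    by rw [sq_abs]; exact hnb, ?_⟩
  have hsq : (|a0| * |b0|) ^ 2 = c ^ 2 := by
    rw [mul_pow, sq_abs, sq_abs, ← hma, ← hnb, h]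
  have := (sq_eq_sq_iff_abs_eq_abs _ _).mp hsq
  rwa [abs_of_nonneg (by positivity : (0:ℤ) ≤ |a0| * |b0|)] at this

/-- If `q ≡ 7 (mod 8)` is prime and `ε_q = α + β√q` is the fundamental unit of
`ℚ(√q)` with `α, β ∈ ℤ`, then `α + 1` is a perfect square and there are integers
`β₁, β₂` with `β = β₁β₂`, `2ε_q = (β₁ + β₂√q)²` and `2 = β₁² − q·β₂²`. -/
theorem sqrt_two_eps_q (q : ℕ) [Fact q.Prime] (hq : q % 8 = 7)
    (α β : ℤ) (h : IsFundUnit q (α : ℚ) (β : ℚ)) :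
    (∃ n : ℕ, α + 1 = (n : ℤ) ^ 2) ∧
    ∃ β₁ β₂ : ℤ, β = β₁ * β₂ ∧
      2 * ((α : ℝ) + (β : ℝ) * Real.sqrt q) =
        ((β₁ : ℝ) + (β₂ : ℝ) * Real.sqrt q) ^ 2 ∧
      (2 : ℤ) = β₁ ^ 2 - q * β₂ ^ 2 := by
  obtain ⟨-, hnormQ, hgt, hmin⟩ := h
  have hq7 : 7 ≤ q := by omega
  have hqZ : Prime (q : ℤ) := Nat.prime_iff_prime_int.mp Fact.out
  have hqZ0 : (q : ℤ) ≠ 0 := by positivity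
  -- the norm is 1, not -1
  have hnorm : α ^ 2 - (q : ℤ) * β ^ 2 = 1 := by
    rcases hnormQ with h1 | h1
    · exact_mod_cast h1
    · exfalso
      have h2 : α ^ 2 - (q : ℤ) * β ^ 2 = -1 := by exact_mod_cast h1
      have h4 : ((α : ZMod 4)) ^ 2 - (q : ZMod 4) * (β : ZMod 4) ^ 2 = -1 := by
        have := congrArg (fun z : ℤ => (z : ZMod 4)) h2
        push_cast at this
        exact this
      have hq4 : (q : ZMod 4) = 3 := by
        have h43 : q % 4 = 3 := by omega
        rw [show ((q : ℕ) : ZMod 4) = ((q % 4 : ℕ) : ZMod 4) from (ZMod.natCast_mod q 4).symm,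
          h43]
        rfl
      rw [hq4] at h4
      have : ∀ x y : ZMod 4, x ^ 2 - 3 * y ^ 2 ≠ -1 := by decide
      exact this _ _ h4
  -- real setup
  obtain ⟨r, hr⟩ : ∃ r : ℝ, r = Real.sqrt q := ⟨_, rfl⟩
  have hqR : (7:ℝ) ≤ (q:ℝ) := by exact_mod_cast hq7
  have hr2 : r ^ 2 = q := by rw [hr]; exact Real.sq_sqrt (by positivity)
  have hrpos : 0 < r := by rw [hr]; exact Real.sqrt_pos.mpr (by linarith)
  have hgt' : 1 < (α : ℝ) + (β : ℝ) * r := by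
    rw [hr]; exact_mod_cast hgt
  have hnR : ((α : ℝ) + β * r) * ((α : ℝ) - β * r) = 1 := by
    have hc : ((α : ℝ)) ^ 2 - (q : ℝ) * (β : ℝ) ^ 2 = 1 := by exact_mod_cast hnorm
    linear_combination hc - (β:ℝ) ^ 2 * hr2
  have hfpos : 0 < (α : ℝ) - β * r := by nlinarith
  have hflt : (α : ℝ) - β * r < 1 := by nlinarith
  have hβpos : 0 < β := by
    have hb : (0 : ℝ) < (β : ℝ) := by nlinarith
    exact_mod_cast hb
  have hαpos : 1 ≤ α := by
    have ha : (0 : ℝ) < (α : ℝ) := by nlinarith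
    exact_mod_cast ha
  have hα2 : 2 ≤ α := by nlinarith [hnorm, hβpos, hq7]
  -- β must be odd
  rcases Int.even_or_odd β with ⟨c, hc⟩ | ⟨k0, hk0⟩
  · -- even case: contradiction with minimality
    exfalso
    have hαodd : ∃ k : ℤ, α = 2 * k + 1 := by
      rcases Int.even_or_odd α with ⟨j, hj⟩ | ⟨k, hk⟩
      · exfalso
        have h2 : 4 * j ^ 2 - (q:ℤ) * (4 * c ^ 2) = 1 := by
          rw [hj, hc] at hnorm; ring_nf at hnorm ⊢; linarith
        have h3 : 4 * (j ^ 2) - 4 * ((q:ℤ) * c ^ 2) = 1 := by ring_nf; ring_nf at h2; linarith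
        generalize j ^ 2 = J at h3
        generalize (q:ℤ) * c ^ 2 = C at h3
        omega
      · exact ⟨k, hk⟩
    obtain ⟨k, hkα⟩ := hαodd
    have hkpos : 1 ≤ k := by omega
    have hcpos : 0 < c := by omega
    have hk1 : k * (k + 1) = (q : ℤ) * c ^ 2 := by
      have h4 : 4 * (k * (k + 1)) = 4 * ((q : ℤ) * c ^ 2) := by
        rw [hkα, hc] at hnorm; ring_nf at hnorm ⊢; linarith
      linarith
    have hco : IsCoprime k (k + 1) := ⟨-1, 1, by ring⟩
    have hdvd : (q : ℤ) ∣ k ∨ (q : ℤ) ∣ (k + 1) :=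
      hqZ.dvd_mul.mp ⟨c ^ 2, hk1⟩
    obtain ⟨s, t, hs, ht, hα', hβ'⟩ :
        ∃ s t : ℤ, 0 ≤ s ∧ 0 ≤ t ∧ s ^ 2 + (q:ℤ) * t ^ 2 = α ∧ 2 * (s * t) = β := by
      rcases hdvd with ⟨k', hk'⟩ | ⟨n', hn'⟩
      · have hmul : k' * (k + 1) = c ^ 2 := by
          apply mul_left_cancel₀ hqZ0
          rw [← hk1, hk']; ring
        have hk'nn : 0 ≤ k' := by nlinarith
        have hco' : IsCoprime k' (k + 1) :=
          IsCoprime.of_isCoprime_of_dvd_left hco ⟨(q:ℤ), by rw [hk']; ring⟩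
        obtain ⟨a, b, ha0, hb0, hma, hnb, hab⟩ :=
          aux_factor k' (k + 1) c hk'nn (by omega) hco' hmul
        rw [abs_of_pos hcpos] at hab
        refine ⟨b, a, hb0, ha0, ?_, ?_⟩
        · rw [← hnb, ← hma]
          rw [hk'] at hkα
          linarith [hkα]
        · rw [hc]; rw [← hab]; ring
      · have hmul : k * n' = c ^ 2 := by
          apply mul_left_cancel₀ hqZ0
          calc (q:ℤ) * (k * n') = k * ((q:ℤ) * n') := by ring
          _ = k * (k + 1) := by rw [← hn']
          _ = (q:ℤ) * c ^ 2 := hk1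
        have hn'nn : 0 ≤ n' := by nlinarith
        have hco' : IsCoprime k n' :=
          IsCoprime.of_isCoprime_of_dvd_right hco ⟨(q:ℤ), by rw [hn']; ring⟩
        obtain ⟨b, a, hb0, ha0, hmb, hna, hab⟩ :=
          aux_factor k n' c (by omega) hn'nn hco' hmul
        rw [abs_of_pos hcpos] at hab
        refine ⟨b, a, hb0, ha0, ?_, ?_⟩
        · have hq1 : (q:ℤ) * a ^ 2 = k + 1 := by rw [← hna, ← hn']
          have := hmb
          linarith [hkα]
        · rw [hc]; rw [← hab]; ring
    -- now derive the contradiction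
    have hx2 : ((s : ℝ) + t * r) ^ 2 = (α : ℝ) + β * r := by
      have h1 : (s:ℝ) ^ 2 + (q:ℝ) * (t:ℝ) ^ 2 = (α : ℝ) := by exact_mod_cast hα'
      have h2 : 2 * ((s:ℝ) * (t:ℝ)) = (β : ℝ) := by exact_mod_cast hβ'
      linear_combination h1 + r * h2 + (t:ℝ) ^ 2 * hr2
    have hxpos : (0:ℝ) ≤ (s : ℝ) + t * r := by
      have : (0:ℝ) ≤ (s:ℝ) := by exact_mod_cast hs
      have : (0:ℝ) ≤ (t:ℝ) := by exact_mod_cast ht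
      nlinarith
    have hxgt : 1 < (s : ℝ) + t * r := by nlinarith
    have hst : (s ^ 2 - (q:ℤ) * t ^ 2) * (s ^ 2 - (q:ℤ) * t ^ 2) = 1 := by
      have hnorm' := hnorm
      rw [← hα', ← hβ'] at hnorm'
      linear_combination hnorm'
    have hstn : s ^ 2 - (q:ℤ) * t ^ 2 = 1 ∨ s ^ 2 - (q:ℤ) * t ^ 2 = -1 :=
      mul_self_eq_one_iff.mp hst
    have hle := hmin (s : ℚ) (t : ℚ) (Or.inl ⟨s, t, rfl, rfl⟩)
      (by rcases hstn with h' | h'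
          · left; exact_mod_cast h'
          · right; exact_mod_cast h')
      (by push_cast; rw [← hr]; exact hxgt)
    push_cast at hle
    rw [← hr] at hle
    nlinarith [hle, hx2, hxgt]
  · -- odd case
    have hβodd : β = 2 * k0 + 1 := hk0
    have hαeven : ∃ k : ℤ, α = 2 * k := by
      rcases Int.even_or_odd α with ⟨j, hj⟩ | ⟨k, hk⟩
      · exact ⟨j, by omega⟩
      · exfalso
        have h2 : 4 * (k ^ 2 + k) - (q:ℤ) * (4 * (k0 ^ 2 + k0) + 1) = 0 := by
          rw [hk, hβodd] at hnorm; ring_nf at hnorm ⊢; linarith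
        have h3 : (4:ℤ) ∣ (q:ℤ) :=
          ⟨k ^ 2 + k - (q:ℤ) * (k0 ^ 2 + k0), by linarith⟩
        have : (4:ℕ) ∣ q := by exact_mod_cast h3
        omega
    obtain ⟨k, hkα⟩ := hαeven
    have hprod : (α - 1) * (α + 1) = (q:ℤ) * β ^ 2 := by linear_combination hnorm
    have hco : IsCoprime (α - 1) (α + 1) := by
      refine ⟨k, 1 - k, ?_⟩
      rw [hkα]; ring
    have hdvd : (q : ℤ) ∣ (α - 1) ∨ (q : ℤ) ∣ (α + 1) :=
      hqZ.dvd_mul.mp ⟨β ^ 2, hprod⟩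
    rcases hdvd with ⟨m', hm'⟩ | ⟨n', hn'⟩
    · -- q ∣ α - 1 : the good case
      have hmul : m' * (α + 1) = β ^ 2 := by
        apply mul_left_cancel₀ hqZ0
        calc (q:ℤ) * (m' * (α + 1)) = ((q:ℤ) * m') * (α + 1) := by ring
        _ = (α - 1) * (α + 1) := by rw [← hm']
        _ = (q:ℤ) * β ^ 2 := hprod
      have hm'nn : 0 ≤ m' := by nlinarith
      have hco' : IsCoprime m' (α + 1) :=
        IsCoprime.of_isCoprime_of_dvd_left hco ⟨(q:ℤ), by rw [hm']; ring⟩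
      obtain ⟨a, b, ha0, hb0, hma, hnb, hab⟩ :=
        aux_factor m' (α + 1) β hm'nn (by omega) hco' hmul
      rw [abs_of_pos hβpos] at hab
      constructor
      · exact ⟨b.toNat, by rw [Int.toNat_of_nonneg hb0]; omega⟩
      · refine ⟨b, a, by rw [← hab]; ring, ?_, ?_⟩
        · have h1 : ((b:ℝ)) ^ 2 = (α : ℝ) + 1 := by exact_mod_cast congrArg (Int.cast : ℤ → ℝ) hnb.symm
          have h2z : (q:ℤ) * a ^ 2 = α - 1 := by rw [← hma]; exact hm'.symm
          have h2 : (q:ℝ) * (a:ℝ) ^ 2 = (α : ℝ) - 1 := by exact_mod_cast h2z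
          have h3 : (a:ℝ) * (b:ℝ) = (β : ℝ) := by exact_mod_cast congrArg (Int.cast : ℤ → ℝ) hab
          rw [← hr]
          linear_combination (-1:ℝ) * h1 + (-1:ℝ) * h2 + (-2*r) * h3 + (-(a:ℝ)^2) * hr2
        · have : (q:ℤ) * a ^ 2 = α - 1 := by rw [← hma, ← hm']
          omega
    · -- q ∣ α + 1 : impossible, -2 would be a square mod q
      exfalso
      have hmul : (α - 1) * n' = β ^ 2 := by
        apply mul_left_cancel₀ hqZ0
        calc (q:ℤ) * ((α - 1) * n') = (α - 1) * ((q:ℤ) * n') := by ring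
        _ = (α - 1) * (α + 1) := by rw [← hn']
        _ = (q:ℤ) * β ^ 2 := hprod
      have hn'nn : 0 ≤ n' := by nlinarith
      have hco' : IsCoprime (α - 1) n' :=
        IsCoprime.of_isCoprime_of_dvd_right hco ⟨(q:ℤ), by rw [hn']; ring⟩
      obtain ⟨b, a, hb0, ha0, hmb, hna, hab⟩ :=
        aux_factor (α - 1) n' β (by omega) hn'nn hco' hmul
      have hbq : b ^ 2 = (q:ℤ) * a ^ 2 - 2 := by
        have : (q:ℤ) * a ^ 2 = α + 1 := by rw [← hna, ← hn']
        omega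
      have hsq : IsSquare (-2 : ZMod q) := by
        refine ⟨(b : ZMod q), ?_⟩
        have := congrArg (fun z : ℤ => (z : ZMod q)) hbq
        push_cast at this
        rw [ZMod.natCast_self] at this
        have h0 : ((b : ZMod q)) ^ 2 = -2 := by rw [this]; ring
        rw [← h0]; ring
      have hq2 : q ≠ 2 := by omega
      have := (ZMod.exists_sq_eq_neg_two_iff (p := q) hq2).mp hsq
      omega
end
end

section
/- Let p ≡ 1 (mod 8) and q ≡ 7 (mod 8) be primes with (p/q) = −1. If x, y are integers with x² − 2pq·y² = 1 and x ≥ 2, then the system x − 1 = p·y₁², x + 1 = 2q·y₂² has no solution in integers y₁, y₂; likewise the system x + 1 = p·y₁², x − 1 = 2q·y₂² has no integer solution. -/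
/-!
Modulo `p`, either system gives `2q·y₂² ≡ ±2`. Since `p ≡ 1 (mod 8)`, both `2` and `-2` are
squares mod `p`, so `2q` would be a square mod `p`. But `(2/p) = 1`, and quadratic reciprocity
turns `(p/q) = -1` into `(q/p) = -1`, so `(2q/p) = -1`.
-/

namespace legendreSym

variable {p : ℕ} [Fact p.Prime]

theorem ne_neg_one_of_mul_sq_modEq {a b c : ℤ} (h : a * b ^ 2 ≡ c [ZMOD p])
    (hc : legendreSym p c = 1) : legendreSym p a ≠ -1 := by
  intro ha
  have hab : legendreSym p (a * b ^ 2) = 1 := by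
    rw [legendreSym.mod, h, ← legendreSym.mod, hc]
  rw [legendreSym.mul, sq, legendreSym.mul, ha] at hab
  nlinarith [sq_nonneg (legendreSym p b)]

theorem at_two_of_mod_eight_eq_one (hp : p % 8 = 1) : legendreSym p 2 = 1 := by
  rw [at_two (by omega), ZMod.χ₈_nat_eq_if_mod_eight, if_neg (by omega), if_pos (by omega)]

theorem at_neg_two_of_mod_eight_eq_one (hp : p % 8 = 1) : legendreSym p (-2) = 1 := by
  rw [at_neg_two (by omega), ZMod.χ₈'_nat_eq_if_mod_eight, if_neg (by omega), if_pos (by omega)]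

end legendreSym

theorem no_mixed_factorization_general (p q : ℕ) [Fact p.Prime] [Fact q.Prime]
    (hp : p % 8 = 1) (hq : q % 8 = 7) (hleg : legendreSym q p = -1)
    (x : ℤ) :
    (¬ ∃ y₁ y₂ : ℤ, x - 1 = p * y₁ ^ 2 ∧ x + 1 = 2 * q * y₂ ^ 2) ∧
    (¬ ∃ y₁ y₂ : ℤ, x + 1 = p * y₁ ^ 2 ∧ x - 1 = 2 * q * y₂ ^ 2) := by
  have h2q : legendreSym p (2 * q) = -1 := by
    rw [legendreSym.mul, legendreSym.at_two_of_mod_eight_eq_one hp,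
      ← legendreSym.quadratic_reciprocity_one_mod_four (by omega) (by omega), hleg, one_mul]
  constructor
  · rintro ⟨y₁, y₂, h₁, h₂⟩
    refine legendreSym.ne_neg_one_of_mul_sq_modEq (b := y₂) ?_
      (legendreSym.at_two_of_mod_eight_eq_one hp) h2q
    exact Int.modEq_iff_dvd.mpr ⟨-y₁ ^ 2, by linear_combination h₂ - h₁⟩
  · rintro ⟨y₁, y₂, h₁, h₂⟩
    refine legendreSym.ne_neg_one_of_mul_sq_modEq (b := y₂) ?_
      (legendreSym.at_neg_two_of_mod_eight_eq_one hp) h2q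
    exact Int.modEq_iff_dvd.mpr ⟨-y₁ ^ 2, by linear_combination h₂ - h₁⟩

/-- For primes `p ≡ 1 (mod 8)`, `q ≡ 7 (mod 8)` with `(p/q) = −1`, and integers
`x, y` with `x² − 2pq·y² = 1` and `x ≥ 2`, neither the system
`x − 1 = p·y₁², x + 1 = 2q·y₂²` nor the system `x + 1 = p·y₁², x − 1 = 2q·y₂²`
has an integer solution. -/
theorem no_mixed_factorization (p q : ℕ) [Fact p.Prime] [Fact q.Prime]
    (hp : p % 8 = 1) (hq : q % 8 = 7) (hleg : legendreSym q p = -1)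
    (x y : ℤ) (hPell : x ^ 2 - 2 * p * q * y ^ 2 = 1) (hx : 2 ≤ x) :
    (¬ ∃ y₁ y₂ : ℤ, x - 1 = p * y₁ ^ 2 ∧ x + 1 = 2 * q * y₂ ^ 2) ∧
    (¬ ∃ y₁ y₂ : ℤ, x + 1 = p * y₁ ^ 2 ∧ x - 1 = 2 * q * y₂ ^ 2) :=
  no_mixed_factorization_general p q hp hq hleg x
end

section
/- Let p ≡ 1 (mod 8) and q ≡ 7 (mod 8) be primes with (p/q) = −1. If x, y₁, y₂ are positive integers with x − 1 = y₁² and x + 1 = 2pq·y₂², then a contradiction follows; that is, the system x − 1 = y₁², x + 1 = 2pq·y₂² has no solution in positive integers. -/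
/-- For primes `p ≡ 1 (mod 8)`, `q ≡ 7 (mod 8)` with `(p/q) = −1`, the system
`x − 1 = y₁²`, `x + 1 = 2pq·y₂²` has no solution in positive integers. -/
theorem no_solution_x_sub_one_sq (p q : ℕ) [Fact p.Prime] [Fact q.Prime]
    (hp : p % 8 = 1) (hq : q % 8 = 7) (hleg : legendreSym q p = -1)
    (x y₁ y₂ : ℤ) (hx : 0 < x) (hy₁ : 0 < y₁) (hy₂ : 0 < y₂)
    (h1 : x - 1 = y₁ ^ 2) (h2 : x + 1 = 2 * p * q * y₂ ^ 2) : False := by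
  have hxq : ((x : ZMod q)) = -1 := by
    have := congrArg (fun z : ℤ => (z : ZMod q)) h2
    push_cast at this
    simp [ZMod.natCast_self] at this
    linear_combination this
  have hsq : ((y₁ : ZMod q))^2 = -2 := by
    have := congrArg (fun z : ℤ => (z : ZMod q)) h1
    push_cast at this
    rw [hxq] at this
    linear_combination -this
  have : IsSquare (-2 : ZMod q) := ⟨(y₁ : ZMod q), by rw [← hsq]; ring⟩
  rw [ZMod.exists_sq_eq_neg_two_iff (by omega)] at this
  omega
end

section
/- Let p ≡ 1 (mod 8) and q ≡ 7 (mod 8) be primes with (p/q) = 1, and write the fundamental unit ε_{2pq} = x + y√(2pq) of Q(√(2pq)) with integers x, y. Then exactly one of (x+1), p(x+1), 2p(x+1) is a perfect square in ℕ. -/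
noncomputable section

private lemma not_sq_aux (r s m : ℤ) (hr : Prime r) (hs : ¬ r ∣ s) (hm : m ≠ 0)
    (n : ℕ) (hEq : r * s * m ^ 2 = (n : ℤ) ^ 2) : False := by
  have hs0 : s ≠ 0 := fun h => hs (h ▸ dvd_zero r)
  have hN : r.natAbs * s.natAbs * m.natAbs ^ 2 = n ^ 2 := by
    have := congrArg Int.natAbs hEq
    simpa [Int.natAbs_mul, Int.natAbs_pow] using this
  have hrp : r.natAbs.Prime := Int.prime_iff_natAbs_prime.mp hr
  have hsd : ¬ r.natAbs ∣ s.natAbs := fun h => hs (Int.natAbs_dvd_natAbs.mp h)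
  have hR0 : r.natAbs ≠ 0 := hrp.ne_zero
  have hS0 : s.natAbs ≠ 0 := Int.natAbs_ne_zero.mpr hs0
  have hM0 : m.natAbs ≠ 0 := Int.natAbs_ne_zero.mpr hm
  have hn0 : n ≠ 0 := by
    rintro rfl
    exact (Nat.mul_ne_zero (Nat.mul_ne_zero hR0 hS0) (pow_ne_zero 2 hM0)) (by simpa using hN)
  have h1 : (r.natAbs * s.natAbs * m.natAbs ^ 2).factorization r.natAbs
      = 1 + 2 * m.natAbs.factorization r.natAbs := by
    rw [Nat.factorization_mul (Nat.mul_ne_zero hR0 hS0) (pow_ne_zero 2 hM0),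
      Nat.factorization_mul hR0 hS0, Nat.factorization_pow, hrp.factorization]
    simp [Nat.factorization_eq_zero_of_not_dvd hsd]
  have h2 : (n ^ 2).factorization r.natAbs = 2 * n.factorization r.natAbs := by
    rw [Nat.factorization_pow]; simp
  rw [hN, h2] at h1
  omega

private lemma decomp (a b z d1 d2 : ℤ) (hco : IsCoprime a b) (hd1 : d1 ∣ a) (hd2 : d2 ∣ b)
    (hab : a * b = d1 * d2 * z ^ 2) (h1 : 0 < d1) (h2 : 0 < d2) (ha : 0 < a) (hb : 0 < b) :
    ∃ m n : ℤ, 0 < m ∧ 0 < n ∧ a = d1 * m ^ 2 ∧ b = d2 * n ^ 2 := by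
  obtain ⟨a', rfl⟩ := hd1
  obtain ⟨b', rfl⟩ := hd2
  have h12 : d1 * d2 ≠ 0 := by positivity
  have hz : a' * b' = z ^ 2 := by
    apply mul_left_cancel₀ h12
    linear_combination hab
  have hco' : IsCoprime a' b' := (hco.of_mul_left_right).of_mul_right_right
  have ha' : 0 < a' := by nlinarith
  have hb' : 0 < b' := by nlinarith
  obtain ⟨m0, hm0⟩ := Int.sq_of_isCoprime hco' hz
  obtain ⟨n0, hn0⟩ := Int.sq_of_isCoprime hco'.symm (by linear_combination hz : b' * a' = z ^ 2)
  have hm2 : a' = m0 ^ 2 := by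
    rcases hm0 with h | h
    · exact h
    · nlinarith [sq_nonneg m0]
  have hn2 : b' = n0 ^ 2 := by
    rcases hn0 with h | h
    · exact h
    · nlinarith [sq_nonneg n0]
  refine ⟨|m0|, |n0|, ?_, ?_, ?_, ?_⟩
  · rw [abs_pos]; rintro rfl; rw [hm2] at ha'; simp at ha'
  · rw [abs_pos]; rintro rfl; rw [hn2] at hb'; simp at hb'
  · rw [sq_abs, ← hm2]
  · rw [sq_abs, ← hn2]

set_option maxHeartbeats 2000000 in
/-- For primes `p ≡ 1 (mod 8)`, `q ≡ 7 (mod 8)` with `(p/q) = 1` and fundamental unit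
`ε_{2pq} = x + y√(2pq)` of `ℚ(√(2pq))`, exactly one of `x+1`, `p(x+1)`, `2p(x+1)`
is a perfect square. -/
theorem exactly_one_square_2pq (p q : ℕ) [Fact p.Prime] [Fact q.Prime]
    (hp : p % 8 = 1) (hq : q % 8 = 7) (hleg : legendreSym q p = 1)
    (x y : ℤ) (h : IsFundUnit (2 * p * q) (x : ℚ) (y : ℚ)) :
    ((∃ n : ℕ, x + 1 = (n : ℤ) ^ 2) ∧ ¬ (∃ n : ℕ, p * (x + 1) = (n : ℤ) ^ 2) ∧
        ¬ (∃ n : ℕ, 2 * p * (x + 1) = (n : ℤ) ^ 2)) ∨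
    (¬ (∃ n : ℕ, x + 1 = (n : ℤ) ^ 2) ∧ (∃ n : ℕ, p * (x + 1) = (n : ℤ) ^ 2) ∧
        ¬ (∃ n : ℕ, 2 * p * (x + 1) = (n : ℤ) ^ 2)) ∨
    (¬ (∃ n : ℕ, x + 1 = (n : ℤ) ^ 2) ∧ ¬ (∃ n : ℕ, p * (x + 1) = (n : ℤ) ^ 2) ∧
        (∃ n : ℕ, 2 * p * (x + 1) = (n : ℤ) ^ 2)) := by
  obtain ⟨-, hnorm, hgt, hmin⟩ := h
  have hp' : p.Prime := Fact.out
  have hq' : q.Prime := Fact.out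
  have hp2 : 2 ≤ p := hp'.two_le
  have hq2 : 2 ≤ q := hq'.two_le
  have hpne2 : p ≠ 2 := by omega
  have hqne2 : q ≠ 2 := by omega
  have hpq : p ≠ q := by omega
  have hq4 : q % 4 = 3 := by omega
  have hpZ : Prime (p : ℤ) := Nat.prime_iff_prime_int.mp hp'
  have hqZ : Prime (q : ℤ) := Nat.prime_iff_prime_int.mp hq'
  have h2Z : Prime (2 : ℤ) := Int.prime_two
  have hp1 : (1 : ℤ) ≤ (p : ℤ) := by exact_mod_cast hp'.one_lt.le
  have hq1 : (1 : ℤ) ≤ (q : ℤ) := by exact_mod_cast hq'.one_lt.le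
  -- norm in ℤ
  have hnormZ : x ^ 2 - 2 * p * q * y ^ 2 = 1 ∨ x ^ 2 - 2 * p * q * y ^ 2 = -1 := by
    rcases hnorm with h1 | h1
    · left; exact_mod_cast h1
    · right; exact_mod_cast h1
  have hnorm1 : x ^ 2 - 2 * p * q * y ^ 2 = 1 := by
    rcases hnormZ with h1 | h1
    · exact h1
    exfalso
    have hc := congrArg (fun t : ℤ => (t : ZMod q)) h1
    push_cast at hc
    rw [ZMod.natCast_self q] at hc
    have : IsSquare (-1 : ZMod q) := ⟨(x : ZMod q), by linear_combination -hc⟩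
    exact (ZMod.exists_sq_eq_neg_one_iff.mp this) hq4
  -- real estimates
  push_cast at hgt hmin
  set S : ℝ := Real.sqrt (2 * (p : ℝ) * (q : ℝ)) with hSdef
  have hpqR : (1 : ℝ) < 2 * (p : ℝ) * (q : ℝ) := by
    have h1 : (2 : ℝ) ≤ (p : ℝ) := by exact_mod_cast hp2
    have h2 : (2 : ℝ) ≤ (q : ℝ) := by exact_mod_cast hq2
    nlinarith
  have hss : S ^ 2 = 2 * (p : ℝ) * (q : ℝ) := Real.sq_sqrt (by linarith)
  have hs1 : 1 < S := by
    nlinarith [hss, hpqR, Real.sqrt_nonneg (2 * (p : ℝ) * (q : ℝ))]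
  have hgt' : 1 < (x : ℝ) + y * S := hgt
  have hnR : (x : ℝ) ^ 2 - 2 * p * q * y ^ 2 = 1 := by exact_mod_cast hnorm1
  have hconj : ((x : ℝ) + y * S) * ((x : ℝ) - y * S) = 1 := by
    linear_combination hnR - (y : ℝ) ^ 2 * hss
  have hinv_pos : 0 < (x : ℝ) - y * S := by nlinarith
  have hinv_lt : (x : ℝ) - y * S < 1 := by nlinarith
  have hxR : (0 : ℝ) < x := by linarith
  have hx0 : 1 ≤ x := by exact_mod_cast hxR
  have hyR : (0 : ℝ) < y := by
    have h1 : (1 : ℝ) ≤ (x : ℝ) := by exact_mod_cast hx0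
    nlinarith
  have hy1 : 1 ≤ y := by exact_mod_cast hyR
  have hy2' : (1 : ℤ) ≤ y ^ 2 := by nlinarith
  have hpq1 : (1 : ℤ) ≤ (p : ℤ) * (q : ℤ) := by nlinarith
  have hx3 : 3 ≤ x ^ 2 := by nlinarith
  have hx2 : 2 ≤ x := by nlinarith
  -- x is odd
  have hxodd : ∃ c : ℤ, x = 2 * c + 1 := by
    rcases Int.even_or_odd x with ⟨c, hc⟩ | ⟨c, hc⟩
    · exfalso
      have h1 : x ^ 2 = 2 * (2 * c ^ 2) := by rw [hc]; ring
      have h2 : x ^ 2 = 1 + 2 * ((p : ℤ) * q * y ^ 2) := by linear_combination hnorm1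
      omega
    · exact ⟨c, hc⟩
  obtain ⟨c, hc⟩ := hxodd
  have hcpos : 1 ≤ c := by omega
  -- y is even
  have hpodd : ¬ (2 : ℤ) ∣ (p : ℤ) := by
    rw [show (2 : ℤ) = ((2 : ℕ) : ℤ) by norm_num, Int.natCast_dvd_natCast]
    omega
  have hqodd : ¬ (2 : ℤ) ∣ (q : ℤ) := by
    rw [show (2 : ℤ) = ((2 : ℕ) : ℤ) by norm_num, Int.natCast_dvd_natCast]
    omega
  obtain ⟨e, he⟩ := Int.even_mul_succ_self c
  have hyeven : (2 : ℤ) ∣ y := by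
    apply h2Z.dvd_of_dvd_pow (n := 2)
    have hdvd : (2 : ℤ) ∣ (p : ℤ) * q * y ^ 2 := by
      refine ⟨2 * e, mul_left_cancel₀ (show (2:ℤ) ≠ 0 by norm_num) ?_⟩
      linear_combination -hnorm1 + (x + 2 * c + 1) * hc + 4 * he
    rcases h2Z.dvd_mul.mp hdvd with hh | hh
    · rcases h2Z.dvd_mul.mp hh with hh' | hh'
      · exact absurd hh' hpodd
      · exact absurd hh' hqodd
    · exact hh
  obtain ⟨z, hz⟩ := hyeven
  have hzpos : 1 ≤ z := by omega
  -- product decomposition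
  have hAB : (c + 1) * c = 2 * (p : ℤ) * q * z ^ 2 := by
    apply mul_left_cancel₀ (show (4 : ℤ) ≠ 0 by norm_num)
    linear_combination hnorm1 - (x + 2 * c + 1) * hc + (2 * (p : ℤ) * q * (y + 2 * z)) * hz
  have hcoAB : IsCoprime (c + 1) c := ⟨1, -1, by ring⟩
  have hApos : 0 < c + 1 := by omega
  have hBpos : 0 < c := by omega
  have hpZpos : (0 : ℤ) < (p : ℤ) := by exact_mod_cast hp'.pos
  have hqZpos : (0 : ℤ) < (q : ℤ) := by exact_mod_cast hq'.pos
  -- coprimality of 2, p, q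
  have hc2p : IsCoprime (2 : ℤ) (p : ℤ) := by
    rw [show (2 : ℤ) = ((2 : ℕ) : ℤ) by norm_num, Int.isCoprime_iff_gcd_eq_one,
      Int.gcd_natCast_natCast]
    exact (Nat.coprime_primes Nat.prime_two hp').mpr (by omega)
  have hc2q : IsCoprime (2 : ℤ) (q : ℤ) := by
    rw [show (2 : ℤ) = ((2 : ℕ) : ℤ) by norm_num, Int.isCoprime_iff_gcd_eq_one,
      Int.gcd_natCast_natCast]
    exact (Nat.coprime_primes Nat.prime_two hq').mpr (by omega)
  have hcpq : IsCoprime ((p : ℤ)) (q : ℤ) := by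
    rw [Int.isCoprime_iff_gcd_eq_one, Int.gcd_natCast_natCast]
    exact (Nat.coprime_primes hp' hq').mpr hpq
  -- divisibility splits
  have hd2 : (2 : ℤ) ∣ (c + 1) * c := ⟨(p : ℤ) * q * z ^ 2, by linear_combination hAB⟩
  have hdp : (p : ℤ) ∣ (c + 1) * c := ⟨2 * (q : ℤ) * z ^ 2, by linear_combination hAB⟩
  have hdq : (q : ℤ) ∣ (c + 1) * c := ⟨2 * (p : ℤ) * z ^ 2, by linear_combination hAB⟩
  have hpnd2 : ¬ (p : ℤ) ∣ 2 := by
    rw [show (2 : ℤ) = ((2 : ℕ) : ℤ) by norm_num, Int.natCast_dvd_natCast]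
    intro hdvd
    have := Nat.le_of_dvd (by norm_num) hdvd
    omega
  have hp8 : ((p : ℕ) : ZMod 8) = 1 := by
    rw [← ZMod.natCast_mod p 8, hp]; norm_num
  have hq8 : ((q : ℕ) : ZMod 8) = 7 := by
    rw [← ZMod.natCast_mod q 8, hq]; norm_num
  rcases h2Z.dvd_mul.mp hd2 with h2A | h2B <;>
    rcases hpZ.dvd_mul.mp hdp with hpA | hpB <;>
      rcases hqZ.dvd_mul.mp hdq with hqA | hqB
  -- case 1: 2,p,q ∣ A : impossible mod 8
  · obtain ⟨m, n, hm, hn, hA, hB⟩ := decomp (c + 1) c z (2 * (p : ℤ) * q) 1 hcoAB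
      (((hc2q.mul_left hcpq).mul_dvd (hc2p.mul_dvd h2A hpA) hqA)) (one_dvd _)
      (by linear_combination hAB) (by positivity) one_pos hApos hBpos
    exfalso
    have hE : 2 * (p : ℤ) * q * m ^ 2 - n ^ 2 = 1 := by linear_combination hB - hA
    have h8 := congrArg (fun t : ℤ => (t : ZMod 8)) hE
    push_cast at h8
    rw [hp8, hq8] at h8
    exact (by decide : ∀ u v : ZMod 8, ¬(2 * 1 * 7 * u ^ 2 - v ^ 2 = 1)) _ _ h8
  -- case 2: 2,p ∣ A, q ∣ B : middle disjunct
  · obtain ⟨m, n, hm, hn, hA, hB⟩ := decomp (c + 1) c z (2 * (p : ℤ)) (q : ℤ) hcoAB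
      (hc2p.mul_dvd h2A hpA) hqB
      (by linear_combination hAB) (by positivity) hqZpos hApos hBpos
    have hXp1 : x + 1 = 4 * (p : ℤ) * m ^ 2 := by linear_combination hc + 2 * hA
    refine Or.inr (Or.inl ⟨?_, ⟨(2 * (p : ℤ) * m).toNat, ?_⟩, ?_⟩)
    · rintro ⟨n', hn'⟩
      exact not_sq_aux (p : ℤ) 1 (2 * m) hpZ hpZ.not_dvd_one
        (by linarith : (0:ℤ) < 2 * m).ne' n' (by linear_combination hn' - hXp1)
    · rw [Int.toNat_of_nonneg (by positivity)]
      linear_combination (p : ℤ) * hXp1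
    · rintro ⟨n', hn'⟩
      exact not_sq_aux 2 1 (2 * (p : ℤ) * m) h2Z (by decide)
        (mul_pos (by positivity : (0:ℤ) < 2 * (p:ℤ)) hm).ne' n'
        (by linear_combination hn' - 2 * (p : ℤ) * hXp1)
  -- case 3: 2,q ∣ A, p ∣ B : impossible, Legendre
  · obtain ⟨m, n, hm, hn, hA, hB⟩ := decomp (c + 1) c z (2 * (q : ℤ)) (p : ℤ) hcoAB
      (hc2q.mul_dvd h2A hqA) hpB
      (by linear_combination hAB) (by positivity) hpZpos hApos hBpos
    exfalso
    have hE : 2 * (q : ℤ) * m ^ 2 - (p : ℤ) * n ^ 2 = 1 := by linear_combination hB - hA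
    have hqn : ¬ (q : ℤ) ∣ n := by
      intro hdvd
      have hqB' : (q : ℤ) ∣ c := by
        rw [hB]; exact dvd_mul_of_dvd_right (dvd_pow hdvd two_ne_zero) _
      have := Int.isUnit_iff.mp (hcoAB.isUnit_of_dvd' hqA hqB')
      omega
    have hN : ((n : ℤ) : ZMod q) ≠ 0 := by
      rw [Ne, ZMod.intCast_zmod_eq_zero_iff_dvd]; exact hqn
    have h8 := congrArg (fun t : ℤ => (t : ZMod q)) hE
    push_cast at h8
    rw [ZMod.natCast_self q] at h8
    have hP : ((p : ℕ) : ZMod q) * ((n : ℤ) : ZMod q) ^ 2 = -1 := by linear_combination -h8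
    have h1 : ((n : ℤ) : ZMod q) * ((n : ℤ) : ZMod q)⁻¹ = 1 := mul_inv_cancel₀ hN
    have hsqr : IsSquare (-((p : ℕ) : ZMod q)) := by
      refine ⟨(((n : ℤ) : ZMod q))⁻¹, ?_⟩
      linear_combination (-(((n : ℤ) : ZMod q)⁻¹ ^ 2)) * hP +
        ((p : ℕ) : ZMod q) * (((n : ℤ) : ZMod q) * ((n : ℤ) : ZMod q)⁻¹ + 1) * h1
    have hne : ((-(p : ℤ) : ℤ) : ZMod q) ≠ 0 := by
      push_cast
      simp only [ne_eq, neg_eq_zero]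
      rw [ZMod.natCast_eq_zero_iff]
      intro hdvd
      exact hpq ((Nat.prime_dvd_prime_iff_eq hq' hp').mp hdvd).symm
    have hsqr' : IsSquare (((-(p : ℤ)) : ℤ) : ZMod q) := by push_cast; exact hsqr
    have hleg1 : legendreSym q (-(p : ℤ)) = 1 := (legendreSym.eq_one_iff q hne).mpr hsqr'
    have hχ : ZMod.χ₄ ((q : ℕ) : ZMod 4) = -1 := by
      rw [ZMod.χ₄_nat_eq_if_mod_four, if_neg (by omega), if_neg (by omega)]
    have hleg2 : legendreSym q (-(p : ℤ)) = -1 := by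
      rw [show -(p : ℤ) = -1 * (p : ℤ) by ring, legendreSym.mul,
        legendreSym.at_neg_one hqne2, hχ, hleg]
      norm_num
    exact absurd (hleg1.symm.trans hleg2) (by norm_num)
  -- case 4: 2 ∣ A, p,q ∣ B : first disjunct
  · obtain ⟨m, n, hm, hn, hA, hB⟩ := decomp (c + 1) c z 2 ((p : ℤ) * q) hcoAB
      h2A (hcpq.mul_dvd hpB hqB)
      (by linear_combination hAB) two_pos (by positivity) hApos hBpos
    have hXp1 : x + 1 = 4 * m ^ 2 := by linear_combination hc + 2 * hA
    refine Or.inl ⟨⟨(2 * m).toNat, ?_⟩, ?_, ?_⟩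
    · rw [Int.toNat_of_nonneg (by linarith : (0:ℤ) ≤ 2 * m)]
      linear_combination hXp1
    · rintro ⟨n', hn'⟩
      exact not_sq_aux (p : ℤ) 1 (2 * m) hpZ hpZ.not_dvd_one
        (by linarith : (0:ℤ) < 2 * m).ne' n' (by linear_combination hn' - (p : ℤ) * hXp1)
    · rintro ⟨n', hn'⟩
      exact not_sq_aux (p : ℤ) 2 (2 * m) hpZ hpnd2
        (by linarith : (0:ℤ) < 2 * m).ne' n' (by linear_combination hn' - 2 * (p : ℤ) * hXp1)
  -- case 5: p,q ∣ A, 2 ∣ B : impossible mod 8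
  · obtain ⟨m, n, hm, hn, hA, hB⟩ := decomp (c + 1) c z ((p : ℤ) * q) 2 hcoAB
      (hcpq.mul_dvd hpA hqA) h2B
      (by linear_combination hAB) (by positivity) two_pos hApos hBpos
    exfalso
    have hE : (p : ℤ) * q * m ^ 2 - 2 * n ^ 2 = 1 := by linear_combination hB - hA
    have h8 := congrArg (fun t : ℤ => (t : ZMod 8)) hE
    push_cast at h8
    rw [hp8, hq8] at h8
    exact (by decide : ∀ u v : ZMod 8, ¬(1 * 7 * u ^ 2 - 2 * v ^ 2 = 1)) _ _ h8
  -- case 6: p ∣ A, 2,q ∣ B : third disjunct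
  · obtain ⟨m, n, hm, hn, hA, hB⟩ := decomp (c + 1) c z (p : ℤ) (2 * (q : ℤ)) hcoAB
      hpA (hc2q.mul_dvd h2B hqB)
      (by linear_combination hAB) hpZpos (by positivity) hApos hBpos
    have hXp1 : x + 1 = 2 * (p : ℤ) * m ^ 2 := by linear_combination hc + 2 * hA
    refine Or.inr (Or.inr ⟨?_, ?_, ⟨(2 * (p : ℤ) * m).toNat, ?_⟩⟩)
    · rintro ⟨n', hn'⟩
      exact not_sq_aux 2 (p : ℤ) m h2Z hpodd hm.ne' n' (by linear_combination hn' - hXp1)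
    · rintro ⟨n', hn'⟩
      exact not_sq_aux 2 1 ((p : ℤ) * m) h2Z (by decide)
        (mul_pos hpZpos hm).ne' n' (by linear_combination hn' - (p : ℤ) * hXp1)
    · rw [Int.toNat_of_nonneg (by positivity)]
      linear_combination 2 * (p : ℤ) * hXp1
  -- case 7: q ∣ A, 2,p ∣ B : impossible, Legendre
  · obtain ⟨m, n, hm, hn, hA, hB⟩ := decomp (c + 1) c z (q : ℤ) (2 * (p : ℤ)) hcoAB
      hqA (hc2p.mul_dvd h2B hpB)
      (by linear_combination hAB) hqZpos (by positivity) hApos hBpos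
    exfalso
    have hE : (q : ℤ) * m ^ 2 - 2 * (p : ℤ) * n ^ 2 = 1 := by linear_combination hB - hA
    have hqn : ¬ (q : ℤ) ∣ n := by
      intro hdvd
      have hqB' : (q : ℤ) ∣ c := by
        rw [hB]; exact dvd_mul_of_dvd_right (dvd_pow hdvd two_ne_zero) _
      have := Int.isUnit_iff.mp (hcoAB.isUnit_of_dvd' hqA hqB')
      omega
    have hN : ((n : ℤ) : ZMod q) ≠ 0 := by
      rw [Ne, ZMod.intCast_zmod_eq_zero_iff_dvd]; exact hqn
    have h8 := congrArg (fun t : ℤ => (t : ZMod q)) hE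
    push_cast at h8
    rw [ZMod.natCast_self q] at h8
    have hP : 2 * ((p : ℕ) : ZMod q) * ((n : ℤ) : ZMod q) ^ 2 = -1 := by linear_combination -h8
    have h1 : ((n : ℤ) : ZMod q) * ((n : ℤ) : ZMod q)⁻¹ = 1 := mul_inv_cancel₀ hN
    have hsqr : IsSquare (-(2 * ((p : ℕ) : ZMod q))) := by
      refine ⟨(((n : ℤ) : ZMod q))⁻¹, ?_⟩
      linear_combination (-(((n : ℤ) : ZMod q)⁻¹ ^ 2)) * hP +
        2 * ((p : ℕ) : ZMod q) * (((n : ℤ) : ZMod q) * ((n : ℤ) : ZMod q)⁻¹ + 1) * h1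
    have hpne : ((p : ℕ) : ZMod q) ≠ 0 := by
      rw [Ne, ZMod.natCast_eq_zero_iff]
      intro hdvd
      exact hpq ((Nat.prime_dvd_prime_iff_eq hq' hp').mp hdvd).symm
    have h2ne : ((2 : ℕ) : ZMod q) ≠ 0 := by
      rw [Ne, ZMod.natCast_eq_zero_iff]
      intro hdvd
      have := Nat.le_of_dvd (by norm_num) hdvd
      omega
    have hne : ((-(2 * (p : ℤ)) : ℤ) : ZMod q) ≠ 0 := by
      push_cast
      simp only [ne_eq, neg_eq_zero]
      intro h0
      rcases mul_eq_zero.mp h0 with h0' | h0'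
      · exact h2ne (by push_cast; exact h0')
      · exact hpne h0'
    have hsqr' : IsSquare (((-(2 * (p : ℤ))) : ℤ) : ZMod q) := by push_cast; exact hsqr
    have hleg1 : legendreSym q (-(2 * (p : ℤ))) = 1 := (legendreSym.eq_one_iff q hne).mpr hsqr'
    have hχ : ZMod.χ₄ ((q : ℕ) : ZMod 4) = -1 := by
      rw [ZMod.χ₄_nat_eq_if_mod_four, if_neg (by omega), if_neg (by omega)]
    have hχ8 : ZMod.χ₈ ((q : ℕ) : ZMod 8) = 1 := by
      rw [ZMod.χ₈_nat_eq_if_mod_eight, if_neg (by omega), if_pos (by omega)]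
    have hleg2 : legendreSym q (-(2 * (p : ℤ))) = -1 := by
      rw [show -(2 * (p : ℤ)) = -1 * 2 * (p : ℤ) by ring, legendreSym.mul, legendreSym.mul,
        legendreSym.at_neg_one hqne2, legendreSym.at_two hqne2, hχ, hχ8, hleg]
      norm_num
    exact absurd (hleg1.symm.trans hleg2) (by norm_num)
  -- case 8: 2,p,q ∣ B : impossible, fundamentality
  · obtain ⟨m, n, hm, hn, hA, hB⟩ := decomp (c + 1) c z 1 (2 * (p : ℤ) * q) hcoAB
      (one_dvd _) ((hc2q.mul_left hcpq).mul_dvd (hc2p.mul_dvd h2B hpB) hqB)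
      (by linear_combination hAB) one_pos (by positivity) hApos hBpos
    exfalso
    have hE : m ^ 2 - 2 * (p : ℤ) * q * n ^ 2 = 1 := by linear_combination hB - hA
    have hz2 : (z - m * n) * (z + m * n) = 0 := by
      have h4 : 2 * (p : ℤ) * q * (z ^ 2) = 2 * (p : ℤ) * q * ((m * n) ^ 2) := by
        linear_combination -hAB + c * hA + m ^ 2 * hB
      have := mul_left_cancel₀ (show 2 * (p : ℤ) * q ≠ 0 by positivity) h4
      linear_combination this
    have hzmn : z = m * n := by
      rcases mul_eq_zero.mp hz2 with h0 | h0
      · linarith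
      · nlinarith [mul_pos hm hn]
    have hyz : y = 2 * (m * n) := by rw [hz, hzmn]
    have hx_eq : x = m ^ 2 + 2 * (p : ℤ) * q * n ^ 2 := by linear_combination hc + hA + hB
    have hmR : (1 : ℝ) ≤ (m : ℝ) := by exact_mod_cast hm
    have hnR2 : (1 : ℝ) ≤ (n : ℝ) := by exact_mod_cast hn
    have hle := hmin (m : ℚ) (n : ℚ) (Or.inl ⟨m, n, rfl, rfl⟩)
      (Or.inl (by exact_mod_cast hE))
      (by push_cast
          nlinarith [hs1, hmR, hnR2])
    push_cast at hle
    have hsq_eta : (x : ℝ) + (y : ℝ) * S = ((m : ℝ) + (n : ℝ) * S) ^ 2 := by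
      have e1 : (x : ℝ) = (m : ℝ) ^ 2 + 2 * (p : ℝ) * (q : ℝ) * (n : ℝ) ^ 2 := by
        exact_mod_cast hx_eq
      have e2 : (y : ℝ) = 2 * ((m : ℝ) * (n : ℝ)) := by exact_mod_cast hyz
      rw [e1, e2]
      linear_combination (-(n : ℝ) ^ 2) * hss
    have ht1 : 1 < (m : ℝ) + (n : ℝ) * S := by nlinarith [hs1]
    have ht2 : ((m : ℝ) + (n : ℝ) * S) ^ 2 ≤ (m : ℝ) + (n : ℝ) * S := by linarith
    nlinarith [ht1, ht2]
end
end

section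
/- Let p ≡ 1 (mod 8) and q ≡ 7 (mod 8) be primes with (p/q) = 1, and write the fundamental unit ε_{pq} = v + w√(pq) of Q(√(pq)) with integers v, w. Then exactly one of (v+1), p(v+1), 2p(v+1) is a perfect square in ℕ. -/
lemma nat_sq_of_coprime {a b c : ℕ} (h : Nat.Coprime a b) (heq : a * b = c ^ 2) :
    ∃ d : ℕ, a = d ^ 2 :=
  exists_eq_pow_of_mul_eq_pow (show IsUnit (Nat.gcd a b) by rw [h]; exact isUnit_one) heq

lemma not_sq_aux_s10 {r : ℕ} (hr : r.Prime) {k a : ℕ} (hk0 : k ≠ 0) (hk : ¬ r ∣ k) (ha : a ≠ 0) :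
    ¬ ∃ n : ℕ, k * r * a ^ 2 = n ^ 2 := by
  rintro ⟨n, hn⟩
  have h0 : k * r * a ^ 2 ≠ 0 := mul_ne_zero (mul_ne_zero hk0 hr.ne_zero) (pow_ne_zero 2 ha)
  have hn0 : n ≠ 0 := by rintro rfl; simp at hn; exact h0 (by simpa using hn)
  have := congrArg (fun m => m.factorization r) hn
  simp only [Nat.factorization_mul (mul_ne_zero hk0 hr.ne_zero) (pow_ne_zero 2 ha),
    Nat.factorization_mul hk0 hr.ne_zero, Nat.factorization_pow, Finsupp.add_apply,
    Finsupp.smul_apply, smul_eq_mul] at this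
  rw [Nat.factorization_eq_zero_of_not_dvd hk, Nat.Prime.factorization_self hr] at this
  omega

lemma four_cases {p q : ℕ} (hP : p.Prime) (hQ : q.Prime) (hpq : p ≠ q)
    {m n k : ℕ} (hco : Nat.Coprime m n) (h : m * n = p * q * k ^ 2) :
    (∃ a b : ℕ, m = a ^ 2 ∧ n = p * q * b ^ 2) ∨ (∃ a b : ℕ, m = p * a ^ 2 ∧ n = q * b ^ 2) ∨
    (∃ a b : ℕ, m = q * a ^ 2 ∧ n = p * b ^ 2) ∨ (∃ a b : ℕ, m = p * q * a ^ 2 ∧ n = b ^ 2) := by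
  have hPQ : Nat.Coprime p q := (Nat.coprime_primes hP hQ).mpr hpq
  have hpd : p ∣ m * n := h ▸ ⟨q * k ^ 2, by ring⟩
  have hqd : q ∣ m * n := h ▸ ⟨p * k ^ 2, by ring⟩
  rcases (Nat.Prime.dvd_mul hP).mp hpd with hpm | hpn <;>
    rcases (Nat.Prime.dvd_mul hQ).mp hqd with hqm | hqn
  · -- p ∣ m, q ∣ m
    obtain ⟨m', rfl⟩ := Nat.Coprime.mul_dvd_of_dvd_of_dvd hPQ hpm hqm
    have hkey : m' * n = k ^ 2 := by
      have : p * q * (m' * n) = p * q * k ^ 2 := by rw [← h]; ring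
      exact Nat.eq_of_mul_eq_mul_left (Nat.mul_pos hP.pos hQ.pos) this
    have hco' : Nat.Coprime m' n := Nat.Coprime.coprime_dvd_left ⟨p * q, by ring⟩ hco
    obtain ⟨a, ha⟩ := nat_sq_of_coprime hco' hkey
    obtain ⟨b, hb⟩ := nat_sq_of_coprime hco'.symm (by rw [mul_comm] at hkey; exact hkey)
    exact Or.inr (Or.inr (Or.inr ⟨a, b, by rw [ha], hb⟩))
  · -- p ∣ m, q ∣ n
    obtain ⟨m', rfl⟩ := hpm
    obtain ⟨n', rfl⟩ := hqn
    have hkey : m' * n' = k ^ 2 := by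
      have : (p * q) * (m' * n') = (p * q) * k ^ 2 := by rw [← h]; ring
      exact Nat.eq_of_mul_eq_mul_left (Nat.mul_pos hP.pos hQ.pos) this
    have hco' : Nat.Coprime m' n' := Nat.Coprime.coprime_dvd_left ⟨p, by ring⟩
      (Nat.Coprime.coprime_dvd_right ⟨q, by ring⟩ hco)
    obtain ⟨a, ha⟩ := nat_sq_of_coprime hco' hkey
    obtain ⟨b, hb⟩ := nat_sq_of_coprime hco'.symm (by rw [mul_comm] at hkey; exact hkey)
    exact Or.inr (Or.inl ⟨a, b, by rw [ha], by rw [hb]⟩)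
  · -- q ∣ m, p ∣ n
    obtain ⟨m', rfl⟩ := hqm
    obtain ⟨n', rfl⟩ := hpn
    have hkey : m' * n' = k ^ 2 := by
      have : (p * q) * (m' * n') = (p * q) * k ^ 2 := by rw [← h]; ring
      exact Nat.eq_of_mul_eq_mul_left (Nat.mul_pos hP.pos hQ.pos) this
    have hco' : Nat.Coprime m' n' := Nat.Coprime.coprime_dvd_left ⟨q, by ring⟩
      (Nat.Coprime.coprime_dvd_right ⟨p, by ring⟩ hco)
    obtain ⟨a, ha⟩ := nat_sq_of_coprime hco' hkey
    obtain ⟨b, hb⟩ := nat_sq_of_coprime hco'.symm (by rw [mul_comm] at hkey; exact hkey)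
    exact Or.inr (Or.inr (Or.inl ⟨a, b, by rw [ha], by rw [hb]⟩))
  · -- p ∣ n, q ∣ n
    obtain ⟨n', rfl⟩ := Nat.Coprime.mul_dvd_of_dvd_of_dvd hPQ hpn hqn
    have hkey : m * n' = k ^ 2 := by
      have : (p * q) * (m * n') = (p * q) * k ^ 2 := by rw [← h]; ring
      exact Nat.eq_of_mul_eq_mul_left (Nat.mul_pos hP.pos hQ.pos) this
    have hco' : Nat.Coprime m n' := Nat.Coprime.coprime_dvd_right ⟨p * q, by ring⟩ hco
    obtain ⟨a, ha⟩ := nat_sq_of_coprime hco' hkey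
    obtain ⟨b, hb⟩ := nat_sq_of_coprime hco'.symm (by rw [mul_comm] at hkey; exact hkey)
    exact Or.inl ⟨a, b, ha, by rw [hb]⟩


noncomputable section

set_option maxHeartbeats 1000000 in
/-- For primes `p ≡ 1 (mod 8)`, `q ≡ 7 (mod 8)` with `(p/q) = 1` and fundamental unit
`ε_{pq} = v + w√(pq)` of `ℚ(√(pq))`, exactly one of `v+1`, `p(v+1)`, `2p(v+1)`
is a perfect square. -/
theorem exactly_one_square_pq (p q : ℕ) [Fact p.Prime] [Fact q.Prime]
    (hp : p % 8 = 1) (hq : q % 8 = 7) (hleg : legendreSym q p = 1)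
    (v w : ℤ) (h : IsFundUnit (p * q) (v : ℚ) (w : ℚ)) :
    ((∃ n : ℕ, v + 1 = (n : ℤ) ^ 2) ∧ ¬ (∃ n : ℕ, p * (v + 1) = (n : ℤ) ^ 2) ∧
        ¬ (∃ n : ℕ, 2 * p * (v + 1) = (n : ℤ) ^ 2)) ∨
    (¬ (∃ n : ℕ, v + 1 = (n : ℤ) ^ 2) ∧ (∃ n : ℕ, p * (v + 1) = (n : ℤ) ^ 2) ∧
        ¬ (∃ n : ℕ, 2 * p * (v + 1) = (n : ℤ) ^ 2)) ∨
    (¬ (∃ n : ℕ, v + 1 = (n : ℤ) ^ 2) ∧ ¬ (∃ n : ℕ, p * (v + 1) = (n : ℤ) ^ 2) ∧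
        (∃ n : ℕ, 2 * p * (v + 1) = (n : ℤ) ^ 2)) := by
  have hP : p.Prime := Fact.out
  have hQ : q.Prime := Fact.out
  have hp2 : 2 ≤ p := hP.two_le
  have hq2 : 2 ≤ q := hQ.two_le
  have hp9 : 9 ≤ p := by omega
  have hq7 : 7 ≤ q := by omega
  have hpq : p ≠ q := by omega
  -- ZMod q facts
  have hnsq1 : ¬ IsSquare (-1 : ZMod q) := by
    rw [ZMod.exists_sq_eq_neg_one_iff]; omega
  have h2ne : ((2 : ℕ) : ZMod q) ≠ 0 := by
    rw [Ne, ZMod.natCast_eq_zero_iff]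
    intro hd; have := Nat.le_of_dvd (by norm_num) hd; omega
  have hsq2 : IsSquare (2 : ZMod q) := by
    rw [ZMod.exists_sq_eq_two_iff (by omega)]; omega
  have hnsq2 : ¬ IsSquare (-2 : ZMod q) := by
    rintro ⟨c, hc⟩
    obtain ⟨d, hd⟩ := hsq2
    have hd0 : (d : ZMod q) ≠ 0 := by
      intro h0; rw [h0, mul_zero] at hd
      exact h2ne (by push_cast; rw [hd])
    have h2' : (2 : ZMod q) ≠ 0 := by push_cast at h2ne; exact h2ne
    refine hnsq1 ⟨c * d⁻¹, ?_⟩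
    rw [mul_mul_mul_comm, ← hc, ← mul_inv, ← hd, neg_mul, mul_inv_cancel₀ h2']
  have hpne : ((p : ℤ) : ZMod q) ≠ 0 := by
    push_cast
    rw [Ne, ZMod.natCast_eq_zero_iff]
    intro hd; exact hpq ((Nat.prime_dvd_prime_iff_eq hQ hP).mp hd).symm
  have hpsq : IsSquare ((p : ℕ) : ZMod q) := by
    have := (legendreSym.eq_one_iff q hpne).mp hleg
    push_cast at this; exact this
  -- the three mod-q contradictions, as reusable facts
  have modq1 : ∀ a b r : ℕ, q * a ^ 2 = p * b ^ 2 + r → (r = 1 ∨ r = 2) → False := by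
    intro a b r heq hr
    obtain ⟨s, hs⟩ := hpsq
    have hz := congrArg (fun m : ℕ => (m : ZMod q)) heq
    push_cast [ZMod.natCast_self] at hz
    rcases hr with rfl | rfl
    · refine hnsq1 ⟨s * (b : ZMod q), ?_⟩
      push_cast at hz
      linear_combination hz + (b : ZMod q) ^ 2 * hs
    · refine hnsq2 ⟨s * (b : ZMod q), ?_⟩
      push_cast at hz
      linear_combination hz + (b : ZMod q) ^ 2 * hs
  have modq2 : ∀ a b r : ℕ, p * q * a ^ 2 = b ^ 2 + r → (r = 1 ∨ r = 2) → False := by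
    intro a b r heq hr
    have hz := congrArg (fun m : ℕ => (m : ZMod q)) heq
    push_cast [ZMod.natCast_self] at hz
    rcases hr with rfl | rfl
    · refine hnsq1 ⟨(b : ZMod q), ?_⟩
      push_cast at hz
      linear_combination hz
    · refine hnsq2 ⟨(b : ZMod q), ?_⟩
      push_cast at hz
      linear_combination hz
  -- unpack the fundamental unit
  obtain ⟨hint, hnorm, hgt, hmin⟩ := h
  have hpZ : (9:ℤ) ≤ (p:ℤ) := by exact_mod_cast hp9
  have hqZ : (7:ℤ) ≤ (q:ℤ) := by exact_mod_cast hq7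
  -- the norm is 1
  have hnormZ : v ^ 2 - (p : ℤ) * (q : ℤ) * w ^ 2 = 1 := by
    rcases hnorm with h1 | h1
    · exact_mod_cast h1
    · exfalso
      have h1' : v ^ 2 - (p : ℤ) * (q : ℤ) * w ^ 2 = -1 := by exact_mod_cast h1
      have hz := congrArg (fun m : ℤ => (m : ZMod q)) h1'
      push_cast [ZMod.natCast_self] at hz
      exact hnsq1 ⟨(v : ZMod q), by linear_combination -hz⟩
  -- real estimates: v ≥ 2, w ≥ 1
  have hcastsqrt : (((p : ℤ) * (q : ℤ) : ℤ) : ℝ) = (p : ℝ) * q := by push_cast; ring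
  set S : ℝ := Real.sqrt ((((p:ℕ) : ℤ) * ((q:ℕ) : ℤ) : ℤ) : ℝ) with hSdef
  have hSpos : 0 < S := Real.sqrt_pos.mpr (by rw [hcastsqrt]; positivity)
  have hS2 : S ^ 2 = (p : ℝ) * q := by rw [hSdef, Real.sq_sqrt (by rw [hcastsqrt]; positivity)]; exact hcastsqrt
  have hgt' : 1 < (v : ℝ) + (w : ℝ) * S := by push_cast at hgt; exact hgt
  have hnR : (v:ℝ)^2 - ((p:ℝ)*q)*(w:ℝ)^2 = 1 := by exact_mod_cast hnormZ
  have hprod : ((v:ℝ) + w*S) * ((v:ℝ) - w*S) = 1 := by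
    have expand : ((v:ℝ) + w*S) * ((v:ℝ) - w*S) = (v:ℝ)^2 - S^2*(w:ℝ)^2 := by ring
    rw [expand, hS2]; linarith [hnR]
  have hconj_pos : 0 < (v:ℝ) - w*S := by
    by_contra hcp
    push_neg at hcp
    have hle : ((v:ℝ) + w*S) * ((v:ℝ) - w*S) ≤ 0 :=
      mul_nonpos_of_nonneg_of_nonpos (by linarith) hcp
    linarith
  have hconj_lt : (v:ℝ) - w*S < 1 := by
    by_contra hcl
    push_neg at hcl
    have h1 : ((v:ℝ) + w*S) * 1 ≤ ((v:ℝ) + w*S) * ((v:ℝ) - w*S) :=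
      mul_le_mul_of_nonneg_left hcl (by linarith)
    rw [mul_one, hprod] at h1
    linarith
  have hw1 : 1 ≤ w := by
    by_contra hw
    push_neg at hw
    have hw0 : (w:ℝ) ≤ 0 := by exact_mod_cast (by omega : w ≤ 0)
    have hws : (w:ℝ) * S ≤ 0 := mul_nonpos_of_nonpos_of_nonneg hw0 hSpos.le
    linarith
  have hv1 : 1 ≤ v := by
    have h2v : (1:ℝ) < 2 * (v:ℝ) := by linarith
    have : (0:ℝ) < (v:ℝ) := by linarith
    exact_mod_cast Int.cast_pos.mp this
  have hpq63 : (63:ℤ) ≤ (p:ℤ)*(q:ℤ) := by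
    have h63 : (9*7 : ℕ) ≤ p*q := Nat.mul_le_mul hp9 hq7
    exact_mod_cast h63
  have hw2 : (1:ℤ) ≤ w^2 := by
    calc (1:ℤ) = 1^2 := by norm_num
      _ ≤ w^2 := pow_le_pow_left₀ (by norm_num) hw1 2
  have hbig : (64:ℤ) ≤ v^2 := by
    have hmul : (63:ℤ)*1 ≤ ((p:ℤ)*(q:ℤ))*(w^2) := mul_le_mul hpq63 hw2 (by norm_num) (by positivity)
    linarith [hnormZ]
  have hv2 : 2 ≤ v := by
    by_contra hvlt
    push_neg at hvlt
    have hveq : v = 1 := by omega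
    rw [hveq] at hbig
    norm_num at hbig
  -- move to ℕ
  set M := (v+1).toNat with hMdef
  set N := (v-1).toNat with hNdef
  set W := w.toNat with hWdef
  have hM : (M:ℤ) = v + 1 := Int.toNat_of_nonneg (by omega)
  have hN : (N:ℤ) = v - 1 := Int.toNat_of_nonneg (by omega)
  have hW : (W:ℤ) = w := Int.toNat_of_nonneg (by omega)
  have hMN : M * N = p * q * W ^ 2 := by
    have hc : ((M*N : ℕ) : ℤ) = ((p*q*W^2 : ℕ) : ℤ) := by
      push_cast [hM, hN, hW]
      linear_combination hnormZ
    exact_mod_cast hc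
  have hM3 : 3 ≤ M := by omega
  have hMN2 : M = N + 2 := by omega
  have hN1 : 1 ≤ N := by omega
  have hW1 : 1 ≤ W := by omega
  -- key classification
  have key : ∃ c a : ℕ, (c = 1 ∨ c = p ∨ c = 2 * p) ∧ a ≠ 0 ∧ M = c * a ^ 2 := by
    rcases Nat.even_or_odd M with hMe | hMo
    · -- M even (v odd)
      obtain ⟨s, hsM⟩ : 2 ∣ M := hMe.two_dvd
      obtain ⟨t, htN⟩ : 2 ∣ N := by omega
      obtain ⟨u, huW⟩ : 2 ∣ W := by
        have h2d : (2:ℕ) ∣ p * q * W ^ 2 := by rw [← hMN, hsM]; exact ⟨s*N, by ring⟩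
        rcases (Nat.Prime.dvd_mul Nat.prime_two).mp h2d with h' | h'
        · rcases (Nat.Prime.dvd_mul Nat.prime_two).mp h' with h'' | h'' <;> omega
        · exact Nat.Prime.dvd_of_dvd_pow Nat.prime_two h'
      have hst : s * t = p * q * u ^ 2 := by
        refine Nat.eq_of_mul_eq_mul_left (show 0 < 4 by norm_num) ?_
        calc 4 * (s * t) = (2*s) * (2*t) := by ring
          _ = p * q * (2*u)^2 := by rw [← hsM, ← htN, ← huW]; exact hMN
          _ = 4 * (p * q * u ^ 2) := by ring
      have hts : s = t + 1 := by omega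
      have ht1 : 1 ≤ t := by omega
      have hco : Nat.Coprime s t := by
        rw [hts]; exact Nat.coprime_self_add_left.mpr (Nat.coprime_one_left t)
      rcases four_cases hP hQ hpq hco hst with ⟨a,b,ha,hb⟩|⟨a,b,ha,hb⟩|⟨a,b,ha,hb⟩|⟨a,b,ha,hb⟩
      · -- s = a², t = pq b² : contradicts fundamentality
        exfalso
        rw [ha, hb] at hts
        have hb1 : 1 ≤ b := by
          rcases Nat.eq_zero_or_pos b with rfl | hbp
          · simp at hb; omega
          · exact hbp
        have ha1 : 1 ≤ a := by
          rcases Nat.eq_zero_or_pos a with rfl | hap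
          · simp at ha; omega
          · exact hap
        have h2a : 2*(a:ℤ)^2 = v + 1 := by
          rw [← hM, hsM, ha]; push_cast; ring
        have hu2 : u ^ 2 = s * b ^ 2 := by
          refine Nat.eq_of_mul_eq_mul_left (Nat.mul_pos hP.pos hQ.pos) ?_
          calc p * q * u ^ 2 = s * t := hst.symm
            _ = s * (p*q*b^2) := by rw [hb]
            _ = p * q * (s * b ^ 2) := by ring
        have hs2 : 2 ≤ s := by omega
        have hblt : b < u := by
          by_contra hbu
          push_neg at hbu
          have h1 : u^2 ≤ b^2 := Nat.pow_le_pow_left hbu 2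
          have h2 : 1 ≤ b^2 := Nat.one_le_pow 2 b (by omega)
          have h3 : 2*(b^2) ≤ s*(b^2) := Nat.mul_le_mul_right _ hs2
          have h4 : s * b ^ 2 = s * (b^2) := rfl
          linarith [hu2, h1, h2, h3]
        have hbW : b < W := by omega
        have haltv : (a:ℤ) < v := by
          by_contra hav
          push_neg at hav
          have h1 : v^2 ≤ (a:ℤ)^2 := pow_le_pow_left₀ (by linarith) hav 2
          have h2v : 2*v ≤ v^2 := by
            calc 2*v ≤ v*v := mul_le_mul_of_nonneg_right hv2 (by linarith)
              _ = v^2 := (sq v).symm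
          linarith [h2a, h1, h2v]
        have hbltw : (b:ℤ) < w := by rw [← hW]; exact_mod_cast hbW
        -- apply minimality to a + b√(pq)
        have hnat : a^2 = p*q*b^2 + 1 := hts
        have happ := hmin (a:ℚ) (b:ℚ) (Or.inl ⟨(a:ℤ), (b:ℤ), by push_cast; exact ⟨rfl, rfl⟩⟩)
          (Or.inl (by
            push_cast
            have hQn : ((a:ℚ))^2 = (p:ℚ)*q*(b:ℚ)^2 + 1 := by exact_mod_cast hnat
            linarith))
          (by push_cast
              have ha1R : (1:ℝ) ≤ (a:ℝ) := by exact_mod_cast ha1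
              have hb1R : (1:ℝ) ≤ (b:ℝ) := by exact_mod_cast hb1
              have hbS : 1 * S ≤ (b:ℝ) * S := mul_le_mul_of_nonneg_right hb1R hSpos.le
              rw [one_mul] at hbS
              linarith [hSpos])
        push_cast at happ
        have haR : (a:ℝ) < (v:ℝ) := by exact_mod_cast haltv
        have hbR : (b:ℝ) < (w:ℝ) := by exact_mod_cast hbltw
        have : (b:ℝ) * S < (w:ℝ) * S := by
          exact mul_lt_mul_of_pos_right hbR hSpos
        linarith
      · -- s = p a² : c = 2p
        have ha0 : a ≠ 0 := by rintro rfl; simp at ha; omega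
        exact ⟨2*p, a, Or.inr (Or.inr rfl), ha0, by rw [hsM, ha]; ring⟩
      · -- s = q a², t = p b² : impossible mod q
        rw [ha, hb] at hts
        exact absurd hts (fun hh => modq1 a b 1 hh (Or.inl rfl))
      · -- s = pq a², t = b² : impossible mod q
        rw [ha, hb] at hts
        exact absurd hts (fun hh => modq2 a b 1 hh (Or.inl rfl))
    · -- M odd (v even)
      have hModd : M % 2 = 1 := Nat.odd_iff.mp hMo
      have hco : Nat.Coprime M N := by
        have hg2 : Nat.gcd M N ∣ 2 := by
          have hd := Nat.dvd_sub (Nat.gcd_dvd_left M N) (Nat.gcd_dvd_right M N)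
          rwa [show M - N = 2 by omega] at hd
        have hgM : Nat.gcd M N ∣ M := Nat.gcd_dvd_left M N
        rcases (Nat.dvd_prime Nat.prime_two).mp hg2 with h1 | h1
        · exact h1
        · exfalso; rw [h1] at hgM; omega
      rcases four_cases hP hQ hpq hco hMN with ⟨a,b,ha,hb⟩|⟨a,b,ha,hb⟩|⟨a,b,ha,hb⟩|⟨a,b,ha,hb⟩
      · have ha0 : a ≠ 0 := by rintro rfl; simp at ha; omega
        exact ⟨1, a, Or.inl rfl, ha0, by rw [ha]; ring⟩
      · have ha0 : a ≠ 0 := by rintro rfl; simp at ha; omega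
        exact ⟨p, a, Or.inr (Or.inl rfl), ha0, ha⟩
      · rw [ha, hb] at hMN2
        exact absurd hMN2 (fun hh => modq1 a b 2 hh (Or.inr rfl))
      · rw [ha, hb] at hMN2
        exact absurd hMN2 (fun hh => modq2 a b 2 hh (Or.inr rfl))
  -- conclude
  obtain ⟨c, a, hc, ha0, hMc⟩ := key
  have hpd1 : ¬ p ∣ 1 := by simp [Nat.dvd_one]; omega
  have hpd2 : ¬ p ∣ 2 := fun hd => by have := Nat.le_of_dvd (by norm_num) hd; omega
  have h2d1 : ¬ (2:ℕ) ∣ 1 := by norm_num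
  have hpa0 : p * a ≠ 0 := by positivity
  rcases hc with rfl | hcp | rfl
  · -- c = 1 : v + 1 is a square
    refine Or.inl ⟨⟨a, by rw [← hM, hMc]; push_cast; ring⟩, ?_, ?_⟩
    · rintro ⟨n, hn⟩
      refine not_sq_aux_s10 hP one_ne_zero hpd1 ha0 ⟨n, ?_⟩
      have hnat : p * M = n ^ 2 := by
        have : ((p * M : ℕ) : ℤ) = ((n^2 : ℕ) : ℤ) := by push_cast [hM]; linarith [hn]
        exact_mod_cast this
      rw [hMc] at hnat; rw [← hnat]; try ring
    · rintro ⟨n, hn⟩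
      refine not_sq_aux_s10 hP two_ne_zero hpd2 ha0 ⟨n, ?_⟩
      have hnat : 2 * p * M = n ^ 2 := by
        have : ((2 * p * M : ℕ) : ℤ) = ((n^2 : ℕ) : ℤ) := by push_cast [hM]; linarith [hn]
        exact_mod_cast this
      rw [hMc] at hnat; rw [← hnat]; try ring
  · -- c = p : p(v+1) is a square
    rw [hcp] at hMc
    refine Or.inr (Or.inl ⟨?_, ⟨p*a, by rw [← hM, hMc]; push_cast; ring⟩, ?_⟩)
    · rintro ⟨n, hn⟩
      refine not_sq_aux_s10 hP one_ne_zero hpd1 ha0 ⟨n, ?_⟩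
      have hnat : M = n ^ 2 := by
        have : ((M : ℕ) : ℤ) = ((n^2 : ℕ) : ℤ) := by push_cast [hM]; linarith [hn]
        exact_mod_cast this
      rw [hMc] at hnat; rw [← hnat]; try ring
    · rintro ⟨n, hn⟩
      refine not_sq_aux_s10 Nat.prime_two one_ne_zero h2d1 hpa0 ⟨n, ?_⟩
      have hnat : 2 * p * M = n ^ 2 := by
        have : ((2 * p * M : ℕ) : ℤ) = ((n^2 : ℕ) : ℤ) := by push_cast [hM]; linarith [hn]
        exact_mod_cast this
      rw [hMc] at hnat; rw [← hnat]; try ring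
  · -- c = 2p : 2p(v+1) is a square
    refine Or.inr (Or.inr ⟨?_, ?_, ⟨2*(p*a), by rw [← hM, hMc]; push_cast; ring⟩⟩)
    · rintro ⟨n, hn⟩
      refine not_sq_aux_s10 hP two_ne_zero hpd2 ha0 ⟨n, ?_⟩
      have hnat : M = n ^ 2 := by
        have : ((M : ℕ) : ℤ) = ((n^2 : ℕ) : ℤ) := by push_cast [hM]; linarith [hn]
        exact_mod_cast this
      rw [hMc] at hnat; rw [← hnat]; try ring
    · rintro ⟨n, hn⟩
      refine not_sq_aux_s10 Nat.prime_two one_ne_zero h2d1 hpa0 ⟨n, ?_⟩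
      have hnat : p * M = n ^ 2 := by
        have : ((p * M : ℕ) : ℤ) = ((n^2 : ℕ) : ℤ) := by push_cast [hM]; linarith [hn]
        exact_mod_cast this
      rw [hMc] at hnat; rw [← hnat]; try ring
end
end

section
/- Let p ≡ 1 (mod 8) and q ≡ 7 (mod 8) be primes with (p/q) = 1, and suppose that for the fundamental unit ε_{pq} = v + w√(pq) the number 2p(v+1) is a perfect square. Then there exist integers w₁, w₂ with w = 2w₁w₂ such that ε_{pq} = (w₁√p + w₂√q)², i.e. √ε_{pq} = w₁√p + w₂√q, and 1 = p·w₁² − q·w₂². -/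
noncomputable section

/-!
The norm of `ε = v + w√(pq)` is `+1`, because `-1` is not a square modulo `q ≡ 3 (mod 4)`.
Since `2p` is squarefree, `2p(v + 1) = n²` forces `v + 1 = 2pm²`; then
`pq·w² = v² - 1 = 2pm²(2pm² - 2)` gives `q·w² = (2m)²(pm² - 1)`. Because `q` is squarefree,
`2m ∣ w`, say `w = 2mc`, and `pm² - 1 = qc²`. Hence `v = pm² + qc²` and `w = 2mc`, which is
exactly the expansion of `(m√p + c√q)²`.
-/

namespace Int

theorem dvd_of_sq_dvd_mul_sq {q m u : ℤ} (hq : Squarefree q) (hm : m ≠ 0)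
    (h : m ^ 2 ∣ q * u ^ 2) : m ∣ u := by
  obtain ⟨g, a, b, -, hab, rfl, rfl⟩ :=
    exists_gcd_one' (gcd_pos_of_ne_zero_left u hm)
  have hg : (g : ℤ) ^ 2 ≠ 0 := pow_ne_zero 2 (right_ne_zero_of_mul hm)
  have hdvd : a ^ 2 ∣ q * b ^ 2 :=
    (mul_dvd_mul_iff_right hg).mp (by simpa only [mul_pow, mul_assoc] using h)
  have hcop : IsCoprime (a ^ 2) (b ^ 2) := (isCoprime_iff_gcd_eq_one.mpr hab).pow
  have ha : IsUnit a := hq a (sq a ▸ hcop.dvd_of_dvd_mul_right hdvd)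
  exact mul_dvd_mul_right ha.dvd _

theorem exists_eq_mul_of_sq_mul_eq_mul_sq {q m N u : ℤ} (hq : Squarefree q) (hm : m ≠ 0)
    (h : m ^ 2 * N = q * u ^ 2) : ∃ c, u = m * c ∧ N = q * c ^ 2 := by
  obtain ⟨c, rfl⟩ := dvd_of_sq_dvd_mul_sq hq hm ⟨N, h.symm⟩
  refine ⟨c, rfl, mul_left_cancel₀ (pow_ne_zero 2 hm) ?_⟩
  linear_combination h

theorem exists_eq_mul_sq_of_mul_eq_sq {s x n : ℤ} (hs : Squarefree s) (h : s * x = n ^ 2) :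
    ∃ m, x = s * m ^ 2 := by
  obtain ⟨m, rfl⟩ := (hs.dvd_pow_iff_dvd two_ne_zero).mp ⟨x, h.symm⟩
  exact ⟨m, mul_left_cancel₀ hs.ne_zero (by linear_combination h)⟩

theorem sq_sub_mul_sq_ne_neg_one {q : ℕ} [Fact q.Prime] (hq : q % 4 = 3) {d : ℤ}
    (hd : (q : ℤ) ∣ d) (v w : ℤ) : v ^ 2 - d * w ^ 2 ≠ -1 := by
  intro h
  refine ZMod.exists_sq_eq_neg_one_iff.mp ⟨v, ?_⟩ hq
  have h' := congrArg (Int.cast : ℤ → ZMod q) h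
  push_cast at h'
  rw [(ZMod.intCast_zmod_eq_zero_iff_dvd d q).mpr hd] at h'
  linear_combination -h'

end Int

theorem add_mul_sqrt_mul_eq_sq {p q : ℝ} (hp : 0 ≤ p) (hq : 0 ≤ q) (a b : ℝ) :
    p * a ^ 2 + q * b ^ 2 + 2 * a * b * √(p * q) = (a * √p + b * √q) ^ 2 := by
  rw [Real.sqrt_mul hp]
  linear_combination -a ^ 2 * Real.sq_sqrt hp - b ^ 2 * Real.sq_sqrt hq

theorem sqrt_eps_pq_case_2p_general (p q : ℕ) [Fact p.Prime] [Fact q.Prime]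
    (hp : p % 8 = 1) (hq : q % 8 = 7)
    (v w : ℤ) (h : IsFundUnit (p * q) (v : ℚ) (w : ℚ))
    (hsq : ∃ n : ℕ, 2 * p * (v + 1) = (n : ℤ) ^ 2) :
    ∃ w₁ w₂ : ℤ, w = 2 * w₁ * w₂ ∧
      (v : ℝ) + (w : ℝ) * Real.sqrt (p * q) =
        ((w₁ : ℝ) * Real.sqrt p + (w₂ : ℝ) * Real.sqrt q) ^ 2 ∧
      (1 : ℤ) = p * w₁ ^ 2 - q * w₂ ^ 2 := by
  obtain ⟨-, hnorm, hgt, -⟩ := h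
  have hpP : p.Prime := Fact.out
  have hqP : q.Prime := Fact.out
  have hN : v ^ 2 - p * q * w ^ 2 = 1 := by
    rcases hnorm with h1 | h1
    · exact_mod_cast h1
    · exact absurd (by exact_mod_cast h1)
        (Int.sq_sub_mul_sq_ne_neg_one (by omega) (dvd_mul_left (q : ℤ) p) v w)
  have h2p : Squarefree (2 * p : ℤ) := by
    exact_mod_cast Int.squarefree_natCast.mpr <| Nat.squarefree_mul_iff.mpr
      ⟨(Nat.coprime_primes Nat.prime_two hpP).mpr (by omega), Nat.prime_two.squarefree,
        hpP.squarefree⟩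
  obtain ⟨n, hn⟩ := hsq
  obtain ⟨m, hm⟩ := Int.exists_eq_mul_sq_of_mul_eq_sq h2p hn
  have hm0 : m ≠ 0 := by
    rintro rfl
    have hw : (p * q : ℤ) * w ^ 2 = 0 := by linear_combination (v - 1) * hm - hN
    replace hw : w = 0 := pow_eq_zero_iff two_ne_zero |>.mp <|
      (mul_eq_zero.mp hw).resolve_left (by simp [hpP.ne_zero, hqP.ne_zero])
    norm_num [hw, show v = -1 by linarith] at hgt
  have hkey : (2 * m) ^ 2 * (p * m ^ 2 - 1) = q * w ^ 2 :=
    mul_left_cancel₀ (a := (p : ℤ)) (by exact_mod_cast hpP.ne_zero)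
      (by linear_combination hN - (2 * (p : ℤ) * m ^ 2 - 1 + v) * hm)
  obtain ⟨c, rfl, hc⟩ := Int.exists_eq_mul_of_sq_mul_eq_mul_sq
    (Int.squarefree_natCast.mpr hqP.squarefree) (by positivity) hkey
  refine ⟨m, c, by ring, ?_, by linarith⟩
  have hv : (v : ℝ) = p * m ^ 2 + q * c ^ 2 := by
    exact_mod_cast (by linarith : v = p * m ^ 2 + q * c ^ 2)
  push_cast
  rw [hv, ← add_mul_sqrt_mul_eq_sq (by positivity) (by positivity)]

/-- For primes `p ≡ 1 (mod 8)`, `q ≡ 7 (mod 8)` with `(p/q) = 1`, if `2p(v+1)` is a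
perfect square for the fundamental unit `ε_{pq} = v + w√(pq)` of `ℚ(√(pq))`, then
there are integers `w₁, w₂` with `w = 2w₁w₂`, `ε_{pq} = (w₁√p + w₂√q)²` and
`1 = p·w₁² − q·w₂²`. -/
theorem sqrt_eps_pq_case_2p (p q : ℕ) [Fact p.Prime] [Fact q.Prime]
    (hp : p % 8 = 1) (hq : q % 8 = 7) (hleg : legendreSym q p = 1)
    (v w : ℤ) (h : IsFundUnit (p * q) (v : ℚ) (w : ℚ))
    (hsq : ∃ n : ℕ, 2 * p * (v + 1) = (n : ℤ) ^ 2) :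
    ∃ w₁ w₂ : ℤ, w = 2 * w₁ * w₂ ∧
      (v : ℝ) + (w : ℝ) * Real.sqrt (p * q) =
        ((w₁ : ℝ) * Real.sqrt p + (w₂ : ℝ) * Real.sqrt q) ^ 2 ∧
      (1 : ℤ) = p * w₁ ^ 2 - q * w₂ ^ 2 :=
  sqrt_eps_pq_case_2p_general p q hp hq v w h hsq
end
end

section
/- Let p ≡ 1 (mod 8) and q ≡ 7 (mod 8) be primes with (p/q) = 1, and suppose that for the fundamental unit ε_{2pq} = x + y√(2pq) the number p(x+1) is a perfect square. Then there exist integers y₁, y₂ with y = y₁y₂ such that 2ε_{2pq} = (y₁√p + y₂√(2q))² and 2 = p·y₁² − 2q·y₂². -/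
noncomputable section

theorem aux_q_dvd (q m t y : ℕ) (hq : q.Prime) (ht : t ≠ 0) (hy : y ≠ 0)
    (h : m ^ 2 * t = q * y ^ 2) : q ∣ t := by
  have hm : m ≠ 0 := by
    rintro rfl
    simp at h
    rcases h with h1 | h1
    · exact hq.ne_zero h1
    · exact hy h1
  have hf := congrArg (fun n => n.factorization q) h
  simp [Nat.factorization_mul, Nat.factorization_pow, hm, ht, hy, hq.ne_zero,
    hq.factorization_self, pow_ne_zero, mul_ne_zero] at hf
  apply Nat.dvd_of_factorization_pos
  omega

/-- For primes `p ≡ 1 (mod 8)`, `q ≡ 7 (mod 8)` with `(p/q) = 1`, if `p(x+1)` is a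
perfect square for the fundamental unit `ε_{2pq} = x + y√(2pq)` of `ℚ(√(2pq))`, then
there are integers `y₁, y₂` with `y = y₁y₂`, `2ε_{2pq} = (y₁√p + y₂√(2q))²` and
`2 = p·y₁² − 2q·y₂²`. -/
theorem sqrt_two_eps_2pq_case_p (p q : ℕ) [Fact p.Prime] [Fact q.Prime]
    (hp : p % 8 = 1) (hq : q % 8 = 7) (hleg : legendreSym q p = 1)
    (x y : ℤ) (h : IsFundUnit (2 * p * q) (x : ℚ) (y : ℚ))
    (hsq : ∃ n : ℕ, p * (x + 1) = (n : ℤ) ^ 2) :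
    ∃ y₁ y₂ : ℤ, y = y₁ * y₂ ∧
      2 * ((x : ℝ) + (y : ℝ) * Real.sqrt (2 * p * q)) =
        ((y₁ : ℝ) * Real.sqrt p + (y₂ : ℝ) * Real.sqrt (2 * q)) ^ 2 ∧
      (2 : ℤ) = p * y₁ ^ 2 - 2 * q * y₂ ^ 2 := by
  obtain ⟨-, hnorm, hgt, -⟩ := h
  have hpP : p.Prime := Fact.out
  have hqP : q.Prime := Fact.out
  have hp9 : 9 ≤ p := by
    have := hpP.two_le; omega
  have hq7 : 7 ≤ q := by
    have := hqP.two_le; omega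
  -- rule out norm -1
  have hnorm1 : x ^ 2 - 2 * (p : ℤ) * q * y ^ 2 = 1 := by
    rcases hnorm with h1 | h1
    · exact_mod_cast h1
    · exfalso
      have h2 : x ^ 2 - 2 * (p : ℤ) * q * y ^ 2 = -1 := by exact_mod_cast h1
      have h3 : ((x : ZMod q)) ^ 2 = -1 := by
        have h4 := congrArg (fun n : ℤ => (n : ZMod q)) h2
        push_cast at h4
        rw [ZMod.natCast_self] at h4
        linear_combination h4
      have h5 : IsSquare (-1 : ZMod q) := ⟨(x : ZMod q), by rw [← h3]; ring⟩
      rw [ZMod.exists_sq_eq_neg_one_iff] at h5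
      omega
  -- real positivity
  push_cast at hgt
  have hpq0 : (0:ℝ) < 2 * (p:ℝ) * q := by positivity
  have hD0 : 0 < Real.sqrt (2 * (p:ℝ) * q) := Real.sqrt_pos.mpr hpq0
  have hD2 : Real.sqrt (2 * (p:ℝ) * q) ^ 2 = 2 * (p:ℝ) * q := Real.sq_sqrt hpq0.le
  have hnR : ((x:ℝ))^2 - 2 * (p:ℝ) * q * (y:ℝ)^2 = 1 := by exact_mod_cast hnorm1
  have hprod : ((x:ℝ) - y * Real.sqrt (2 * (p:ℝ) * q)) *
      ((x:ℝ) + y * Real.sqrt (2 * (p:ℝ) * q)) = 1 := by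
    have e : ((x:ℝ) - y * Real.sqrt (2 * (p:ℝ) * q)) *
      ((x:ℝ) + y * Real.sqrt (2 * (p:ℝ) * q)) =
      (x:ℝ)^2 - (y:ℝ)^2 * (Real.sqrt (2 * (p:ℝ) * q))^2 := by ring
    rw [e, hD2]; linarith [hnR]
  have hu0 : (0:ℝ) < (x:ℝ) + y * Real.sqrt (2 * (p:ℝ) * q) := by linarith
  have hconj : (x:ℝ) - y * Real.sqrt (2 * (p:ℝ) * q) < 1 := by nlinarith
  have hconj0 : 0 < (x:ℝ) - y * Real.sqrt (2 * (p:ℝ) * q) := by nlinarith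
  have hy1 : 1 ≤ y := by
    have hyR : (0:ℝ) < (y:ℝ) := by
      by_contra hc
      push_neg at hc
      have : (y:ℝ) * Real.sqrt (2 * (p:ℝ) * q) ≤ 0 :=
        mul_nonpos_of_nonpos_of_nonneg hc hD0.le
      linarith
    have : (0:ℤ) < y := by exact_mod_cast hyR
    omega
  have hx1pos : 1 ≤ x := by
    have hxR : (0:ℝ) < (x:ℝ) := by nlinarith
    have : (0:ℤ) < x := by exact_mod_cast hxR
    omega
  -- x is odd
  have hodd : x % 2 = 1 := by
    rcases Int.even_or_odd x with he | ho
    · exfalso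
      obtain ⟨k, hk⟩ := he
      rw [hk] at hnorm1
      have h2 : Even (1:ℤ) := ⟨2*k^2 - (p:ℤ)*q*y^2, by linear_combination -hnorm1⟩
      norm_num at h2
    · obtain ⟨k, hk⟩ := ho; omega
  -- from hsq
  obtain ⟨n, hn⟩ := hsq
  have hpZ : Prime ((p:ℕ) : ℤ) := Int.prime_iff_natAbs_prime.mpr (by simpa using hpP)
  have hpn : ((p:ℕ) : ℤ) ∣ (n : ℤ) := hpZ.dvd_of_dvd_pow ⟨x + 1, hn.symm⟩
  obtain ⟨m, hm⟩ := hpn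
  have hpne : ((p:ℕ):ℤ) ≠ 0 := by positivity
  have hp9Z : (9:ℤ) ≤ (p:ℤ) := by exact_mod_cast hp9
  have hx1 : x + 1 = (p:ℤ) * m ^ 2 := by
    apply mul_left_cancel₀ hpne
    rw [hn, hm]; ring
  have hmnn : 0 ≤ m := by
    nlinarith [Int.natCast_nonneg n, hm]
  have hmpos : 0 < m := by
    rcases hmnn.lt_or_eq with h' | h'
    · exact h'
    · exfalso; rw [← h'] at hx1; simp at hx1; omega
  have hx3 : 3 ≤ x := by nlinarith
  obtain ⟨t, ht2⟩ : ∃ t, x - 1 = 2 * t := ⟨(x-1)/2, by omega⟩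
  have htpos : 0 < t := by omega
  have key : m ^ 2 * t = (q:ℤ) * y ^ 2 := by
    apply mul_left_cancel₀ (show (2*(p:ℤ)) ≠ 0 by positivity)
    have hfac : (x + 1) * (x - 1) = 2 * (p:ℤ) * q * y^2 := by linear_combination hnorm1
    rw [hx1, ht2] at hfac
    linear_combination hfac
  -- to naturals
  have keyN : m.natAbs ^ 2 * t.natAbs = q * y.natAbs ^ 2 := by
    have := congrArg Int.natAbs key
    simpa [Int.natAbs_mul, Int.natAbs_pow] using this
  have hqt : (q:ℤ) ∣ t := by
    have hd := aux_q_dvd q m.natAbs t.natAbs y.natAbs hqP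
      (by omega) (by omega) keyN
    rw [← Int.natAbs_dvd_natAbs]
    simpa using hd
  obtain ⟨s, hs⟩ := hqt
  have hqne : ((q:ℕ):ℤ) ≠ 0 := by positivity
  have key2 : m ^ 2 * s = y ^ 2 := by
    apply mul_left_cancel₀ hqne
    rw [hs] at key
    linear_combination key
  have hmy : m ∣ y := (Int.pow_dvd_pow_iff two_ne_zero).mp ⟨s, key2.symm⟩
  obtain ⟨y₂, hy₂⟩ := hmy
  have hs2 : s = y₂ ^ 2 := by
    apply mul_left_cancel₀ (show (m:ℤ)^2 ≠ 0 by positivity)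
    rw [key2, hy₂]; ring
  have hx2 : x - 1 = 2 * (q:ℤ) * y₂ ^ 2 := by
    rw [ht2, hs, hs2]; ring
  refine ⟨m, y₂, hy₂, ?_, by linear_combination hx1 - hx2⟩
  -- real identity
  have e1 : Real.sqrt (2*(p:ℝ)*q) = Real.sqrt p * Real.sqrt (2*q) := by
    rw [show (2*(p:ℝ)*q) = (p:ℝ) * (2*q) by ring,
      Real.sqrt_mul (by positivity : (0:ℝ) ≤ (p:ℝ))]
  have e2 : Real.sqrt (p:ℝ) ^ 2 = p := Real.sq_sqrt (by positivity)
  have e3 : Real.sqrt (2*(q:ℝ)) ^ 2 = 2*q := Real.sq_sqrt (by positivity)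
  have c1 : ((x:ℝ) + 1) = (p:ℝ) * (m:ℝ) ^ 2 := by exact_mod_cast hx1
  have c2 : ((x:ℝ) - 1) = 2 * (q:ℝ) * (y₂:ℝ) ^ 2 := by exact_mod_cast hx2
  have c3 : (y:ℝ) = (m:ℝ) * (y₂:ℝ) := by exact_mod_cast hy₂
  push_cast
  rw [e1]
  linear_combination (-(m:ℝ)^2) * e2 - (y₂:ℝ)^2 * e3 + c1 + c2 +
    2 * Real.sqrt (p:ℝ) * Real.sqrt (2*(q:ℝ)) * c3
end
end

section
/- Let p ≡ 1 (mod 8) be a prime and suppose the fundamental unit ε_{2p} = β + α√(2p) of Q(√(2p)) has norm 1. Then there exist integers α₁, α₂ with α = α₁α₂ such that √ε_{2p} = (α₁ + α₂√(2p))/√2, i.e. 2ε_{2p} = (α₁ + α₂√(2p))², and (α₁² − 2p·α₂²)/2 = ±1. -/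
noncomputable section

private lemma both_squares {a b c : ℤ} (h : IsCoprime a b) (hab : a * b = c ^ 2)
    (ha : 0 < a) (hb : 0 < b) : ∃ s t : ℤ, a = s ^ 2 ∧ b = t ^ 2 := by
  obtain ⟨s, hs⟩ := Int.sq_of_isCoprime h hab
  obtain ⟨t, ht⟩ := Int.sq_of_isCoprime h.symm (by rw [mul_comm]; exact hab)
  refine ⟨s, t, ?_, ?_⟩
  · rcases hs with hs | hs
    · exact hs
    · nlinarith [sq_nonneg s]
  · rcases ht with ht | ht
    · exact ht
    · nlinarith [sq_nonneg t]

private lemma extract_sq (γ : ℤ) {j k m n : ℤ} (hj : 0 < j) (hk : 0 < k)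
    (hcop : IsCoprime m n) (hm : 0 < m) (hn : 0 < n)
    (hjd : j ∣ m) (hkd : k ∣ n) (heq : m * n = j * k * γ ^ 2) :
    ∃ s t : ℤ, m = j * s ^ 2 ∧ n = k * t ^ 2 := by
  obtain ⟨m', rfl⟩ := hjd
  obtain ⟨n', rfl⟩ := hkd
  have hjk : j * k ≠ 0 := by positivity
  have h1 : m' * n' = γ ^ 2 := mul_left_cancel₀ hjk (by linear_combination heq)
  have hm' : 0 < m' := by by_contra hc; push_neg at hc; nlinarith
  have hn' : 0 < n' := by by_contra hc; push_neg at hc; nlinarith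
  have hcop' : IsCoprime m' n' :=
    (hcop.of_isCoprime_of_dvd_left (dvd_mul_left m' j)).of_isCoprime_of_dvd_right
      (dvd_mul_left n' k)
  obtain ⟨s, t, hs, ht⟩ := both_squares hcop' h1 hm' hn'
  exact ⟨s, t, by rw [hs], by rw [ht]⟩

/-- Let `p ≡ 1 (mod 8)` be prime and suppose the fundamental unit
`ε_{2p} = β + α√(2p)` of `ℚ(√(2p))` has norm `1`. Then there are integers `α₁, α₂`
with `α = α₁α₂`, `2ε_{2p} = (α₁ + α₂√(2p))²` and `(α₁² − 2p·α₂²)/2 = ±1`. -/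
theorem sqrt_eps_2p (p : ℕ) [Fact p.Prime] (hp : p % 8 = 1)
    (β α : ℤ) (h : IsFundUnit (2 * p) (β : ℚ) (α : ℚ))
    (hnorm : β ^ 2 - 2 * p * α ^ 2 = 1) :
    ∃ α₁ α₂ : ℤ, α = α₁ * α₂ ∧
      2 * ((β : ℝ) + (α : ℝ) * Real.sqrt (2 * p)) =
        ((α₁ : ℝ) + (α₂ : ℝ) * Real.sqrt (2 * p)) ^ 2 ∧
      (α₁ ^ 2 - 2 * p * α₂ ^ 2 = 2 ∨ α₁ ^ 2 - 2 * p * α₂ ^ 2 = -2) := by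
  obtain ⟨-, -, hgt, hmin⟩ := h
  have hp2 : (2:ℤ) ≤ (p:ℤ) := by exact_mod_cast (Fact.out (p := p.Prime)).two_le
  have hpo : (p:ℤ) % 2 = 1 := by omega
  push_cast at hgt hmin
  set S : ℝ := Real.sqrt (2 * (p:ℝ)) with hS
  have hS0 : 0 ≤ S := Real.sqrt_nonneg _
  have hs2 : S ^ 2 = 2 * (p:ℝ) := Real.sq_sqrt (by positivity)
  have hnR : (β:ℝ)^2 - 2*(p:ℝ)*(α:ℝ)^2 = 1 := by exact_mod_cast hnorm
  have hEF : ((β:ℝ) + α*S) * ((β:ℝ) - α*S) = 1 := by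
    linear_combination hnR - (α:ℝ)^2 * hs2
  have hFpos : (0:ℝ) < (β:ℝ) - α*S := by nlinarith
  have hβ1 : 1 ≤ β := by
    have h2b : (0:ℝ) < (β:ℝ) := by linarith
    have : (0:ℤ) < β := by exact_mod_cast h2b
    omega
  have hb2 : β % 2 = 1 := by
    rcases Int.even_or_odd β with ⟨k, rfl⟩ | hodd
    · exfalso
      have h2 : (2:ℤ) ∣ 1 := ⟨2*k^2 - (p:ℤ)*α^2, by linear_combination -hnorm⟩
      norm_num at h2
    · exact Int.odd_iff.mp hodd
  have hβ3 : 3 ≤ β := by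
    rcases eq_or_lt_of_le hβ1 with h1 | h2
    · exfalso
      have h1' : (2*(p:ℤ))*α^2 = 0 := by linear_combination -hnorm - (1+β)*h1
      have hα0 : α = 0 := by
        rcases mul_eq_zero.mp h1' with hc | hc
        · omega
        · exact sq_eq_zero_iff.mp hc
      rw [← h1, hα0] at hgt
      norm_num at hgt
    · omega
  obtain ⟨m, rfl⟩ : Odd β := Int.odd_iff.mpr hb2
  have hm1 : 1 ≤ m := by omega
  obtain ⟨q, hq⟩ : Odd (p:ℤ) := Int.odd_iff.mpr hpo
  have hαe : Even α := by
    rcases Int.even_or_odd α with he | hodd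
    · exact he
    · exfalso
      have key2 : (p:ℤ)*α^2 = 2*(m^2+m) :=
        mul_left_cancel₀ two_ne_zero (by linear_combination -hnorm)
      have hEv : Even ((p:ℤ)*α^2) := ⟨m^2+m, by linear_combination key2⟩
      have hOd : Odd ((p:ℤ)*α^2) := (Int.odd_iff.mpr hpo).mul (hodd.pow)
      exact (Int.not_odd_iff_even.mpr hEv) hOd
  obtain ⟨γ, rfl⟩ := hαe
  have key : m * (m+1) = 2 * (p:ℤ) * γ^2 :=
    mul_left_cancel₀ (by norm_num : (4:ℤ) ≠ 0) (by linear_combination hnorm)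
  have hcop : IsCoprime m (m+1) := ⟨-1, 1, by ring⟩
  have hpZ : Prime (p:ℤ) := Nat.prime_iff_prime_int.1 (Fact.out (p := p.Prime))
  have hcop2p : IsCoprime (2:ℤ) (p:ℤ) := ⟨-q, 1, by rw [hq]; ring⟩
  have h2d : (2:ℤ) ∣ m ∨ (2:ℤ) ∣ (m+1) := by omega
  have hpd : (p:ℤ) ∣ m ∨ (p:ℤ) ∣ (m+1) :=
    (hpZ.dvd_mul).mp ⟨2*γ^2, by rw [key]; ring⟩
  push_cast at hgt hmin
  have hppos : (0:ℤ) < 2*(p:ℤ) := by omega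
  have contra : ∀ x y : ℤ, 0 ≤ (x:ℝ) + (y:ℝ)*S →
      x^2 + 2*(p:ℤ)*y^2 = 2*m+1 → 2*(x*y) = γ + γ →
      (x^2 - 2*(p:ℤ)*y^2 = 1 ∨ x^2 - 2*(p:ℤ)*y^2 = -1) → False := by
    intro x y hpos h1 h2 h3
    have c1 : (x:ℝ)^2 + 2*(p:ℝ)*(y:ℝ)^2 = 2*(m:ℝ)+1 := by exact_mod_cast h1
    have c2 : 2*((x:ℝ)*(y:ℝ)) = (γ:ℝ)+(γ:ℝ) := by exact_mod_cast h2
    have husq : ((x:ℝ) + (y:ℝ)*S)^2 = 2*(m:ℝ)+1 + ((γ:ℝ)+(γ:ℝ))*S := by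
      linear_combination c1 + S*c2 + (y:ℝ)^2*hs2
    have hu1 : 1 < (x:ℝ) + (y:ℝ)*S := by
      by_contra hc
      push_neg at hc
      nlinarith [hgt, husq, hpos]
    have hle := hmin (x:ℚ) (y:ℚ) (Or.inl ⟨x, y, rfl, rfl⟩)
      (by rcases h3 with h3 | h3
          · left; exact_mod_cast h3
          · right; exact_mod_cast h3)
      (by push_cast; exact hu1)
    push_cast at hle
    nlinarith [hle, husq, hu1, hgt]
  have hcontra : ∀ x y : ℤ,
      x^2 + 2*(p:ℤ)*y^2 = 2*m+1 → 2*(x*y) = γ + γ →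
      (x^2 - 2*(p:ℤ)*y^2 = 1 ∨ x^2 - 2*(p:ℤ)*y^2 = -1) → False := by
    intro x y h1 h2 h3
    rcases le_or_gt 0 ((x:ℝ) + (y:ℝ)*S) with hc | hc
    · exact contra x y hc h1 h2 h3
    · refine contra (-x) (-y) (by push_cast; linarith) (by linear_combination h1)
        (by linear_combination h2) ?_
      rcases h3 with h3 | h3
      · exact Or.inl (by linear_combination h3)
      · exact Or.inr (by linear_combination h3)
  rcases h2d with h2m | h2m <;> rcases hpd with hpm | hpm
  · -- 2 ∣ m, p ∣ m : contradiction
    exfalso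
    have h2pd : (2*(p:ℤ)) ∣ m := hcop2p.mul_dvd h2m hpm
    obtain ⟨s, t, hms, hmt⟩ := extract_sq γ hppos one_pos hcop (by omega) (by omega)
      h2pd (one_dvd _) (by linear_combination key)
    rw [one_mul] at hmt
    have h4 : 2*(p:ℤ)*γ^2 = 2*(p:ℤ)*(s*t)^2 := by
      linear_combination -key + (m+1)*hms + 2*(p:ℤ)*s^2*hmt
    have h5 : (γ - s*t)*(γ + s*t) = 0 := by
      linear_combination mul_left_cancel₀ (by omega : (2*(p:ℤ)) ≠ 0) h4
    rcases mul_eq_zero.mp h5 with hγe | hγe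
    · exact hcontra t s (by linear_combination -hms - hmt) (by linear_combination -2*hγe)
        (Or.inl (by linear_combination hms - hmt))
    · exact hcontra t (-s) (by linear_combination -hms - hmt) (by linear_combination -2*hγe)
        (Or.inl (by linear_combination hms - hmt))
  · -- 2 ∣ m, p ∣ m+1 : α₁ = ±2s, α₂ = t
    obtain ⟨s, t, hms, hmt⟩ := extract_sq γ two_pos (by omega : (0:ℤ) < (p:ℤ)) hcop
      (by omega) (by omega) h2m hpm (by linear_combination key)
    have h4 : 2*(p:ℤ)*γ^2 = 2*(p:ℤ)*(s*t)^2 := by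
      linear_combination -key + (m+1)*hms + 2*s^2*hmt
    have h5 : (γ - s*t)*(γ + s*t) = 0 := by
      linear_combination mul_left_cancel₀ (by omega : (2*(p:ℤ)) ≠ 0) h4
    have cm : (m:ℝ) = 2*(s:ℝ)^2 := by exact_mod_cast hms
    have cmt : (m:ℝ)+1 = (p:ℝ)*(t:ℝ)^2 := by exact_mod_cast hmt
    rcases mul_eq_zero.mp h5 with hγe | hγe
    · have cγ : (γ:ℝ) = (s:ℝ)*(t:ℝ) := by exact_mod_cast (by linarith [hγe] : γ = s*t)
      refine ⟨2*s, t, by linear_combination 2*hγe, ?_, Or.inr (by linear_combination -2*hms + 2*hmt)⟩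
      push_cast
      linear_combination 2*cm + 2*cmt + 4*S*cγ - (t:ℝ)^2*hs2
    · have cγ : (γ:ℝ) = -((s:ℝ)*(t:ℝ)) := by exact_mod_cast (by linarith [hγe] : γ = -(s*t))
      refine ⟨-(2*s), t, by linear_combination 2*hγe, ?_, Or.inr (by linear_combination -2*hms + 2*hmt)⟩
      push_cast
      linear_combination 2*cm + 2*cmt + 4*S*cγ - (t:ℝ)^2*hs2
  · -- 2 ∣ m+1, p ∣ m : α₁ = ±2t, α₂ = s
    obtain ⟨s, t, hms, hmt⟩ := extract_sq γ (by omega : (0:ℤ) < (p:ℤ)) two_pos hcop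
      (by omega) (by omega) hpm h2m (by linear_combination key)
    have h4 : 2*(p:ℤ)*γ^2 = 2*(p:ℤ)*(s*t)^2 := by
      linear_combination -key + (m+1)*hms + (p:ℤ)*s^2*hmt
    have h5 : (γ - s*t)*(γ + s*t) = 0 := by
      linear_combination mul_left_cancel₀ (by omega : (2*(p:ℤ)) ≠ 0) h4
    have cm : (m:ℝ) = (p:ℝ)*(s:ℝ)^2 := by exact_mod_cast hms
    have cmt : (m:ℝ)+1 = 2*(t:ℝ)^2 := by exact_mod_cast hmt
    rcases mul_eq_zero.mp h5 with hγe | hγe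
    · have cγ : (γ:ℝ) = (s:ℝ)*(t:ℝ) := by exact_mod_cast (by linarith [hγe] : γ = s*t)
      refine ⟨2*t, s, by linear_combination 2*hγe, ?_, Or.inl (by linear_combination 2*hms - 2*hmt)⟩
      push_cast
      linear_combination 2*cm + 2*cmt + 4*S*cγ - (s:ℝ)^2*hs2
    · have cγ : (γ:ℝ) = -((s:ℝ)*(t:ℝ)) := by exact_mod_cast (by linarith [hγe] : γ = -(s*t))
      refine ⟨-(2*t), s, by linear_combination 2*hγe, ?_, Or.inl (by linear_combination 2*hms - 2*hmt)⟩
      push_cast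
      linear_combination 2*cm + 2*cmt + 4*S*cγ - (s:ℝ)^2*hs2
  · -- 2 ∣ m+1, p ∣ m+1 : contradiction
    exfalso
    have h2pd : (2*(p:ℤ)) ∣ (m+1) := hcop2p.mul_dvd h2m hpm
    obtain ⟨s, t, hms, hmt⟩ := extract_sq γ one_pos hppos hcop (by omega) (by omega)
      (one_dvd _) h2pd (by linear_combination key)
    rw [one_mul] at hms
    have h4 : 2*(p:ℤ)*γ^2 = 2*(p:ℤ)*(s*t)^2 := by
      linear_combination -key + (m+1)*hms + s^2*hmt
    have h5 : (γ - s*t)*(γ + s*t) = 0 := by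
      linear_combination mul_left_cancel₀ (by omega : (2*(p:ℤ)) ≠ 0) h4
    rcases mul_eq_zero.mp h5 with hγe | hγe
    · exact hcontra s t (by linear_combination -hms - hmt) (by linear_combination -2*hγe)
        (Or.inr (by linear_combination -hms + hmt))
    · exact hcontra s (-t) (by linear_combination -hms - hmt) (by linear_combination -2*hγe)
        (Or.inr (by linear_combination -hms + hmt))
end
end
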